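/- arXiv:1711.01652 — 6 statements merged into one kernel-verified Lean document; each statement's English description precedes it below -/
import Mathlib

section
/- Let ρ ∈ C^1([0,1]) be a probability density and X ∈ C^2([0,1],[0,1]) nondecreasing with X(0)=0, X(1)=1, and set x^i = X((i−1/2)/N). Then N^r F_{N,r}(x^1,...,x^N) → C_r ∫_0^1 ρ(X(θ)) |∂_θ X(θ)|^{r+1} dθ as N → ∞, where C_r = 1/(2^r (r+1)) and F_{N,r}(x^1,...,x^N) = ∫_0^1 min_i |x^i − y|^r ρ(y) dy. -/
open MeasureTheory Filter

lemma aux_rpow_lip {r M u v : ℝ} (hr : 1 ≤ r) (hu : 0 ≤ u) (huv : u ≤ v) (hv : v ≤ M) :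
    v ^ r - u ^ r ≤ r * M ^ (r - 1) * (v - u) := by
  have hM : 0 ≤ M := le_trans (hu.trans huv) hv
  have key : ‖v ^ r - u ^ r‖ ≤ r * M ^ (r - 1) * ‖v - u‖ := by
    apply Convex.norm_image_sub_le_of_norm_hasDerivWithin_le
      (f := fun t : ℝ => t ^ r) (f' := fun t : ℝ => r * t ^ (r - 1)) (s := Set.Icc (0:ℝ) M)
    · intro x hx
      exact (Real.hasDerivAt_rpow_const (Or.inr hr)).hasDerivWithinAt
    · intro x hx
      have h0 : (0:ℝ) ≤ x := hx.1
      have h1 : x ^ (r - 1) ≤ M ^ (r - 1) :=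
        Real.rpow_le_rpow h0 hx.2 (by linarith)
      have h2 : 0 ≤ x ^ (r - 1) := Real.rpow_nonneg h0 _
      rw [Real.norm_eq_abs, abs_of_nonneg (by positivity)]
      have hr0 : (0:ℝ) ≤ r := by linarith
      nlinarith
    · exact convex_Icc 0 M
    · exact ⟨hu, huv.trans hv⟩
    · exact ⟨hu.trans huv, hv⟩
  have h1 : v ^ r - u ^ r ≤ ‖v ^ r - u ^ r‖ := le_abs_self _
  have h2 : ‖v - u‖ = v - u := by rw [Real.norm_eq_abs, abs_of_nonneg (by linarith)]
  rw [h2] at key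
  linarith

lemma aux_abs_rpow_cont {r : ℝ} (hr : 0 < r) : Continuous fun x : ℝ => |x| ^ r := by
  rw [continuous_iff_continuousAt]
  intro x
  exact (Real.continuousAt_rpow_const _ _ (Or.inr hr.le)).comp continuous_abs.continuousAt

lemma aux_cell_integral {r : ℝ} (hr : 1 ≤ r) {L c : ℝ} (hL : 0 ≤ L) :
    ∫ θ in (c - L)..(c + L), |c - θ| ^ r = 2 * L ^ (r + 1) / (r + 1) := by
  have hcont : Continuous fun x : ℝ => |x| ^ r := aux_abs_rpow_cont (by linarith)
  have h1 : (∫ θ in (c - L)..(c + L), |c - θ| ^ r) = ∫ x in (-L)..L, |x| ^ r := by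
    have := intervalIntegral.integral_comp_sub_left (a := c - L) (b := c + L)
      (fun x : ℝ => |x| ^ r) c
    simpa using this
  have h2 : (∫ x in (0:ℝ)..L, |x| ^ r) = L ^ (r + 1) / (r + 1) := by
    have heq : (∫ x in (0:ℝ)..L, |x| ^ r) = ∫ x in (0:ℝ)..L, x ^ r := by
      apply intervalIntegral.integral_congr
      intro x hx
      rw [Set.uIcc_of_le hL] at hx
      simp [abs_of_nonneg hx.1]
    rw [heq, integral_rpow (Or.inl (by linarith))]
    rw [Real.zero_rpow (by positivity)]
    ring
  have h3 : (∫ x in (-L)..(0:ℝ), |x| ^ r) = L ^ (r + 1) / (r + 1) := by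
    have := intervalIntegral.integral_comp_neg (a := (0:ℝ)) (b := L) (fun x : ℝ => |x| ^ r)
    simp only [neg_zero] at this
    rw [← this]
    have heq : (∫ x in (0:ℝ)..L, |(-x)| ^ r) = ∫ x in (0:ℝ)..L, |x| ^ r := by
      apply intervalIntegral.integral_congr; intro x _; simp [abs_neg]
    rw [heq, h2]
  have h4 : (∫ x in (-L)..L, |x| ^ r) =
      (∫ x in (-L)..(0:ℝ), |x| ^ r) + ∫ x in (0:ℝ)..L, |x| ^ r := by
    rw [intervalIntegral.integral_add_adjacent_intervals] <;>
      exact hcont.intervalIntegrable _ _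
  rw [h1, h4, h2, h3]; ring
lemma aux_derivWithin_nonneg {X : ℝ → ℝ} (hXmono : MonotoneOn X (Set.Icc 0 1))
    (hXd : DifferentiableOn ℝ X (Set.Icc 0 1)) :
    ∀ t ∈ Set.Icc (0:ℝ) 1, 0 ≤ derivWithin X (Set.Icc 0 1) t := by
  intro t ht
  have hd : HasDerivWithinAt X (derivWithin X (Set.Icc 0 1) t) (Set.Icc 0 1) t :=
    (hXd t ht).hasDerivWithinAt
  rcases lt_or_eq_of_le ht.2 with ht1 | ht1
  · -- t < 1 : use right slopes
    have hd' : HasDerivWithinAt X (derivWithin X (Set.Icc 0 1) t) (Set.Ioc t 1) t :=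
      hd.mono (fun u hu => ⟨ht.1.trans hu.1.le, hu.2⟩)
    have hslope := (hasDerivWithinAt_iff_tendsto_slope' (by simp : t ∉ Set.Ioc t 1)).mp hd'
    rw [nhdsWithin_Ioc_eq_nhdsGT ht1] at hslope
    refine ge_of_tendsto hslope ?_
    filter_upwards [Ioc_mem_nhdsGT_of_mem (Set.mem_Ico.mpr ⟨le_refl t, ht1⟩)] with u hu
    have hXu : X t ≤ X u := hXmono ht ⟨ht.1.trans hu.1.le, hu.2⟩ hu.1.le
    have : 0 < u - t := by linarith [hu.1]
    rw [slope_def_field]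
    exact div_nonneg (by linarith) this.le
  · -- t = 1 : use left slopes
    subst ht1
    have hd' : HasDerivWithinAt X (derivWithin X (Set.Icc 0 1) 1) (Set.Ico 0 1) 1 :=
      hd.mono (fun u hu => ⟨hu.1, hu.2.le⟩)
    have hslope := (hasDerivWithinAt_iff_tendsto_slope' (by simp : (1:ℝ) ∉ Set.Ico 0 1)).mp hd'
    rw [nhdsWithin_Ico_eq_nhdsLT (by norm_num : (0:ℝ) < 1)] at hslope
    refine ge_of_tendsto hslope ?_
    filter_upwards [Ico_mem_nhdsLT_of_mem (show (1:ℝ) ∈ Set.Ioc (0:ℝ) 1 from ⟨by norm_num, le_rfl⟩)] with u hu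
    have hXu : X u ≤ X 1 := hXmono ⟨hu.1, hu.2.le⟩ (by norm_num) hu.2.le
    have : u - 1 < 0 := by linarith [hu.2]
    rw [slope_def_field]
    exact div_nonneg_iff.mpr (Or.inr ⟨by linarith, this.le⟩)
lemma aux_hasDerivAt {X : ℝ → ℝ} (hXC2 : ContDiffOn ℝ 2 X (Set.Icc 0 1)) :
    ∀ x ∈ Set.Ioo (0:ℝ) 1, HasDerivAt X (derivWithin X (Set.Icc 0 1) x) x := by
  intro x hx
  have hmem : Set.Icc (0:ℝ) 1 ∈ nhds x := Icc_mem_nhds hx.1 hx.2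
  have hca : ContDiffAt ℝ 2 X x := hXC2.contDiffAt hmem
  have hda : DifferentiableAt ℝ X x := hca.differentiableAt (by norm_num)
  rw [derivWithin_of_mem_nhds hmem]
  exact hda.hasDerivAt

lemma aux_taylor {X : ℝ → ℝ} (hXC2 : ContDiffOn ℝ 2 X (Set.Icc 0 1)) {K : ℝ}
    (hK : ∀ t ∈ Set.Icc (0:ℝ) 1, |derivWithin (derivWithin X (Set.Icc 0 1)) (Set.Icc 0 1) t| ≤ K)
    {θ u : ℝ} (hθ : θ ∈ Set.Icc (0:ℝ) 1) (hu : u ∈ Set.Icc (0:ℝ) 1) :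
    |X u - X θ - derivWithin X (Set.Icc 0 1) θ * (u - θ)| ≤ K * (u - θ)^2 := by
  set W := derivWithin X (Set.Icc 0 1) with hW
  have hWC1 : ContDiffOn ℝ 1 W (Set.Icc 0 1) :=
    hXC2.derivWithin (uniqueDiffOn_Icc (by norm_num)) (by norm_num)
  have hWd : DifferentiableOn ℝ W (Set.Icc 0 1) := hWC1.differentiableOn (by norm_num)
  have lip : ∀ a ∈ Set.Icc (0:ℝ) 1, ∀ b ∈ Set.Icc (0:ℝ) 1, |W b - W a| ≤ K * |b - a| := by
    intro a ha b hb
    have := Convex.norm_image_sub_le_of_norm_derivWithin_le hWd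
      (fun t ht => by rw [Real.norm_eq_abs]; exact hK t ht) (convex_Icc 0 1) ha hb
    simpa [Real.norm_eq_abs] using this
  have hXcont : ContinuousOn X (Set.Icc 0 1) := hXC2.continuousOn
  have hK0 : 0 ≤ K := le_trans (abs_nonneg _) (hK 0 (by norm_num))
  rcases lt_trichotomy θ u with h | h | h
  · obtain ⟨ξ, hξ, hslope⟩ := exists_hasDerivAt_eq_slope X W h
      (hXcont.mono (Set.Icc_subset_Icc hθ.1 hu.2))
      (fun x hx => aux_hasDerivAt hXC2 x ⟨lt_of_le_of_lt hθ.1 hx.1, lt_of_lt_of_le hx.2 hu.2⟩)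
    have hXeq : X u - X θ = W ξ * (u - θ) := by
      rw [eq_div_iff (by linarith : u - θ ≠ 0)] at hslope
      linarith [hslope]
    have hξI : ξ ∈ Set.Icc (0:ℝ) 1 := ⟨hθ.1.trans hξ.1.le, hξ.2.le.trans hu.2⟩
    have hl := lip θ hθ ξ hξI
    have : X u - X θ - W θ * (u - θ) = (W ξ - W θ) * (u - θ) := by rw [hXeq]; ring
    rw [this, abs_mul]
    have h1 : |ξ - θ| ≤ |u - θ| := by
      rw [abs_of_pos (by linarith [hξ.1] : (0:ℝ) < ξ - θ), abs_of_pos (by linarith : (0:ℝ) < u - θ)]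
      linarith [hξ.2]
    have h2 : |u - θ| ^ 2 = (u - θ)^2 := sq_abs _
    calc |W ξ - W θ| * |u - θ| ≤ (K * |ξ - θ|) * |u - θ| :=
          mul_le_mul_of_nonneg_right hl (abs_nonneg _)
      _ ≤ (K * |u - θ|) * |u - θ| :=
          mul_le_mul_of_nonneg_right (mul_le_mul_of_nonneg_left h1 hK0) (abs_nonneg _)
      _ = K * (u - θ)^2 := by rw [← h2]; ring
  · subst h; simp
  · obtain ⟨ξ, hξ, hslope⟩ := exists_hasDerivAt_eq_slope X W h
      (hXcont.mono (Set.Icc_subset_Icc hu.1 hθ.2))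
      (fun x hx => aux_hasDerivAt hXC2 x ⟨lt_of_le_of_lt hu.1 hx.1, lt_of_lt_of_le hx.2 hθ.2⟩)
    have hXeq : X u - X θ = W ξ * (u - θ) := by
      rw [eq_div_iff (by linarith : θ - u ≠ 0)] at hslope
      linear_combination hslope
    have hξI : ξ ∈ Set.Icc (0:ℝ) 1 := ⟨hu.1.trans hξ.1.le, hξ.2.le.trans hθ.2⟩
    have hl := lip θ hθ ξ hξI
    have : X u - X θ - W θ * (u - θ) = (W ξ - W θ) * (u - θ) := by rw [hXeq]; ring
    rw [this, abs_mul]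
    have h1 : |ξ - θ| ≤ |u - θ| := by
      rw [abs_of_neg (by linarith [hξ.2] : ξ - θ < 0), abs_of_neg (by linarith : u - θ < 0)]
      linarith [hξ.1]
    have h2 : |u - θ| ^ 2 = (u - θ)^2 := sq_abs _
    calc |W ξ - W θ| * |u - θ| ≤ (K * |ξ - θ|) * |u - θ| :=
          mul_le_mul_of_nonneg_right hl (abs_nonneg _)
      _ ≤ (K * |u - θ|) * |u - θ| :=
          mul_le_mul_of_nonneg_right (mul_le_mul_of_nonneg_left h1 hK0) (abs_nonneg _)
      _ = K * (u - θ)^2 := by rw [← h2]; ring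
lemma aux_inf_cont {N : ℕ} (hN : 0 < N) (g : Fin N → ℝ) {r : ℝ} (hr : 0 < r) :
    Continuous fun y : ℝ => ⨅ i : Fin N, |g i - y| ^ r := by
  haveI : Nonempty (Fin N) := Fin.pos_iff_nonempty.mp hN
  have heq : (fun y : ℝ => ⨅ i : Fin N, |g i - y| ^ r) =
      fun y => Finset.univ.inf' Finset.univ_nonempty (fun i : Fin N => |g i - y| ^ r) := by
    funext y
    rw [Finset.inf'_univ_eq_ciInf]
  rw [heq, continuous_iff_continuousAt]
  intro y
  apply ContinuousAt.finset_inf'_apply Finset.univ_nonempty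
  intro i _
  exact ((aux_abs_rpow_cont hr).comp (continuous_const.sub continuous_id)).continuousAt
set_option maxHeartbeats 4000000 in
lemma aux_pointwise {r : ℝ} (hr : 1 ≤ r) {X ρ W : ℝ → ℝ} {K M1 Bρ M L : ℝ}
    (hXmono : MonotoneOn X (Set.Icc 0 1))
    (hXmap : Set.MapsTo X (Set.Icc 0 1) (Set.Icc 0 1))
    (hρb : ∀ y ∈ Set.Icc (0:ℝ) 1, |ρ y| ≤ Bρ)
    (hW0 : ∀ t ∈ Set.Icc (0:ℝ) 1, 0 ≤ W t)
    (hWM : ∀ t ∈ Set.Icc (0:ℝ) 1, W t ≤ M1)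
    (hK0 : 0 ≤ K) (hM10 : 0 ≤ M1)
    (htay : ∀ θ ∈ Set.Icc (0:ℝ) 1, ∀ u ∈ Set.Icc (0:ℝ) 1,
      |X u - X θ - W θ * (u - θ)| ≤ K * (u - θ)^2)
    (hM : M = M1/2 + 9*K/4 + 1) (hL : L = r * M^(r-1) * (9*K/4))
    {N k : ℕ} (hk : k < N)
    {θ : ℝ} (hθ : θ ∈ Set.Icc ((k:ℝ)/N) (((k:ℝ)+1)/N)) :
    |(N:ℝ)^r * ((⨅ i : Fin N, |X (((i : ℝ) + 1/2) / N) - X θ| ^ r) * ρ (X θ)) * W θ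
      - ((N:ℝ) * |((k:ℝ)+1/2)/N - θ|)^r * (ρ (X θ) * |W θ| ^ (r+1))|
      ≤ (L / N) * (Bρ * M1) := by
  have hr0 : (0:ℝ) ≤ r := by linarith
  have hNpos : 0 < N := lt_of_le_of_lt (Nat.zero_le k) hk
  set n : ℝ := (N:ℝ) with hn_def
  have hn : (0:ℝ) < n := by rw [hn_def]; exact_mod_cast hNpos
  have hn1 : (1:ℝ) ≤ n := by rw [hn_def]; exact_mod_cast hNpos
  have hkN : (k:ℝ) + 1 ≤ n := by rw [hn_def]; exact_mod_cast hk
  have hx : ∀ i : Fin N, X (((i : ℝ) + 1/2) / n) = X ((((i:ℕ):ℝ) + 1/2) / n) := fun i => rfl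
  clear_value n
  set ck : ℝ := ((k:ℝ)+1/2)/n with hck_def
  clear_value ck
  have hθ01 : θ ∈ Set.Icc (0:ℝ) 1 := by
    constructor
    · exact le_trans (by positivity) hθ.1
    · refine le_trans hθ.2 ?_
      rw [div_le_one hn]; linarith
  have hXθ : X θ ∈ Set.Icc (0:ℝ) 1 := hXmap hθ01
  have hWθ0 : 0 ≤ W θ := hW0 θ hθ01
  have hWθM : W θ ≤ M1 := hWM θ hθ01
  have hρθ : |ρ (X θ)| ≤ Bρ := hρb _ hXθ
  have hBρ0 : 0 ≤ Bρ := le_trans (abs_nonneg _) hρθ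
  have hM0 : 0 < M := by rw [hM]; positivity
  have hL0 : 0 ≤ L := by rw [hL]; positivity
  have e1 : ck - (k:ℝ)/n = 1/(2*n) := by rw [hck_def]; field_simp; try ring
  have e2 : ((k:ℝ)+1)/n - ck = 1/(2*n) := by rw [hck_def]; field_simp; try ring
  have habs : |ck - θ| ≤ 1/(2*n) := by
    rw [abs_le]; constructor
    · linarith [hθ.2, e2]
    · linarith [hθ.1, e1]
  have habs0 : 0 ≤ |ck - θ| := abs_nonneg _
  set A : ℝ := n * (W θ * |ck - θ|) with hA_def
  have hA0 : 0 ≤ A := by rw [hA_def]; positivity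
  have hAM : A ≤ M1/2 := by
    have h1 : W θ * |ck - θ| ≤ M1 * (1/(2*n)) :=
      mul_le_mul hWθM habs habs0 hM10
    calc A ≤ n * (M1 * (1/(2*n))) := by
            rw [hA_def]; exact mul_le_mul_of_nonneg_left h1 hn.le
      _ = M1/2 := by field_simp; try ring
  clear_value A
  set γ : ℝ := W θ * |ck - θ| - 9*K/(4*n^2) with hγ_def
  clear_value γ
  have hckI : ck ∈ Set.Icc (0:ℝ) 1 := by
    constructor
    · rw [hck_def]; positivity
    · rw [hck_def, div_le_one hn]; linarith
  have htayck : |X ck - X θ - W θ * (ck - θ)| ≤ K/(4*n^2) := by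
    have h0 := htay θ hθ01 ck hckI
    have h2 : (ck - θ)^2 ≤ (1/(2*n))^2 := by
      rw [← sq_abs (ck - θ)]
      exact pow_le_pow_left₀ habs0 habs 2
    have hsq : K * (ck - θ)^2 ≤ K/(4*n^2) := by
      calc K * (ck-θ)^2 ≤ K * (1/(2*n))^2 := by nlinarith [h2, hK0, sq_nonneg (ck - θ)]
        _ = K/(4*n^2) := by
            rw [div_pow, one_pow, mul_one_div]
            congr 1
            ring
    linarith
  -- per-index lower bound
  have claim : ∀ i : Fin N, γ ≤ |X (((i : ℝ) + 1/2) / n) - X θ| := by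
    intro i
    rw [hx i]
    set j : ℕ := (i : ℕ) with hj_def
    have hjN : j < N := i.isLt
    have hjn : (j:ℝ) + 1 ≤ n := by rw [hn_def]; exact_mod_cast hjN
    set si : ℝ := ((j:ℝ) + 1/2)/n with hsi_def
    clear_value si
    have hsiI : si ∈ Set.Icc (0:ℝ) 1 := by
      constructor
      · rw [hsi_def]; positivity
      · rw [hsi_def, div_le_one hn]; linarith
    rcases lt_trichotomy j k with hjk | hjk | hjk
    · -- j < k
      have hk1 : 0 < k := lt_of_le_of_lt (Nat.zero_le j) hjk
      have hjk' : (j:ℝ) + 1 ≤ (k:ℝ) := by exact_mod_cast hjk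
      have hk1' : (1:ℝ) ≤ (k:ℝ) := by exact_mod_cast hk1
      set u : ℝ := ((k:ℝ) - 1/2)/n with hu_def
      clear_value u
      have huI : u ∈ Set.Icc (0:ℝ) 1 := by
        constructor
        · rw [hu_def]; apply div_nonneg (by linarith) hn.le
        · rw [hu_def, div_le_one hn]; linarith
      have hXsi : X si ≤ X u := by
        apply hXmono hsiI huI
        rw [hsi_def, hu_def, div_le_div_iff_of_pos_right hn]; linarith
      have hXuθ : X u ≤ X θ := by
        apply hXmono huI hθ01
        calc u ≤ (k:ℝ)/n := by rw [hu_def, div_le_div_iff_of_pos_right hn]; linarith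
          _ ≤ θ := hθ.1
      have htayu := htay θ hθ01 u huI
      have hd1 : 1/(2*n) ≤ θ - u := by
        have e : (k:ℝ)/n - u = 1/(2*n) := by rw [hu_def]; field_simp; try ring
        linarith [hθ.1]
      have hd2 : θ - u ≤ 3/(2*n) := by
        have e : ((k:ℝ)+1)/n - u = 3/(2*n) := by rw [hu_def]; field_simp; try ring
        linarith [hθ.2]
      have hsq : K * (u - θ)^2 ≤ 9*K/(4*n^2) := by
        have h2 : (u - θ)^2 ≤ (3/(2*n))^2 := by nlinarith
        calc K * (u-θ)^2 ≤ K * (3/(2*n))^2 := by nlinarith [h2, hK0, sq_nonneg (ck - θ), sq_nonneg (u - θ)]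
          _ = 9*K/(4*n^2) := by field_simp; try ring
      have hWd : W θ * |ck - θ| ≤ W θ * (θ - u) := by
        apply mul_le_mul_of_nonneg_left _ hWθ0
        linarith
      have hlow : W θ * (θ - u) - 9*K/(4*n^2) ≤ X θ - X u := by
        have h1 := (abs_le.mp htayu).2
        have hide : W θ * (θ - u) = -(W θ * (u - θ)) := by ring
        linarith [hsq]
      have habs2 : X θ - X si ≤ |X si - X θ| := by
        rw [abs_sub_comm]; exact le_abs_self _
      rw [hγ_def]; linarith
    · -- j = k
      have hsick : si = ck := by rw [hsi_def, hck_def, hjk]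
      rw [hsick]
      have h1 : |W θ * (ck - θ)| - |X ck - X θ| ≤ |X ck - X θ - W θ * (ck - θ)| := by
        have h := abs_sub_abs_le_abs_sub (W θ * (ck - θ)) (X ck - X θ)
        have h' : |W θ * (ck - θ) - (X ck - X θ)| = |X ck - X θ - W θ * (ck - θ)| :=
          abs_sub_comm _ _
        linarith
      have h2 : |W θ * (ck - θ)| = W θ * |ck - θ| := by
        rw [abs_mul, abs_of_nonneg hWθ0]
      have h9 : K/(4*n^2) ≤ 9*K/(4*n^2) := by
        have h4 : (0:ℝ) < 4*n^2 := by positivity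
        rw [div_le_div_iff_of_pos_right h4]; linarith
      rw [hγ_def]
      linarith [htayck]
    · -- j > k
      have hjk' : (k:ℝ) + 1 ≤ (j:ℝ) := by exact_mod_cast hjk
      set u : ℝ := ((k:ℝ) + 3/2)/n with hu_def
      clear_value u
      have huI : u ∈ Set.Icc (0:ℝ) 1 := by
        constructor
        · rw [hu_def]; positivity
        · rw [hu_def, div_le_one hn]; linarith
      have hXsi : X u ≤ X si := by
        apply hXmono huI hsiI
        rw [hu_def, hsi_def, div_le_div_iff_of_pos_right hn]; linarith
      have hXuθ : X θ ≤ X u := by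
        apply hXmono hθ01 huI
        calc θ ≤ ((k:ℝ)+1)/n := hθ.2
          _ ≤ u := by rw [hu_def, div_le_div_iff_of_pos_right hn]; linarith
      have htayu := htay θ hθ01 u huI
      have hd1 : 1/(2*n) ≤ u - θ := by
        have e : u - ((k:ℝ)+1)/n = 1/(2*n) := by rw [hu_def]; field_simp; try ring
        linarith [hθ.2]
      have hd2 : u - θ ≤ 3/(2*n) := by
        have e : u - (k:ℝ)/n = 3/(2*n) := by rw [hu_def]; field_simp; try ring
        linarith [hθ.1]
      have hsq : K * (u - θ)^2 ≤ 9*K/(4*n^2) := by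
        have h2 : (u - θ)^2 ≤ (3/(2*n))^2 := by nlinarith
        calc K * (u-θ)^2 ≤ K * (3/(2*n))^2 := by nlinarith [h2, hK0, sq_nonneg (ck - θ), sq_nonneg (u - θ)]
          _ = 9*K/(4*n^2) := by field_simp; try ring
      have hWd : W θ * |ck - θ| ≤ W θ * (u - θ) := by
        apply mul_le_mul_of_nonneg_left _ hWθ0
        linarith
      have hlow : W θ * (u - θ) - 9*K/(4*n^2) ≤ X u - X θ := by
        have h1 := (abs_le.mp htayu).1
        linarith [hsq]
      have habs2 : X si - X θ ≤ |X si - X θ| := le_abs_self _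
      rw [hγ_def]; linarith
  -- infimum bounds
  haveI : Nonempty (Fin N) := ⟨⟨k, hk⟩⟩
  set I : ℝ := ⨅ i : Fin N, |X (((i : ℝ) + 1/2) / n) - X θ| ^ r with hI_def
  have hbdd : BddBelow (Set.range fun i : Fin N => |X (((i : ℝ) + 1/2) / n) - X θ| ^ r) := by
    refine ⟨0, ?_⟩
    rintro v ⟨i, rfl⟩
    positivity
  set β : ℝ := max γ 0 with hβ_def
  have hβ0 : 0 ≤ β := le_max_right _ _
  have hIl : β ^ r ≤ I := by
    rw [hI_def]
    apply le_ciInf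
    intro i
    exact Real.rpow_le_rpow hβ0 (max_le (claim i) (abs_nonneg _)) hr0
  have hIu : I ≤ |X ck - X θ| ^ r := by
    rw [hI_def, hck_def]
    have h := ciInf_le hbdd (⟨k, hk⟩ : Fin N)
    simpa using h
  have hI0 : 0 ≤ I := le_trans (Real.rpow_nonneg hβ0 r) hIl
  have hup : |X ck - X θ| ≤ W θ * |ck - θ| + K/(4*n^2) := by
    have h1 : |X ck - X θ| - |W θ * (ck - θ)| ≤ |X ck - X θ - W θ * (ck-θ)| :=
      abs_sub_abs_le_abs_sub _ _
    have h2 : |W θ * (ck - θ)| = W θ * |ck - θ| := by rw [abs_mul, abs_of_nonneg hWθ0]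
    linarith [htayck]
  have hnIu : n^r * I ≤ (A + K/(4*n))^r := by
    have h1 : n^r * I ≤ n^r * (W θ * |ck-θ| + K/(4*n^2))^r := by
      apply mul_le_mul_of_nonneg_left _ (Real.rpow_nonneg hn.le r)
      exact le_trans hIu (Real.rpow_le_rpow (abs_nonneg _) hup hr0)
    have h2 : n^r * (W θ * |ck-θ| + K/(4*n^2))^r = (A + K/(4*n))^r := by
      rw [← Real.mul_rpow hn.le (by positivity)]
      congr 1
      rw [hA_def]; field_simp; try ring
    linarith [h1, h2.le, h2.ge]
  have hnIl : (max (A - 9*K/(4*n)) 0)^r ≤ n^r * I := by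
    have h1 : n^r * β^r ≤ n^r * I := mul_le_mul_of_nonneg_left hIl (Real.rpow_nonneg hn.le r)
    have h2 : n^r * β^r = (max (A - 9*K/(4*n)) 0)^r := by
      rw [← Real.mul_rpow hn.le hβ0]
      congr 1
      rw [hβ_def, hγ_def, mul_max_of_nonneg _ _ hn.le, mul_zero]
      congr 1
      rw [hA_def]; field_simp; try ring
    linarith
  have hAM' : A + K/(4*n) ≤ M := by
    have h : K/(4*n) ≤ K/4 := by
      have e : K/(4*n) = (K/4) * (1/n) := by ring
      have h1n : 1/n ≤ 1 := by rw [div_le_one hn]; exact hn1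
      have e2 : (K/4) * (1/n) ≤ (K/4) * 1 :=
        mul_le_mul_of_nonneg_left h1n (by positivity)
      rw [e]; linarith
    rw [hM]; linarith [hAM]
  have hMax0 : (0:ℝ) ≤ max (A - 9*K/(4*n)) 0 := le_max_right _ _
  have hMaxA : max (A - 9*K/(4*n)) 0 ≤ A := by
    apply max_le _ hA0
    have : 0 ≤ 9*K/(4*n) := by positivity
    linarith
  have hMrpos : 0 ≤ r * M^(r-1) := by positivity
  have hup2 : (A + K/(4*n))^r - A^r ≤ L/n := by
    have hlip := aux_rpow_lip hr hA0
      (by linarith [show (0:ℝ) ≤ K/(4*n) from by positivity] : A ≤ A + K/(4*n)) hAM'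
    have he : r * M^(r-1) * (9*K/(4*n)) = L/n := by rw [hL]; field_simp; try ring
    have hmono : r * M^(r-1) * (A + K/(4*n) - A) ≤ r * M^(r-1) * (9*K/(4*n)) := by
      apply mul_le_mul_of_nonneg_left _ hMrpos
      rw [show A + K/(4*n) - A = K/(4*n) from by ring,
        div_le_div_iff_of_pos_right (by positivity : (0:ℝ) < 4*n)]
      linarith
    linarith
  have hlow2 : A^r - (max (A - 9*K/(4*n)) 0)^r ≤ L/n := by
    have hlip := aux_rpow_lip hr hMax0 hMaxA (by rw [hM]; linarith : A ≤ M)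
    have hdiff : A - max (A - 9*K/(4*n)) 0 ≤ 9*K/(4*n) := by
      rcases le_or_gt (A - 9*K/(4*n)) 0 with h | h
      · rw [max_eq_right h]; linarith
      · rw [max_eq_left h.le]; linarith
    have he : r * M^(r-1) * (9*K/(4*n)) = L/n := by rw [hL]; field_simp; try ring
    have hmono : r * M^(r-1) * (A - max (A - 9*K/(4*n)) 0) ≤ r * M^(r-1) * (9*K/(4*n)) :=
      mul_le_mul_of_nonneg_left hdiff hMrpos
    linarith
  have hsand : |n^r * I - A^r| ≤ L/n :=
    abs_le.mpr ⟨by linarith [hnIl, hlow2], by linarith [hnIu, hup2]⟩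
  have hWpow : |W θ|^(r+1) = (W θ)^r * W θ := by
    rw [abs_of_nonneg hWθ0, Real.rpow_add' hWθ0 (by linarith), Real.rpow_one]
  have hArpow : A^r = (n * |ck - θ|)^r * (W θ)^r := by
    rw [← Real.mul_rpow (by positivity) hWθ0]
    congr 1
    rw [hA_def]; ring
  have hfact : n^r * (I * ρ (X θ)) * W θ - (n * |ck - θ|)^r * (ρ (X θ) * |W θ|^(r+1))
      = (n^r * I - A^r) * (ρ (X θ) * W θ) := by
    rw [hWpow, hArpow]; ring
  rw [hfact, abs_mul]
  have hbnd2 : |ρ (X θ) * W θ| ≤ Bρ * M1 := by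
    rw [abs_mul, abs_of_nonneg hWθ0]
    exact mul_le_mul hρθ hWθM hWθ0 hBρ0
  exact mul_le_mul hsand hbnd2 (abs_nonneg _) (div_nonneg hL0 hn.le)

set_option maxHeartbeats 4000000 in
lemma aux_cell_bound {r : ℝ} (hr : 1 ≤ r) {X ρ W : ℝ → ℝ} {K M1 Bρ M L : ℝ}
    (hXcont : ContinuousOn X (Set.Icc 0 1))
    (hWcont : ContinuousOn W (Set.Icc 0 1))
    (hρcont : ContinuousOn ρ (Set.Icc 0 1))
    (hXmono : MonotoneOn X (Set.Icc 0 1))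
    (hXmap : Set.MapsTo X (Set.Icc 0 1) (Set.Icc 0 1))
    (hρb : ∀ y ∈ Set.Icc (0:ℝ) 1, |ρ y| ≤ Bρ)
    (hW0 : ∀ t ∈ Set.Icc (0:ℝ) 1, 0 ≤ W t)
    (hWM : ∀ t ∈ Set.Icc (0:ℝ) 1, W t ≤ M1)
    (hK0 : 0 ≤ K) (hM10 : 0 ≤ M1)
    (htay : ∀ θ ∈ Set.Icc (0:ℝ) 1, ∀ u ∈ Set.Icc (0:ℝ) 1,
      |X u - X θ - W θ * (u - θ)| ≤ K * (u - θ)^2)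
    (hM : M = M1/2 + 9*K/4 + 1) (hL : L = r * M^(r-1) * (9*K/4))
    {ε' δ : ℝ} (hε' : 0 < ε') (hδpos : 0 < δ)
    (hUC : ∀ a ∈ Set.Icc (0:ℝ) 1, ∀ b ∈ Set.Icc (0:ℝ) 1, |a - b| < δ →
      |ρ (X a) * |W a|^(r+1) - ρ (X b) * |W b|^(r+1)| ≤ ε')
    {N k : ℕ} (hk : k < N) (hNδ : 1/(N:ℝ) < δ) :
    |(∫ θ in ((k:ℝ)/N)..(((k:ℝ)+1)/N),
        (N:ℝ)^r * ((⨅ i : Fin N, |X (((i : ℝ) + 1/2) / N) - X θ| ^ r) * ρ (X θ)) * W θ)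
      - (1/(2^r*(r+1))) * ∫ θ in ((k:ℝ)/N)..(((k:ℝ)+1)/N), ρ (X θ) * |W θ|^(r+1)|
      ≤ L*Bρ*M1/(N:ℝ)^2 + ε'/N := by
  have hr0 : (0:ℝ) ≤ r := by linarith
  have hrpos : (0:ℝ) < r := by linarith
  have hNpos : 0 < N := lt_of_le_of_lt (Nat.zero_le k) hk
  have hn : (0:ℝ) < (N:ℝ) := by exact_mod_cast hNpos
  have hkN : (k:ℝ) + 1 ≤ (N:ℝ) := by exact_mod_cast hk
  set n : ℝ := (N:ℝ) with hn_def
  set Cr : ℝ := 1/(2^r*(r+1)) with hCr_def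
  have h2rpos : (0:ℝ) < (2:ℝ)^r := Real.rpow_pos_of_pos (by norm_num) r
  have h2r1 : (1:ℝ) ≤ (2:ℝ)^r := by
    rw [show (1:ℝ) = (2:ℝ)^(0:ℝ) by simp]
    exact Real.rpow_le_rpow_of_exponent_le (by norm_num) (by linarith)
  have hCr0 : 0 < Cr := by rw [hCr_def]; positivity
  have hCr1 : Cr ≤ 1 := by
    rw [hCr_def, div_le_one (by positivity)]
    nlinarith
  set tk : ℝ := (k:ℝ)/n with htk_def
  set tk1 : ℝ := ((k:ℝ)+1)/n with htk1_def
  set ck : ℝ := ((k:ℝ)+1/2)/n with hck_def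
  have htksub : Set.Icc tk tk1 ⊆ Set.Icc (0:ℝ) 1 := by
    apply Set.Icc_subset_Icc
    · rw [htk_def]; positivity
    · rw [htk1_def, div_le_one hn]; linarith
  have htkle : tk ≤ tk1 := by
    rw [htk_def, htk1_def, div_le_div_iff_of_pos_right hn]; linarith
  have htk_e1 : tk = ck - 1/(2*n) := by rw [htk_def, hck_def]; field_simp; ring
  have htk_e2 : tk1 = ck + 1/(2*n) := by rw [htk1_def, hck_def]; field_simp; ring
  have hckI : ck ∈ Set.Icc (0:ℝ) 1 := by
    constructor
    · rw [hck_def]; positivity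
    · rw [hck_def, div_le_one hn]; linarith
  have hba : tk1 - tk = 1/n := by rw [htk_e1, htk_e2]; ring
  -- functions
  set Φ : ℝ → ℝ := fun θ =>
    (N:ℝ)^r * ((⨅ i : Fin N, |X (((i : ℝ) + 1/2) / N) - X θ| ^ r) * ρ (X θ)) * W θ with hΦ_def
  set G : ℝ → ℝ := fun θ => ρ (X θ) * |W θ|^(r+1) with hG_def
  set w : ℝ → ℝ := fun θ => (n * |ck - θ|)^r with hw_def
  -- continuity
  have hinfc : Continuous fun y : ℝ => ⨅ i : Fin N, |X (((i : ℝ) + 1/2) / N) - y| ^ r :=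
    aux_inf_cont hNpos _ hrpos
  have hρX : ContinuousOn (fun θ => ρ (X θ)) (Set.Icc 0 1) := hρcont.comp hXcont hXmap
  have hΦc : ContinuousOn Φ (Set.Icc 0 1) := by
    rw [hΦ_def]
    exact ((continuousOn_const.mul ((hinfc.comp_continuousOn hXcont).mul hρX)).mul hWcont)
  have hGc : ContinuousOn G (Set.Icc 0 1) := by
    rw [hG_def]
    exact hρX.mul ((aux_abs_rpow_cont (by linarith : (0:ℝ) < r+1)).comp_continuousOn hWcont)
  have hwc : Continuous w := by
    have hweq : w = fun θ => |n * (ck - θ)|^r := by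
      funext θ; rw [hw_def, abs_mul, abs_of_nonneg hn.le]
    rw [hweq]
    exact (aux_abs_rpow_cont hrpos).comp (continuous_const.mul (continuous_const.sub continuous_id))
  -- integrabilities on the cell
  have huIcc : Set.uIcc tk tk1 = Set.Icc tk tk1 := Set.uIcc_of_le htkle
  have hiΦ : IntervalIntegrable Φ volume tk tk1 :=
    (hΦc.mono (huIcc ▸ htksub)).intervalIntegrable
  have hiG : IntervalIntegrable G volume tk tk1 :=
    (hGc.mono (huIcc ▸ htksub)).intervalIntegrable
  have hiwG : IntervalIntegrable (fun θ => w θ * G θ) volume tk tk1 :=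
    (hwc.continuousOn.mul (hGc.mono (huIcc ▸ htksub))).intervalIntegrable
  have hiw : IntervalIntegrable w volume tk tk1 := hwc.intervalIntegrable _ _
  -- step 1 : |∫ Φ - ∫ w G| ≤ L*Bρ*M1/n^2
  have step1 : |(∫ θ in tk..tk1, Φ θ) - ∫ θ in tk..tk1, w θ * G θ| ≤ L*Bρ*M1/n^2 := by
    rw [← intervalIntegral.integral_sub hiΦ hiwG]
    have hbound : ∀ θ ∈ Set.uIoc tk tk1, ‖Φ θ - w θ * G θ‖ ≤ (L/n) * (Bρ*M1) := by
      intro θ hθ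
      rw [Set.uIoc_of_le htkle] at hθ
      have hθ' : θ ∈ Set.Icc tk tk1 := ⟨hθ.1.le, hθ.2⟩
      rw [htk_def, htk1_def] at hθ'
      have := aux_pointwise hr hXmono hXmap hρb hW0 hWM hK0 hM10 htay hM hL hk hθ'
      rw [Real.norm_eq_abs]
      calc |Φ θ - w θ * G θ| =
          |(N:ℝ)^r * ((⨅ i : Fin N, |X (((i : ℝ) + 1/2) / N) - X θ| ^ r) * ρ (X θ)) * W θ
            - ((N:ℝ) * |((k:ℝ)+1/2)/N - θ|)^r * (ρ (X θ) * |W θ| ^ (r+1))| := rfl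
        _ ≤ (L/n) * (Bρ*M1) := this
    have h := intervalIntegral.norm_integral_le_of_norm_le_const hbound
    rw [Real.norm_eq_abs] at h
    have habs : |tk1 - tk| = 1/n := by rw [hba, abs_of_pos (by positivity)]
    rw [habs] at h
    calc |(∫ θ in tk..tk1, Φ θ - w θ * G θ)| ≤ (L/n) * (Bρ*M1) * (1/n) := h
      _ = L*Bρ*M1/n^2 := by ring
  -- step 2 : ∫ w = Cr/n
  have step2 : (∫ θ in tk..tk1, w θ) = Cr/n := by
    have h1 : (∫ θ in tk..tk1, w θ) = ∫ θ in tk..tk1, n^r * |ck - θ|^r := by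
      apply intervalIntegral.integral_congr
      intro θ _
      rw [hw_def]
      exact Real.mul_rpow hn.le (abs_nonneg _)
    rw [h1, intervalIntegral.integral_const_mul, htk_e1, htk_e2,
      aux_cell_integral hr (by positivity : (0:ℝ) ≤ 1/(2*n))]
    have h2 : (1/(2*n))^(r+1) = (1/(2*n))^r * (1/(2*n)) := by
      rw [Real.rpow_add' (by positivity) (by linarith), Real.rpow_one]
    rw [h2]
    have h3 : n^r * (1/(2*n))^r = (1/2:ℝ)^r := by
      rw [← Real.mul_rpow hn.le (by positivity)]
      congr 1
      field_simp
    have h5 : ((1:ℝ)/2)^r = ((2:ℝ)^r)⁻¹ := by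
      rw [one_div, Real.inv_rpow (by norm_num : (0:ℝ) ≤ 2)]
    have hLHS : n^r * (2 * ((1/(2*n))^r * (1/(2*n))) / (r+1))
        = (n^r * (1/(2*n))^r) * (2*(1/(2*n))/(r+1)) := by ring
    rw [hLHS, h3, h5, hCr_def]
    field_simp
  -- step 3 : ∫ w G - Cr ∫ G = ∫ (w - Cr)(G - G ck)
  have hiwc : IntervalIntegrable (fun θ => G ck * w θ) volume tk tk1 :=
    (continuous_const.mul hwc).intervalIntegrable _ _
  have hiCrG : IntervalIntegrable (fun θ => Cr * G θ) volume tk tk1 :=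
    hiG.const_mul _
  have step3 : (∫ θ in tk..tk1, w θ * G θ) - Cr * (∫ θ in tk..tk1, G θ)
      = ∫ θ in tk..tk1, (w θ - Cr) * (G θ - G ck) := by
    have he : ∀ θ, (w θ - Cr) * (G θ - G ck)
        = w θ * G θ - G ck * w θ - Cr * G θ + Cr * G ck := by intro θ; ring
    have e1 : (∫ θ in tk..tk1, (w θ - Cr) * (G θ - G ck))
        = ∫ θ in tk..tk1, (w θ * G θ - G ck * w θ - Cr * G θ + Cr * G ck) :=
      intervalIntegral.integral_congr (fun θ _ => he θ)
    rw [e1, intervalIntegral.integral_add ((hiwG.sub hiwc).sub hiCrG)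
      (intervalIntegrable_const),
      intervalIntegral.integral_sub (hiwG.sub hiwc) hiCrG,
      intervalIntegral.integral_sub hiwG hiwc,
      intervalIntegral.integral_const_mul, intervalIntegral.integral_const_mul, step2,
      intervalIntegral.integral_const, hba]
    field_simp
    have hcn : n * (1 / n) • (Cr * G ck) = Cr * G ck := by
      rw [smul_eq_mul, ← mul_assoc, mul_one_div_cancel hn.ne', one_mul]
    linarith
  -- step 4
  have step4 : |∫ θ in tk..tk1, (w θ - Cr) * (G θ - G ck)| ≤ ε' * (1/n) := by
    have hbound : ∀ θ ∈ Set.uIoc tk tk1, ‖(w θ - Cr) * (G θ - G ck)‖ ≤ 1 * ε' := by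
      intro θ hθ
      rw [Set.uIoc_of_le htkle] at hθ
      have hθ' : θ ∈ Set.Icc tk tk1 := ⟨hθ.1.le, hθ.2⟩
      have hθI : θ ∈ Set.Icc (0:ℝ) 1 := htksub hθ'
      have habsck : |ck - θ| ≤ 1/(2*n) := by
        rw [abs_le]
        constructor
        · rw [htk_e2] at hθ'; linarith [hθ'.2]
        · rw [htk_e1] at hθ'; linarith [hθ'.1]
      have hw01 : 0 ≤ w θ ∧ w θ ≤ 1 := by
        constructor
        · rw [hw_def]; positivity
        · rw [hw_def]
          apply Real.rpow_le_one (by positivity)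
          · calc n * |ck - θ| ≤ n * (1/(2*n)) :=
                  mul_le_mul_of_nonneg_left habsck hn.le
              _ = 1/2 := by field_simp
              _ ≤ 1 := by norm_num
          · exact hr0
      have hwCr : |w θ - Cr| ≤ 1 := by
        rw [abs_le]; constructor <;> [linarith [hw01.1, hCr1]; linarith [hw01.2, hCr0]]
      have hGG : |G θ - G ck| ≤ ε' := by
        rw [hG_def]
        apply hUC θ hθI ck hckI
        calc |θ - ck| = |ck - θ| := abs_sub_comm _ _
          _ ≤ 1/(2*n) := habsck
          _ < δ := by
              have : 1/(2*n) ≤ 1/n := by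
                rw [div_le_div_iff₀ (by positivity) hn]; linarith
              linarith [hNδ]
      rw [Real.norm_eq_abs, abs_mul]
      exact mul_le_mul hwCr hGG (abs_nonneg _) (by norm_num)
    have h := intervalIntegral.norm_integral_le_of_norm_le_const hbound
    rw [Real.norm_eq_abs] at h
    have habs : |tk1 - tk| = 1/n := by rw [hba, abs_of_pos (by positivity)]
    rw [habs, one_mul] at h
    exact h
  -- combine
  have hfinal : |(∫ θ in tk..tk1, Φ θ) - Cr * ∫ θ in tk..tk1, G θ| ≤ L*Bρ*M1/n^2 + ε'*(1/n) := by
    have htri : (∫ θ in tk..tk1, Φ θ) - Cr * ∫ θ in tk..tk1, G θ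
        = ((∫ θ in tk..tk1, Φ θ) - ∫ θ in tk..tk1, w θ * G θ)
          + ((∫ θ in tk..tk1, w θ * G θ) - Cr * ∫ θ in tk..tk1, G θ) := by ring
    rw [htri]
    calc |_ + _| ≤ |(∫ θ in tk..tk1, Φ θ) - ∫ θ in tk..tk1, w θ * G θ|
          + |(∫ θ in tk..tk1, w θ * G θ) - Cr * ∫ θ in tk..tk1, G θ| := abs_add_le _ _
      _ ≤ L*Bρ*M1/n^2 + ε'*(1/n) := by
          rw [step3]
          exact add_le_add step1 step4
  calc |(∫ θ in tk..tk1, Φ θ) - Cr * ∫ θ in tk..tk1, G θ| ≤ L*Bρ*M1/n^2 + ε'*(1/n) := hfinal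
    _ = L*Bρ*M1/n^2 + ε'/n := by ring

set_option maxHeartbeats 4000000 in
theorem stmt3 (r : ℝ) (hr : 1 ≤ r)
    (ρ : ℝ → ℝ) (hρC1 : ContDiffOn ℝ 1 ρ (Set.Icc 0 1))
    (hρpos : ∀ y ∈ Set.Icc (0:ℝ) 1, 0 ≤ ρ y)
    (hρprob : ∫ y in Set.Ioo (0:ℝ) 1, ρ y = 1)
    (X : ℝ → ℝ) (hXC2 : ContDiffOn ℝ 2 X (Set.Icc 0 1))
    (hXmono : MonotoneOn X (Set.Icc 0 1))
    (hXmap : Set.MapsTo X (Set.Icc 0 1) (Set.Icc 0 1))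
    (hX0 : X 0 = 0) (hX1 : X 1 = 1) :
    Tendsto
      (fun N : ℕ =>
        (N : ℝ) ^ r *
          ∫ y in Set.Ioo (0:ℝ) 1,
            (⨅ i : Fin N, |X (((i : ℝ) + 1/2) / N) - y| ^ r) * ρ y)
      atTop
      (nhds ((1 / (2 ^ r * (r + 1))) *
        ∫ θ in Set.Ioo (0:ℝ) 1, ρ (X θ) * |deriv X θ| ^ (r + 1))) := by
  have hr0 : (0:ℝ) ≤ r := by linarith
  have hrpos : (0:ℝ) < r := by linarith
  have uD : UniqueDiffOn ℝ (Set.Icc (0:ℝ) 1) := uniqueDiffOn_Icc (by norm_num)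
  set W : ℝ → ℝ := derivWithin X (Set.Icc 0 1) with hW_def
  have hWC1 : ContDiffOn ℝ 1 W (Set.Icc 0 1) := hXC2.derivWithin uD (by norm_num)
  have hWcont : ContinuousOn W (Set.Icc 0 1) := hWC1.continuousOn
  have hXcont : ContinuousOn X (Set.Icc 0 1) := hXC2.continuousOn
  have hρcont : ContinuousOn ρ (Set.Icc 0 1) := hρC1.continuousOn
  have hXdiff : DifferentiableOn ℝ X (Set.Icc 0 1) := hXC2.differentiableOn (by norm_num)
  have hW0 : ∀ t ∈ Set.Icc (0:ℝ) 1, 0 ≤ W t := aux_derivWithin_nonneg hXmono hXdiff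
  obtain ⟨M1, hM1n⟩ := IsCompact.exists_bound_of_continuousOn isCompact_Icc hWcont
  have hM1 : ∀ t ∈ Set.Icc (0:ℝ) 1, |W t| ≤ M1 := by
    intro t ht; simpa [Real.norm_eq_abs] using hM1n t ht
  have hWM : ∀ t ∈ Set.Icc (0:ℝ) 1, W t ≤ M1 :=
    fun t ht => le_trans (le_abs_self _) (hM1 t ht)
  have hM10 : 0 ≤ M1 := le_trans (abs_nonneg _) (hM1 0 ⟨le_rfl, by norm_num⟩)
  have hWder_cont : ContinuousOn (derivWithin W (Set.Icc 0 1)) (Set.Icc 0 1) :=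
    hWC1.continuousOn_derivWithin uD le_rfl
  obtain ⟨K, hKn⟩ := IsCompact.exists_bound_of_continuousOn isCompact_Icc hWder_cont
  have hK : ∀ t ∈ Set.Icc (0:ℝ) 1, |derivWithin W (Set.Icc 0 1) t| ≤ K := by
    intro t ht; simpa [Real.norm_eq_abs] using hKn t ht
  have hK0 : 0 ≤ K := le_trans (abs_nonneg _) (hK 0 ⟨le_rfl, by norm_num⟩)
  obtain ⟨Bρ, hBρn⟩ := IsCompact.exists_bound_of_continuousOn isCompact_Icc hρcont
  have hρb : ∀ y ∈ Set.Icc (0:ℝ) 1, |ρ y| ≤ Bρ := by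
    intro y hy; simpa [Real.norm_eq_abs] using hBρn y hy
  have hBρ0 : 0 ≤ Bρ := le_trans (abs_nonneg _) (hρb 0 ⟨le_rfl, by norm_num⟩)
  have htay : ∀ θ ∈ Set.Icc (0:ℝ) 1, ∀ u ∈ Set.Icc (0:ℝ) 1,
      |X u - X θ - W θ * (u - θ)| ≤ K * (u - θ)^2 := by
    intro θ hθ u hu
    exact aux_taylor hXC2 hK hθ hu
  set M : ℝ := M1/2 + 9*K/4 + 1 with hM_def
  set L : ℝ := r * M^(r-1) * (9*K/4) with hL_def
  have hM0 : 0 < M := by rw [hM_def]; positivity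
  have hL0 : 0 ≤ L := by rw [hL_def]; positivity
  set Cr : ℝ := 1/(2^r*(r+1)) with hCr_def
  set G : ℝ → ℝ := fun θ => ρ (X θ) * |W θ|^(r+1) with hG_def
  have hGc : ContinuousOn G (Set.Icc 0 1) := by
    rw [hG_def]
    exact (hρcont.comp hXcont hXmap).mul
      ((aux_abs_rpow_cont (by linarith : (0:ℝ) < r+1)).comp_continuousOn hWcont)
  -- rewrite the limit value
  have hlim : (1 / (2 ^ r * (r + 1))) *
      ∫ θ in Set.Ioo (0:ℝ) 1, ρ (X θ) * |deriv X θ| ^ (r + 1)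
      = Cr * ∫ θ in (0:ℝ)..1, G θ := by
    have e0 : Set.EqOn (fun θ => ρ (X θ) * |deriv X θ| ^ (r + 1)) G (Set.Ioo (0:ℝ) 1) := by
      intro θ hθ
      have hWθ : W θ = deriv X θ := by
        rw [hW_def]; exact derivWithin_of_mem_nhds (Icc_mem_nhds hθ.1 hθ.2)
      simp only [hG_def, ← hWθ]
    have e1 : ∫ θ in Set.Ioo (0:ℝ) 1, ρ (X θ) * |deriv X θ| ^ (r + 1)
        = ∫ θ in Set.Ioo (0:ℝ) 1, G θ := setIntegral_congr_fun measurableSet_Ioo e0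
    rw [e1, ← integral_Ioc_eq_integral_Ioo,
      ← intervalIntegral.integral_of_le (by norm_num : (0:ℝ) ≤ 1), hCr_def]
  rw [hlim, Metric.tendsto_atTop]
  intro ε hε
  have hUC0 : UniformContinuousOn G (Set.Icc 0 1) :=
    isCompact_Icc.uniformContinuousOn_of_continuous hGc
  set ε' : ℝ := ε/4 with hε'_def
  have hε' : 0 < ε' := by rw [hε'_def]; positivity
  obtain ⟨δ, hδpos, hδ⟩ := Metric.uniformContinuousOn_iff.mp hUC0 ε' hε'
  have hUC : ∀ a ∈ Set.Icc (0:ℝ) 1, ∀ b ∈ Set.Icc (0:ℝ) 1, |a - b| < δ →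
      |ρ (X a) * |W a|^(r+1) - ρ (X b) * |W b|^(r+1)| ≤ ε' := by
    intro a ha b hb hab
    have h := hδ a ha b hb (by rwa [Real.dist_eq])
    rw [Real.dist_eq] at h
    exact h.le
  obtain ⟨N₀, hN₀⟩ := exists_nat_gt (max (4*(L*Bρ*M1)/ε + 1) (1/δ + 1))
  refine ⟨N₀, fun N hN => ?_⟩
  have hNgt : max (4*(L*Bρ*M1)/ε + 1) (1/δ + 1) < (N:ℝ) :=
    lt_of_lt_of_le hN₀ (Nat.cast_le.mpr hN)
  have hP0 : 0 ≤ 4*(L*Bρ*M1)/ε := by positivity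
  have hNR1 : (1:ℝ) ≤ (N:ℝ) := by
    have := le_max_left (4*(L*Bρ*M1)/ε + 1) (1/δ + 1)
    linarith
  have hn : (0:ℝ) < (N:ℝ) := by linarith
  have hNpos : 0 < N := by exact_mod_cast hn
  have hNδ : 1/(N:ℝ) < δ := by
    have h1 : 1/δ + 1 ≤ max (4*(L*Bρ*M1)/ε + 1) (1/δ + 1) := le_max_right _ _
    have h2 : 1/δ < (N:ℝ) := by linarith
    rw [div_lt_iff₀ hn]
    have h3 : δ * (1/δ) < δ * (N:ℝ) := by
      apply mul_lt_mul_of_pos_left h2 hδpos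
    rw [mul_one_div, div_self hδpos.ne'] at h3
    linarith
  have hNls : L*Bρ*M1/(N:ℝ) ≤ ε/4 := by
    have h1 : 4*(L*Bρ*M1)/ε + 1 ≤ max (4*(L*Bρ*M1)/ε + 1) (1/δ + 1) := le_max_left _ _
    have h2 : 4*(L*Bρ*M1)/ε < (N:ℝ) := by linarith
    rw [div_le_iff₀ hn]
    rw [div_lt_iff₀ hε] at h2
    nlinarith [hL0, hBρ0, hM10]
  -- substitution
  set g : ℝ → ℝ := fun y => (⨅ i : Fin N, |X (((i : ℝ) + 1/2) / N) - y| ^ r) * ρ y with hg_def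
  have hinfc : Continuous fun y : ℝ => ⨅ i : Fin N, |X (((i : ℝ) + 1/2) / N) - y| ^ r :=
    aux_inf_cont hNpos _ hrpos
  have hgc : ContinuousOn g (Set.Icc 0 1) := by
    rw [hg_def]
    exact hinfc.continuousOn.mul hρcont
  have huIcc01 : Set.uIcc (0:ℝ) 1 = Set.Icc 0 1 := Set.uIcc_of_le (by norm_num)
  have hsub : ∫ y in Set.Ioo (0:ℝ) 1, g y = ∫ θ in (0:ℝ)..1, g (X θ) * W θ := by
    have h1 := intervalIntegral.integral_comp_mul_deriv'' (a := (0:ℝ)) (b := 1)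
      (f := X) (f' := W) (g := g) ?_ ?_ ?_ ?_
    · rw [hX0, hX1] at h1
      have h2 : ∫ y in Set.Ioo (0:ℝ) 1, g y = ∫ y in (0:ℝ)..1, g y := by
        rw [intervalIntegral.integral_of_le (by norm_num : (0:ℝ) ≤ 1),
          integral_Ioc_eq_integral_Ioo]
      rw [h2, ← h1]
      apply intervalIntegral.integral_congr
      intro θ _
      simp [Function.comp]
    · rw [huIcc01]; exact hXcont
    · intro x hx
      rw [show min (0:ℝ) 1 = 0 by norm_num, show max (0:ℝ) 1 = 1 by norm_num] at hx
      exact (aux_hasDerivAt hXC2 x hx).hasDerivWithinAt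
    · rw [huIcc01]; exact hWcont
    · rw [huIcc01]
      exact hgc.mono (hXmap.image_subset)
  set t : ℕ → ℝ := fun k => (k:ℝ)/N with ht_def
  set Φ : ℝ → ℝ := fun θ =>
    (N:ℝ)^r * ((⨅ i : Fin N, |X (((i : ℝ) + 1/2) / N) - X θ| ^ r) * ρ (X θ)) * W θ with hΦ_def
  have hΦeq : ∀ θ, (N:ℝ)^r * (g (X θ) * W θ) = Φ θ := by
    intro θ; rw [hg_def, hΦ_def]; ring
  have hΦc : ContinuousOn Φ (Set.Icc 0 1) := by
    rw [hΦ_def]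
    exact (continuousOn_const.mul ((hinfc.comp_continuousOn hXcont).mul
      (hρcont.comp hXcont hXmap))).mul hWcont
  have htsub : ∀ k, k ≤ N → ∀ k', k' ≤ N → k ≤ k' →
      Set.uIcc (t k) (t k') ⊆ Set.Icc (0:ℝ) 1 := by
    intro k hk k' hk' hkk'
    have h1 : t k ≤ t k' := by
      rw [ht_def, div_le_div_iff_of_pos_right hn]; exact_mod_cast hkk'
    rw [Set.uIcc_of_le h1]
    apply Set.Icc_subset_Icc
    · rw [ht_def]; positivity
    · rw [ht_def, div_le_one hn]; exact_mod_cast hk'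
  have hintΦ : ∀ k < N, IntervalIntegrable Φ volume (t k) (t (k+1)) := by
    intro k hk
    exact (hΦc.mono (htsub k hk.le (k+1) hk (Nat.le_succ k))).intervalIntegrable
  have hintG : ∀ k < N, IntervalIntegrable G volume (t k) (t (k+1)) := by
    intro k hk
    exact (hGc.mono (htsub k hk.le (k+1) hk (Nat.le_succ k))).intervalIntegrable
  have ht0 : t 0 = 0 := by rw [ht_def]; simp
  have htN : t N = 1 := by rw [ht_def]; exact div_self hn.ne'
  have hΦsum : ∫ θ in (0:ℝ)..1, Φ θ = ∑ k ∈ Finset.range N, ∫ θ in t k..t (k+1), Φ θ := by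
    rw [intervalIntegral.sum_integral_adjacent_intervals hintΦ, ht0, htN]
  have hGsum : ∫ θ in (0:ℝ)..1, G θ = ∑ k ∈ Finset.range N, ∫ θ in t k..t (k+1), G θ := by
    rw [intervalIntegral.sum_integral_adjacent_intervals hintG, ht0, htN]
  rw [Real.dist_eq]
  have hgoal_eq : (N:ℝ)^r * (∫ y in Set.Ioo (0:ℝ) 1,
      (⨅ i : Fin N, |X (((i : ℝ) + 1/2) / N) - y| ^ r) * ρ y)
      = ∑ k ∈ Finset.range N, ∫ θ in t k..t (k+1), Φ θ := by
    rw [show (∫ y in Set.Ioo (0:ℝ) 1,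
        (⨅ i : Fin N, |X (((i : ℝ) + 1/2) / N) - y| ^ r) * ρ y)
        = ∫ y in Set.Ioo (0:ℝ) 1, g y from rfl]
    rw [hsub, ← intervalIntegral.integral_const_mul]
    rw [intervalIntegral.integral_congr (fun θ _ => hΦeq θ)]
    exact hΦsum
  rw [hgoal_eq, hGsum, Finset.mul_sum, ← Finset.sum_sub_distrib]
  have hcell : ∀ k ∈ Finset.range N,
      |(∫ θ in t k..t (k+1), Φ θ) - Cr * ∫ θ in t k..t (k+1), G θ|
        ≤ L*Bρ*M1/(N:ℝ)^2 + ε'/N := by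
    intro k hk
    rw [Finset.mem_range] at hk
    have htk1 : t (k+1) = ((k:ℝ)+1)/N := by rw [ht_def]; push_cast; ring
    rw [htk1]
    rw [show t k = (k:ℝ)/N from rfl]
    exact aux_cell_bound hr hXcont hWcont hρcont hXmono hXmap hρb hW0 hWM hK0 hM10 htay
      hM_def hL_def hε' hδpos hUC hk hNδ
  calc |∑ k ∈ Finset.range N, ((∫ θ in t k..t (k+1), Φ θ) - Cr * ∫ θ in t k..t (k+1), G θ)|
      ≤ ∑ k ∈ Finset.range N, |(∫ θ in t k..t (k+1), Φ θ) - Cr * ∫ θ in t k..t (k+1), G θ| :=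
        Finset.abs_sum_le_sum_abs _ _
    _ ≤ ∑ _k ∈ Finset.range N, (L*Bρ*M1/(N:ℝ)^2 + ε'/N) := Finset.sum_le_sum hcell
    _ = N * (L*Bρ*M1/(N:ℝ)^2 + ε'/N) := by
        rw [Finset.sum_const, Finset.card_range, nsmul_eq_mul]
    _ = L*Bρ*M1/(N:ℝ) + ε' := by field_simp
    _ ≤ ε/4 + ε/4 := by
        apply add_le_add hNls
        rw [hε'_def]
    _ < ε := by linarith
end

section
/- Let m > 0 be a smooth function on the circle and let u > 0 be a smooth solution of ∂_t u = −((r+1)C_r/m) ∂_x(m ∂_x(u^{−r})) with periodic boundary conditions. Then for every constant c > 0, the quantity ∫_0^1 (u−c)_+ (t,x) m(x) dx is nonincreasing in t. -/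
open MeasureTheory Real
open scoped ContDiff

noncomputable def sp (ε c s : ℝ) : ℝ := ε * Real.log (1 + Real.exp ((s - c) / ε))
noncomputable def sp' (ε c s : ℝ) : ℝ :=
  Real.exp ((s - c) / ε) / (1 + Real.exp ((s - c) / ε))
noncomputable def sp'' (ε c s : ℝ) : ℝ :=
  Real.exp ((s - c) / ε) / (ε * (1 + Real.exp ((s - c) / ε)) ^ 2)

lemma one_add_exp_pos (y : ℝ) : 0 < 1 + Real.exp y := by positivity

lemma hasDerivAt_inner (ε c s : ℝ) :
    HasDerivAt (fun s : ℝ => (s - c) / ε) (1 / ε) s := by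
  simpa using ((hasDerivAt_id s).sub_const c).div_const ε

lemma hasDerivAt_sp {ε : ℝ} (hε : 0 < ε) (c s : ℝ) :
    HasDerivAt (sp ε c) (sp' ε c s) s := by
  have h1 : HasDerivAt (fun s : ℝ => 1 + Real.exp ((s - c) / ε))
      (Real.exp ((s - c) / ε) * (1 / ε)) s :=
    ((hasDerivAt_inner ε c s).exp).const_add 1
  have h2 := (h1.log (one_add_exp_pos _).ne').const_mul ε
  refine h2.congr_deriv ?_
  unfold sp'
  field_simp

lemma hasDerivAt_sp' {ε : ℝ} (hε : 0 < ε) (c s : ℝ) :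
    HasDerivAt (sp' ε c) (sp'' ε c s) s := by
  have he : HasDerivAt (fun s : ℝ => Real.exp ((s - c) / ε))
      (Real.exp ((s - c) / ε) * (1 / ε)) s := (hasDerivAt_inner ε c s).exp
  have hd : HasDerivAt (fun s : ℝ => 1 + Real.exp ((s - c) / ε))
      (Real.exp ((s - c) / ε) * (1 / ε)) s := he.const_add 1
  have h2 := he.div hd (one_add_exp_pos _).ne'
  refine h2.congr_deriv ?_
  unfold sp''
  field_simp
  ring

lemma sp'_nonneg (ε c s : ℝ) : 0 ≤ sp' ε c s := by
  unfold sp'; positivity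

lemma sp'_le_one (ε c s : ℝ) : sp' ε c s ≤ 1 := by
  unfold sp'
  rw [div_le_one (one_add_exp_pos _)]
  linarith

lemma sp''_nonneg {ε : ℝ} (hε : 0 < ε) (c s : ℝ) : 0 ≤ sp'' ε c s := by
  unfold sp''; positivity

lemma max_le_sp {ε : ℝ} (hε : 0 < ε) (c s : ℝ) : max (s - c) 0 ≤ sp ε c s := by
  unfold sp
  apply max_le
  · have h1 : Real.exp ((s - c) / ε) ≤ 1 + Real.exp ((s - c) / ε) := by linarith
    have := Real.log_le_log (Real.exp_pos _) h1
    rw [Real.log_exp] at this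
    calc s - c = ε * ((s - c) / ε) := by field_simp
    _ ≤ ε * Real.log (1 + Real.exp ((s - c) / ε)) := by
        exact mul_le_mul_of_nonneg_left this hε.le
  · have : (0 : ℝ) ≤ Real.log (1 + Real.exp ((s - c) / ε)) := by
      apply Real.log_nonneg; nlinarith [Real.exp_pos ((s - c) / ε)]
    positivity

lemma sp_le_max {ε : ℝ} (hε : 0 < ε) (c s : ℝ) :
    sp ε c s ≤ max (s - c) 0 + ε * Real.log 2 := by
  unfold sp
  have hb : 1 + Real.exp ((s - c) / ε) ≤ 2 * Real.exp (max ((s - c) / ε) 0) := by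
    have h1 : (1 : ℝ) ≤ Real.exp (max ((s - c) / ε) 0) := by
      rw [Real.one_le_exp_iff]; exact le_max_right _ _
    have h2 : Real.exp ((s - c) / ε) ≤ Real.exp (max ((s - c) / ε) 0) :=
      Real.exp_le_exp.mpr (le_max_left _ _)
    linarith
  have hlog := Real.log_le_log (one_add_exp_pos _) hb
  rw [Real.log_mul (by norm_num) (Real.exp_pos _).ne', Real.log_exp] at hlog
  have := mul_le_mul_of_nonneg_left hlog hε.le
  have hmax : ε * max ((s - c) / ε) 0 = max (s - c) 0 := by
    rw [mul_max_of_nonneg _ _ hε.le]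
    congr 1
    · field_simp
    · simp
  nlinarith

lemma continuous_sp {ε : ℝ} (hε : 0 < ε) (c : ℝ) : Continuous (sp ε c) :=
  (Differentiable.continuous fun s => (hasDerivAt_sp hε c s).differentiableAt)

lemma continuous_sp' {ε : ℝ} (hε : 0 < ε) (c : ℝ) : Continuous (sp' ε c) :=
  (Differentiable.continuous fun s => (hasDerivAt_sp' hε c s).differentiableAt)

lemma continuous_sp'' {ε : ℝ} (hε : 0 < ε) (c : ℝ) : Continuous (sp'' ε c) := by
  unfold sp''
  apply Continuous.div
  · fun_prop
  · fun_prop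
  · intro s
    have := one_add_exp_pos ((s - c) / ε)
    positivity

lemma deriv_periodic_one {f : ℝ → ℝ} (hf : ∀ x, f (x + 1) = f x) (x : ℝ) :
    deriv f (x + 1) = deriv f x := by
  rw [← deriv_comp_add_const]
  congr 1
  ext y
  exact hf y

theorem stmt4 (r : ℝ) (hr : 1 ≤ r)
    (m : ℝ → ℝ) (hm : ContDiff ℝ (⊤ : ℕ∞) m) (hmpos : ∀ x, 0 < m x)
    (hmper : ∀ x, m (x + 1) = m x)
    (u : ℝ → ℝ → ℝ) (hu : ContDiff ℝ (⊤ : ℕ∞) (fun p : ℝ × ℝ => u p.1 p.2))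
    (hupos : ∀ t x, 0 < u t x)
    (huper : ∀ t x, u t (x + 1) = u t x)
    (hPDE : ∀ t x,
      deriv (fun s => u s x) t =
        -((r + 1) * (1 / (2 ^ r * (r + 1))) / m x) *
          deriv (fun x' => m x' * deriv (fun x'' => (u t x'') ^ (-r)) x') x)
    (c : ℝ) (hc : 0 < c) :
    AntitoneOn (fun t => ∫ x in Set.Ioo (0:ℝ) 1, max (u t x - c) 0 * m x)
      (Set.Ici 0) := by
  -- Notation
  set K : ℝ := (r + 1) * (1 / (2 ^ r * (r + 1))) with hKdef
  have hr1 : (0:ℝ) < r + 1 := by linarith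
  have h2r : (0:ℝ) < 2 ^ r := Real.rpow_pos_of_pos two_pos r
  have hKpos : 0 < K := by
    rw [hKdef]
    have : (0:ℝ) < 2 ^ r * (r + 1) := mul_pos h2r hr1
    positivity
  have hUc : Continuous (fun p : ℝ × ℝ => u p.1 p.2) := hu.continuous
  have hmc : Continuous m := hm.continuous
  -- partial derivatives
  set ut : ℝ → ℝ → ℝ := fun t x => fderiv ℝ (fun p : ℝ × ℝ => u p.1 p.2) (t, x) (1, 0) with hutdef
  set ux : ℝ → ℝ → ℝ := fun t x => fderiv ℝ (fun p : ℝ × ℝ => u p.1 p.2) (t, x) (0, 1) with huxdef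
  have hdiffU : Differentiable ℝ (fun p : ℝ × ℝ => u p.1 p.2) := hu.differentiable (by simp)
  have hut : ∀ t x, HasDerivAt (fun s => u s x) (ut t x) t := by
    intro t x
    have h1 := (hdiffU (t, x)).hasFDerivAt
    have h2 : HasDerivAt (fun s : ℝ => (s, x)) ((1:ℝ), (0:ℝ)) t :=
      (hasDerivAt_id t).prodMk (hasDerivAt_const t x)
    exact h1.comp_hasDerivAt t h2
  have hux : ∀ t x, HasDerivAt (fun y => u t y) (ux t x) x := by
    intro t x
    have h1 := (hdiffU (t, x)).hasFDerivAt
    have h2 : HasDerivAt (fun y : ℝ => (t, y)) ((0:ℝ), (1:ℝ)) x :=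
      (hasDerivAt_const x t).prodMk (hasDerivAt_id x)
    exact h1.comp_hasDerivAt x h2
  have hfdc : Continuous (fun p : ℝ × ℝ => fderiv ℝ (fun p : ℝ × ℝ => u p.1 p.2) p) :=
    hu.continuous_fderiv (by simp)
  have hutc : Continuous (fun p : ℝ × ℝ => ut p.1 p.2) := by
    simp only [hutdef]
    exact hfdc.clm_apply continuous_const
  have huxc : Continuous (fun p : ℝ × ℝ => ux p.1 p.2) := by
    simp only [huxdef]
    exact hfdc.clm_apply continuous_const
  -- the mollified functional and its derivative
  have key : ∀ ε : ℝ, 0 < ε →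
      Antitone (fun t => ∫ x in Set.Ioo (0:ℝ) 1, sp ε c (u t x) * m x) := by
    intro ε hε
    have hcontF : ∀ t, Continuous (fun x => sp ε c (u t x) * m x) := fun t =>
      ((continuous_sp hε c).comp (hUc.comp (Continuous.prodMk_right t))).mul hmc
    have hcontF' : ∀ t, Continuous (fun x => sp' ε c (u t x) * ut t x * m x) := fun t =>
      (((continuous_sp' hε c).comp (hUc.comp (Continuous.prodMk_right t))).mul
        (hutc.comp (Continuous.prodMk_right t))).mul hmc
    have hG : ∀ t : ℝ, HasDerivAt (fun t => ∫ x in Set.Ioo (0:ℝ) 1, sp ε c (u t x) * m x)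
        (∫ x in Set.Ioo (0:ℝ) 1, sp' ε c (u t x) * ut t x * m x) t := by
      intro t0
      -- bound on the compact set
      have hK : IsCompact ((Set.Icc (t0 - 1) (t0 + 1)) ×ˢ (Set.Icc (0:ℝ) 1)) :=
        isCompact_Icc.prod isCompact_Icc
      have hg : Continuous (fun p : ℝ × ℝ => ut p.1 p.2 * m p.2) :=
        hutc.mul (hmc.comp continuous_snd)
      obtain ⟨C, hC⟩ := hK.exists_bound_of_continuousOn hg.continuousOn
      have main := hasDerivAt_integral_of_dominated_loc_of_deriv_le
        (μ := volume.restrict (Set.Ioo (0:ℝ) 1))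
        (F := fun t x => sp ε c (u t x) * m x)
        (F' := fun t x => sp' ε c (u t x) * ut t x * m x)
        (x₀ := t0) (bound := fun _ => C) (s := Metric.ball t0 1) (Metric.ball_mem_nhds t0 one_pos)
        (Filter.Eventually.of_forall fun t => (hcontF t).aestronglyMeasurable)
        ((hcontF t0).integrableOn_Icc.mono_set Set.Ioo_subset_Icc_self)
        ((hcontF' t0).aestronglyMeasurable)
        ?_ ?_ ?_
      · exact main.2
      · -- bound
        rw [ae_restrict_iff' measurableSet_Ioo]
        apply Filter.Eventually.of_forall
        intro x hx t' ht'
        rw [Metric.mem_ball, Real.dist_eq, abs_lt] at ht'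
        have hmem : (t', x) ∈ (Set.Icc (t0 - 1) (t0 + 1)) ×ˢ (Set.Icc (0:ℝ) 1) := by
          refine ⟨⟨by linarith [ht'.1], by linarith [ht'.2]⟩, hx.1.le, hx.2.le⟩
        have h2 := hC (t', x) hmem
        rw [Real.norm_eq_abs] at h2
        show ‖sp' ε c (u t' x) * ut t' x * m x‖ ≤ C
        rw [Real.norm_eq_abs, mul_assoc, abs_mul]
        have h1 : |sp' ε c (u t' x)| ≤ 1 :=
          abs_le.mpr ⟨by linarith [sp'_nonneg ε c (u t' x)], sp'_le_one ε c (u t' x)⟩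
        calc |sp' ε c (u t' x)| * |ut t' x * m x| ≤ 1 * |ut t' x * m x| :=
              mul_le_mul_of_nonneg_right h1 (abs_nonneg _)
          _ = |ut t' x * m x| := one_mul _
          _ ≤ C := h2
      · -- bound integrable
        refine integrableOn_const (hs := ne_of_lt ?_) (hC := enorm_ne_top)
        exact measure_Ioo_lt_top
      · -- differentiability
        apply Filter.Eventually.of_forall
        intro x t' _
        exact ((hasDerivAt_sp hε c (u t' x)).comp t' (hut t' x)).mul_const (m x)
    apply antitone_of_deriv_nonpos
    · exact fun t => (hG t).differentiableAt
    · intro t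
      rw [(hG t).deriv]
      -- Fixed t: set up the integration by parts
      set v : ℝ → ℝ := fun x'' => (u t x'') ^ (-r) with hvdef
      set B : ℝ → ℝ := fun x' => m x' * deriv v x' with hBdef
      set A : ℝ → ℝ := fun x => sp' ε c (u t x) with hAdef
      set A' : ℝ → ℝ := fun x => sp'' ε c (u t x) * ux t x with hA'def
      have hutx : ContDiff ℝ ∞ (fun x => u t x) :=
        (hu.of_le (by simp)).comp (contDiff_const.prodMk contDiff_id)
      have hvsm : ContDiff ℝ ∞ v := by
        rw [contDiff_iff_contDiffAt]
        intro x
        exact (hutx.contDiffAt).rpow_const_of_ne (hupos t x).ne'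
      have hdvsm : ContDiff ℝ ∞ (deriv v) := (contDiff_infty_iff_deriv.mp hvsm).2
      have hBsm : ContDiff ℝ ∞ B := (hm.of_le (by simp)).mul hdvsm
      have hBdiff : ∀ x, HasDerivAt B (deriv B x) x := fun x =>
        ((contDiff_infty_iff_deriv.mp hBsm).1 x).hasDerivAt
      have hB'c : Continuous (deriv B) := (contDiff_infty_iff_deriv.mp hBsm).2.continuous
      have hA : ∀ x, HasDerivAt A (A' x) x := fun x =>
        (hasDerivAt_sp' hε c (u t x)).comp x (hux t x)
      have hA'c : Continuous A' :=
        ((continuous_sp'' hε c).comp (hUc.comp (Continuous.prodMk_right t))).mul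
          (huxc.comp (Continuous.prodMk_right t))
      have hvx : ∀ x, HasDerivAt v (ux t x * (-r) * (u t x) ^ (-r - 1)) x := fun x =>
        (hux t x).rpow_const (Or.inl (hupos t x).ne')
      have hderv : ∀ x, deriv v x = ux t x * (-r) * (u t x) ^ (-r - 1) := fun x =>
        (hvx x).deriv
      -- rewrite the integrand
      have e1 : ∀ x, sp' ε c (u t x) * ut t x * m x = -K * (A x * deriv B x) := by
        intro x
        have hpde := hPDE t x
        rw [(hut t x).deriv] at hpde
        have hmne : m x ≠ 0 := (hmpos x).ne'
        have hAx : A x = sp' ε c (u t x) := rfl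
        have hDx : deriv (fun x' => m x' * deriv (fun x'' => u t x'' ^ (-r)) x') x
            = deriv B x := rfl
        rw [hpde, hDx, hAx]
        calc sp' ε c (u t x) * (-(K / m x) * deriv B x) * m x
            = -K * (sp' ε c (u t x) * deriv B x) * (m x / m x) := by ring
          _ = -K * (sp' ε c (u t x) * deriv B x) := by rw [div_self hmne, mul_one]
      rw [integral_congr_ae (Filter.Eventually.of_forall fun x => e1 x)]
      rw [integral_const_mul]
      have e2 : ∫ x in Set.Ioo (0:ℝ) 1, A x * deriv B x
          = ∫ x in (0:ℝ)..1, A x * deriv B x := by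
        rw [intervalIntegral.integral_of_le zero_le_one, integral_Ioc_eq_integral_Ioo]
      rw [e2]
      have hibp := intervalIntegral.integral_mul_deriv_eq_deriv_mul
        (fun x _ => hA x) (fun x _ => hBdiff x)
        (hA'c.intervalIntegrable 0 1) (hB'c.intervalIntegrable 0 1)
      rw [hibp]
      -- boundary terms cancel
      have hA10 : A 1 = A 0 := by
        simp only [hAdef]
        rw [show (1:ℝ) = 0 + 1 by norm_num, huper t 0]
      have hvper : ∀ x, v (x + 1) = v x := by
        intro x; simp only [hvdef]; rw [huper]
      have hB10 : B 1 = B 0 := by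
        simp only [hBdef]
        rw [show (1:ℝ) = 0 + 1 by norm_num, hmper 0, deriv_periodic_one hvper 0]
      rw [hA10, hB10]
      have hsimp : A 0 * B 0 - A 0 * B 0 - ∫ x in (0:ℝ)..1, A' x * B x
          = -(∫ x in (0:ℝ)..1, A' x * B x) := by ring
      rw [hsimp, neg_mul_neg]
      have hsign : ∀ x, A' x * B x ≤ 0 := by
        intro x
        have hd := hderv x
        have heq : A' x * B x
            = -(r * sp'' ε c (u t x) * m x * (u t x) ^ (-r - 1) * (ux t x) ^ 2) := by
          simp only [hA'def, hBdef, hd]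
          ring
        rw [heq, neg_nonpos]
        have h1 := sp''_nonneg hε c (u t x)
        have h2 := (hmpos x).le
        have h3 : (0:ℝ) ≤ (u t x) ^ (-r - 1) := Real.rpow_nonneg (hupos t x).le _
        have h4 := sq_nonneg (ux t x)
        have h5 : (0:ℝ) ≤ r := by linarith
        positivity
      have hint : ∫ x in (0:ℝ)..1, A' x * B x ≤ 0 := by
        have h0 : 0 ≤ ∫ x in (0:ℝ)..1, -(A' x * B x) :=
          intervalIntegral.integral_nonneg zero_le_one
            (fun x _ => neg_nonneg.mpr (hsign x))
        rw [intervalIntegral.integral_neg] at h0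
        linarith
      have h := mul_le_mul_of_nonneg_left hint hKpos.le
      simpa using h
  -- approximation argument
  intro a ha b hb hab
  simp only
  set F : ℝ → ℝ := fun t => ∫ x in Set.Ioo (0:ℝ) 1, max (u t x - c) 0 * m x with hFdef
  set G : ℝ → ℝ → ℝ := fun ε t => ∫ x in Set.Ioo (0:ℝ) 1, sp ε c (u t x) * m x with hGdef
  have hmint : IntegrableOn m (Set.Ioo (0:ℝ) 1) :=
    hmc.integrableOn_Icc.mono_set Set.Ioo_subset_Icc_self
  set I : ℝ := ∫ x in Set.Ioo (0:ℝ) 1, m x with hIdef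
  have hintF : ∀ t, IntegrableOn (fun x => max (u t x - c) 0 * m x) (Set.Ioo (0:ℝ) 1) := by
    intro t
    have : Continuous (fun x => max (u t x - c) 0 * m x) :=
      (((hUc.comp (Continuous.prodMk_right t)).sub continuous_const).max continuous_const).mul hmc
    exact this.integrableOn_Icc.mono_set Set.Ioo_subset_Icc_self
  have hintG : ∀ (ε : ℝ), 0 < ε → ∀ t,
      IntegrableOn (fun x => sp ε c (u t x) * m x) (Set.Ioo (0:ℝ) 1) := by
    intro ε hε t
    have : Continuous (fun x => sp ε c (u t x) * m x) :=
      ((continuous_sp hε c).comp (hUc.comp (Continuous.prodMk_right t))).mul hmc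
    exact this.integrableOn_Icc.mono_set Set.Ioo_subset_Icc_self
  have hclose : ∀ (ε : ℝ), 0 < ε → ∀ t, |G ε t - F t| ≤ ε * (Real.log 2 * I) := by
    intro ε hε t
    have hdiff : G ε t - F t
        = ∫ x in Set.Ioo (0:ℝ) 1, (sp ε c (u t x) - max (u t x - c) 0) * m x := by
      rw [hGdef, hFdef]
      simp only
      rw [← integral_sub (hintG ε hε t) (hintF t)]
      congr 1
      ext x
      ring
    rw [hdiff]
    have hnn : ∀ x, 0 ≤ (sp ε c (u t x) - max (u t x - c) 0) * m x := by
      intro x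
      apply mul_nonneg _ (hmpos x).le
      have := max_le_sp hε c (u t x)
      linarith
    have hub : ∀ x, (sp ε c (u t x) - max (u t x - c) 0) * m x
        ≤ (ε * Real.log 2) * m x := by
      intro x
      apply mul_le_mul_of_nonneg_right _ (hmpos x).le
      have := sp_le_max hε c (u t x)
      linarith
    have hintsub : IntegrableOn (fun x => (sp ε c (u t x) - max (u t x - c) 0) * m x)
        (Set.Ioo (0:ℝ) 1) := by
      have h := (hintG ε hε t).sub (hintF t)
      have heq : (fun x => (sp ε c (u t x) - max (u t x - c) 0) * m x)
          = fun x => sp ε c (u t x) * m x - max (u t x - c) 0 * m x := by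
        ext x; ring
      rw [heq]
      exact h
    rw [abs_of_nonneg (integral_nonneg hnn)]
    calc ∫ x in Set.Ioo (0:ℝ) 1, (sp ε c (u t x) - max (u t x - c) 0) * m x
        ≤ ∫ x in Set.Ioo (0:ℝ) 1, (ε * Real.log 2) * m x :=
          integral_mono hintsub (hmint.const_mul _) hub
      _ = (ε * Real.log 2) * I := by rw [integral_const_mul]
      _ = ε * (Real.log 2 * I) := by ring
  -- take limits along ε = 1/(n+1)
  have htend : ∀ t, Filter.Tendsto (fun n : ℕ => G (1 / (n + 1)) t) Filter.atTop (nhds (F t)) := by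
    intro t
    rw [tendsto_iff_dist_tendsto_zero]
    apply squeeze_zero (fun n => dist_nonneg)
      (g := fun n : ℕ => (1 / (n + 1)) * (Real.log 2 * I))
    · intro n
      rw [Real.dist_eq]
      exact hclose (1 / (n + 1)) (by positivity) t
    · simpa using tendsto_one_div_add_atTop_nhds_zero_nat.mul_const (Real.log 2 * I)
  refine le_of_tendsto_of_tendsto' (htend b) (htend a) ?_
  intro n
  exact key (1 / (n + 1)) (by positivity) hab
end

section
/- Under the same hypotheses, for every c > 0 the quantity ∫_0^1 (u−c)_−(t,x) m(x) dx is nonincreasing in t; consequently, if c_0 ≤ u(0,·) ≤ C_0 for constants 0 < c_0 ≤ C_0, then c_0 ≤ u(t,·) ≤ C_0 for all t ≥ 0. -/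
open MeasureTheory Set

private lemma one_le_inftop : ((⊤ : ℕ∞) : WithTop ℕ∞) ≠ 0 := by
  simp

/-- Entropy dissipation: for any smooth convex `η`, `t ↦ ∫ η(u t x) m x dx` is nonincreasing. -/
private lemma key_entropy (r : ℝ) (hr : 1 ≤ r)
    (m : ℝ → ℝ) (hm : ContDiff ℝ (⊤ : ℕ∞) m) (hmpos : ∀ x, 0 < m x)
    (hmper : ∀ x, m (x + 1) = m x)
    (u : ℝ → ℝ → ℝ) (hu : ContDiff ℝ (⊤ : ℕ∞) (fun p : ℝ × ℝ => u p.1 p.2))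
    (hupos : ∀ t x, 0 < u t x)
    (huper : ∀ t x, u t (x + 1) = u t x)
    (hPDE : ∀ t x,
      deriv (fun s => u s x) t =
        -((r + 1) * (1 / (2 ^ r * (r + 1))) / m x) *
          deriv (fun x' => m x' * deriv (fun x'' => (u t x'') ^ (-r)) x') x)
    (η : ℝ → ℝ) (hη : ContDiff ℝ (⊤ : ℕ∞) η) (hconv : ∀ v, 0 ≤ deriv (deriv η) v) :
    Antitone (fun t => ∫ x in Set.Ioo (0:ℝ) 1, η (u t x) * m x) := by
  set K : ℝ := (r + 1) * (1 / (2 ^ r * (r + 1))) with hK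
  have hKpos : 0 < K := by
    have h2 : (0:ℝ) < 2 ^ r := Real.rpow_pos_of_pos two_pos r
    have hr1 : (0:ℝ) < r + 1 := by linarith
    positivity
  set f : ℝ × ℝ → ℝ := fun p => u p.1 p.2 with hf
  replace hu : ContDiff ℝ (⊤ : ℕ∞) f := hu.of_le (by simp)
  replace hm : ContDiff ℝ (⊤ : ℕ∞) m := hm.of_le (by simp)
  have hfd : Differentiable ℝ f := hu.differentiable one_le_inftop
  set ut : ℝ → ℝ → ℝ := fun t x => fderiv ℝ f (t, x) (1, 0) with hut
  have hut_cont : Continuous (fun p : ℝ × ℝ => ut p.1 p.2) := by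
    have h1 : Continuous (fun p : ℝ × ℝ => fderiv ℝ f p) :=
      (hu.fderiv_right (m := 0) (by exact_mod_cast le_top)).continuous
    exact h1.clm_apply continuous_const
  have hderiv_t : ∀ t x, HasDerivAt (fun s => u s x) (ut t x) t := by
    intro t x
    have hγ : HasDerivAt (fun s : ℝ => ((s, x) : ℝ × ℝ)) (1, 0) t :=
      (hasDerivAt_id t).prodMk (hasDerivAt_const t x)
    have := (hfd (t, x)).hasFDerivAt.comp_hasDerivAt t hγ
    exact this
  -- slices are smooth
  have hUsm : ∀ t, ContDiff ℝ (⊤ : ℕ∞) (fun x => u t x) := fun t =>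
    hu.comp ((contDiff_const : ContDiff ℝ (⊤ : ℕ∞) fun _ : ℝ => t).prodMk contDiff_id)
  have hTsm : ∀ x, Continuous (fun t => u t x) := fun x =>
    hu.continuous.comp (continuous_id.prodMk continuous_const)
  have hucont : Continuous (fun p : ℝ × ℝ => u p.1 p.2) := hu.continuous
  have hη1 : ContDiff ℝ (⊤ : ℕ∞) (deriv η) := (contDiff_infty_iff_deriv.1 hη).2
  -- integrand and its t-derivative
  set Φ : ℝ → ℝ → ℝ := fun t x => η (u t x) * m x with hΦ
  set Φ' : ℝ → ℝ → ℝ := fun t x => deriv η (u t x) * ut t x * m x with hΦ'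
  have hΦcont : Continuous (fun p : ℝ × ℝ => Φ p.1 p.2) :=
    (hη.continuous.comp hucont).mul (hm.continuous.comp continuous_snd)
  have hΦ'cont : Continuous (fun p : ℝ × ℝ => Φ' p.1 p.2) :=
    (((hη1.continuous.comp hucont).mul hut_cont)).mul (hm.continuous.comp continuous_snd)
  have hΦdiff : ∀ t x, HasDerivAt (fun τ => Φ τ x) (Φ' t x) t := by
    intro t x
    have h1 : HasDerivAt (fun τ => η (u τ x)) (deriv η (u t x) * ut t x) t :=
      ((hη.differentiable one_le_inftop (u t x)).hasDerivAt).comp t (hderiv_t t x)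
    exact h1.mul_const (m x)
  -- differentiation under the integral sign
  have main : ∀ t : ℝ, HasDerivAt (fun τ => ∫ x in Set.Ioo (0:ℝ) 1, Φ τ x)
      (∫ x in Set.Ioo (0:ℝ) 1, Φ' t x) t := by
    intro t
    have hcpt : IsCompact (Set.Icc (t - 1) (t + 1) ×ˢ Set.Icc (0:ℝ) 1) :=
      isCompact_Icc.prod isCompact_Icc
    obtain ⟨M, hM⟩ := hcpt.exists_bound_of_continuousOn hΦ'cont.continuousOn
    have h_bound : ∀ᵐ x ∂(volume.restrict (Set.Ioo (0:ℝ) 1)),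
        ∀ τ ∈ Metric.ball t 1, ‖Φ' τ x‖ ≤ M := by
      refine (ae_restrict_iff' measurableSet_Ioo).2 (Filter.Eventually.of_forall ?_)
      intro x hx τ hτ
      have hτ' : τ ∈ Set.Icc (t - 1) (t + 1) := by
        rcases Metric.mem_ball.1 hτ with h
        have := abs_lt.1 (by simpa [Real.dist_eq] using h)
        constructor <;> linarith [this.1, this.2]
      exact hM (τ, x) ⟨hτ', ⟨hx.1.le, hx.2.le⟩⟩
    have hmeas : ∀ᶠ τ in nhds t, AEStronglyMeasurable (fun x => Φ τ x)
        (volume.restrict (Set.Ioo (0:ℝ) 1)) := by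
      refine Filter.Eventually.of_forall fun τ => ?_
      exact ((hΦcont.comp (continuous_const.prodMk continuous_id)).aestronglyMeasurable)
    have hint : Integrable (fun x => Φ t x) (volume.restrict (Set.Ioo (0:ℝ) 1)) := by
      have : Continuous (fun x => Φ t x) :=
        hΦcont.comp (continuous_const.prodMk continuous_id)
      exact (this.integrableOn_Icc).mono_set Set.Ioo_subset_Icc_self
    have h'meas : AEStronglyMeasurable (fun x => Φ' t x)
        (volume.restrict (Set.Ioo (0:ℝ) 1)) :=
      (hΦ'cont.comp (continuous_const.prodMk continuous_id)).aestronglyMeasurable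
    have hbint : Integrable (fun _ : ℝ => M) (volume.restrict (Set.Ioo (0:ℝ) 1)) := by
      refine integrableOn_const ?_
      exact measure_Ioo_lt_top.ne
    have hdiff : ∀ᵐ x ∂(volume.restrict (Set.Ioo (0:ℝ) 1)),
        ∀ τ ∈ Metric.ball t 1, HasDerivAt (fun τ' => Φ τ' x) (Φ' τ x) τ :=
      Filter.Eventually.of_forall fun x τ _ => hΦdiff τ x
    exact (hasDerivAt_integral_of_dominated_loc_of_deriv_le (Metric.ball_mem_nhds t one_pos) hmeas hint h'meas
      h_bound hbint hdiff).2
  -- the derivative is nonpositive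
  have hD : ∀ t : ℝ, (∫ x in Set.Ioo (0:ℝ) 1, Φ' t x) ≤ 0 := by
    intro t
    set U : ℝ → ℝ := fun x => u t x with hU
    have hUs : ContDiff ℝ (⊤ : ℕ∞) U := hUsm t
    have hUd : Differentiable ℝ U := hUs.differentiable one_le_inftop
    set W : ℝ → ℝ := fun x'' => (u t x'') ^ (-r) with hW
    have hWs : ContDiff ℝ (⊤ : ℕ∞) W := hUs.rpow_const_of_ne (fun x => (hupos t x).ne')
    have hWd : ∀ x, HasDerivAt W (deriv U x * (-r) * U x ^ (-r - 1)) x := fun x =>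
      ((hUd x).hasDerivAt).rpow_const (Or.inl (hupos t x).ne')
    have hW1 : ContDiff ℝ (⊤ : ℕ∞) (deriv W) := (contDiff_infty_iff_deriv.1 hWs).2
    set g : ℝ → ℝ := fun x' => m x' * deriv W x' with hg
    have hgs : ContDiff ℝ (⊤ : ℕ∞) g := hm.mul hW1
    have hgd : Differentiable ℝ g := hgs.differentiable one_le_inftop
    have hPDE' : ∀ x, ut t x = -(K / m x) * deriv g x := by
      intro x
      have h1 : deriv (fun s => u s x) t = ut t x := (hderiv_t t x).deriv
      rw [← h1, hPDE t x]
    -- A := deriv η ∘ U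
    set A : ℝ → ℝ := fun x => deriv η (U x) with hA
    have hAd : ∀ x, HasDerivAt A (deriv (deriv η) (U x) * deriv U x) x := fun x =>
      ((hη1.differentiable one_le_inftop (U x)).hasDerivAt).comp x ((hUd x).hasDerivAt)
    have hAcont : Continuous A := hη1.continuous.comp hUs.continuous
    -- periodicity of pieces
    have hUper : ∀ x, U (x + 1) = U x := fun x => huper t x
    have hWper : ∀ x, W (x + 1) = W x := by
      intro x; simp only [hW, huper t x]
    have hW'per : ∀ x, deriv W (x + 1) = deriv W x := by
      intro x
      have h1 : deriv (fun y => W (y + 1)) x = deriv W (x + 1) := deriv_comp_add_const W 1 x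
      rw [← h1]
      congr 1
      funext y
      exact hWper y
    have hgper : g 1 = g 0 := by
      have h1 : (0:ℝ) + 1 = 1 := by norm_num
      simp only [hg]
      rw [← h1, hmper 0, hW'per 0]
    have hAper : A 1 = A 0 := by
      have h1 : (0:ℝ) + 1 = 1 := by norm_num
      simp only [hA, hU]
      rw [← h1, huper t 0]
    -- rewrite the integral
    have hrepr : (∫ x in Set.Ioo (0:ℝ) 1, Φ' t x)
        = -K * ∫ x in (0:ℝ)..1, A x * deriv g x := by
      rw [intervalIntegral.integral_of_le zero_le_one, integral_Ioc_eq_integral_Ioo,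
        ← integral_const_mul]
      refine setIntegral_congr_fun measurableSet_Ioo (fun x _ => ?_)
      simp only [hΦ']
      rw [hPDE' x]
      have hmne : m x ≠ 0 := (hmpos x).ne'
      have hc : K / m x * m x = K := div_mul_cancel₀ K hmne
      calc deriv η (u t x) * (-(K / m x) * deriv g x) * m x
          = -(K / m x * m x) * (deriv η (u t x) * deriv g x) := by ring
        _ = -K * (A x * deriv g x) := by rw [hc]
    -- integration by parts
    have hibp : ∫ x in (0:ℝ)..1, (deriv (deriv η) (U x) * deriv U x) * g x + A x * deriv g x
        = A 1 * g 1 - A 0 * g 0 := by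
      apply intervalIntegral.integral_deriv_mul_eq_sub_of_hasDerivAt
      · exact hAcont.continuousOn
      · exact hgs.continuous.continuousOn
      · intro x _; exact hAd x
      · intro x _; exact (hgd x).hasDerivAt
      · exact (((contDiff_infty_iff_deriv.1 hη1).2.continuous.comp hUs.continuous).mul
          ((contDiff_infty_iff_deriv.1 hUs).2.continuous)).intervalIntegrable 0 1
      · exact ((contDiff_infty_iff_deriv.1 hgs).2.continuous).intervalIntegrable 0 1
    have hBC : A 1 * g 1 - A 0 * g 0 = 0 := by rw [hAper, hgper]; ring
    have hsplit : (∫ x in (0:ℝ)..1, A x * deriv g x)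
        = -∫ x in (0:ℝ)..1, (deriv (deriv η) (U x) * deriv U x) * g x := by
      have h2 : (∫ x in (0:ℝ)..1, (deriv (deriv η) (U x) * deriv U x) * g x)
          + ∫ x in (0:ℝ)..1, A x * deriv g x = 0 := by
        rw [← intervalIntegral.integral_add, hibp, hBC]
        · exact ((((contDiff_infty_iff_deriv.1 hη1).2.continuous.comp hUs.continuous).mul
            ((contDiff_infty_iff_deriv.1 hUs).2.continuous)).mul
            hgs.continuous).intervalIntegrable 0 1
        · exact (hAcont.mul ((contDiff_infty_iff_deriv.1 hgs).2.continuous)).intervalIntegrable 0 1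
      linarith
    -- the remaining integrand is pointwise nonpositive
    have hptwise : ∀ x, 0 ≤ (deriv (deriv η) (U x) * deriv U x) * g x → True := fun _ _ => trivial
    have hnn : 0 ≤ ∫ x in (0:ℝ)..1, -((deriv (deriv η) (U x) * deriv U x) * g x) := by
      apply intervalIntegral.integral_nonneg zero_le_one
      intro x _
      have hgx : g x = m x * (deriv U x * (-r) * U x ^ (-r - 1)) := by
        simp only [hg]; rw [(hWd x).deriv]
      rw [hgx]
      have h1 : 0 ≤ deriv (deriv η) (U x) := hconv (U x)
      have h2 : (0:ℝ) < U x ^ (-r - 1) := Real.rpow_pos_of_pos (hupos t x) _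
      have h3 : (0:ℝ) < m x := hmpos x
      have h4 : 0 ≤ deriv (deriv η) (U x) * (deriv U x * deriv U x) * m x
          * U x ^ (-r - 1) * r := by
        have hsq : 0 ≤ deriv U x * deriv U x := mul_self_nonneg _
        have : (0:ℝ) ≤ r := by linarith
        positivity
      nlinarith [h4]
    have hneg : (∫ x in (0:ℝ)..1, (deriv (deriv η) (U x) * deriv U x) * g x) ≤ 0 := by
      rw [intervalIntegral.integral_neg] at hnn
      linarith
    rw [hrepr, hsplit]
    nlinarith [hneg, hKpos]
  -- conclude antitonicity
  have hdiffF : Differentiable ℝ (fun t => ∫ x in Set.Ioo (0:ℝ) 1, Φ t x) :=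
    fun t => (main t).differentiableAt
  have : Antitone (fun t => ∫ x in Set.Ioo (0:ℝ) 1, Φ t x) := by
    apply antitone_of_deriv_nonpos hdiffF
    intro t
    rw [(main t).deriv]
    exact hD t
  exact this

/-- Monotonicity of `t ↦ ∫ (a + b u)_+ m dx`, by smooth convex approximation. -/
private lemma key_max (r : ℝ) (hr : 1 ≤ r)
    (m : ℝ → ℝ) (hm : ContDiff ℝ (⊤ : ℕ∞) m) (hmpos : ∀ x, 0 < m x)
    (hmper : ∀ x, m (x + 1) = m x)
    (u : ℝ → ℝ → ℝ) (hu : ContDiff ℝ (⊤ : ℕ∞) (fun p : ℝ × ℝ => u p.1 p.2))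
    (hupos : ∀ t x, 0 < u t x)
    (huper : ∀ t x, u t (x + 1) = u t x)
    (hPDE : ∀ t x,
      deriv (fun s => u s x) t =
        -((r + 1) * (1 / (2 ^ r * (r + 1))) / m x) *
          deriv (fun x' => m x' * deriv (fun x'' => (u t x'') ^ (-r)) x') x)
    (a b : ℝ) :
    Antitone (fun t => ∫ x in Set.Ioo (0:ℝ) 1, max (a + b * u t x) 0 * m x) := by
  intro s t hst
  simp only
  have hucont : ∀ τ, Continuous (fun x => u τ x) := fun τ =>
    hu.continuous.comp (continuous_const.prodMk continuous_id)
  have hmcont : Continuous m := hm.continuous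
  set M0 : ℝ := ∫ x in Set.Ioo (0:ℝ) 1, m x with hM0def
  have hM0 : (0:ℝ) ≤ M0 :=
    setIntegral_nonneg measurableSet_Ioo (fun x _ => (hmpos x).le)
  have hmint : IntegrableOn m (Set.Ioo (0:ℝ) 1) :=
    hmcont.integrableOn_Icc.mono_set Set.Ioo_subset_Icc_self
  have hint1 : ∀ τ : ℝ, IntegrableOn (fun x => max (a + b * u τ x) 0 * m x)
      (Set.Ioo (0:ℝ) 1) := by
    intro τ
    have : Continuous (fun x => max (a + b * u τ x) 0 * m x) :=
      ((continuous_const.add (continuous_const.mul (hucont τ))).max continuous_const).mul hmcont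
    exact this.integrableOn_Icc.mono_set Set.Ioo_subset_Icc_self
  set L : ℝ := Real.log 2 * M0 with hLdef
  have hL : 0 ≤ L := mul_nonneg (Real.log_nonneg one_le_two) hM0
  have happrox : ∀ δ : ℝ, 0 < δ →
      (∫ x in Set.Ioo (0:ℝ) 1, max (a + b * u t x) 0 * m x)
        ≤ (∫ x in Set.Ioo (0:ℝ) 1, max (a + b * u s x) 0 * m x) + δ * L := by
    intro δ hδ
    set lin : ℝ → ℝ := fun v => (a + b * v) / δ with hlin
    have hlind : ∀ v : ℝ, HasDerivAt lin (b / δ) v := by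
      intro v
      have h1 : HasDerivAt (fun v : ℝ => a + b * v) b v := by
        simpa using ((hasDerivAt_id v).const_mul b).const_add a
      simpa using h1.div_const δ
    set η : ℝ → ℝ := fun v => δ * Real.log (1 + Real.exp (lin v)) with hη
    have hEpos : ∀ v : ℝ, 0 < 1 + Real.exp (lin v) := fun v => by positivity
    have hlins : ContDiff ℝ (⊤ : ℕ∞) lin :=
      ((contDiff_const.add (contDiff_const.mul contDiff_id)).div_const δ)
    have hηs : ContDiff ℝ (⊤ : ℕ∞) η :=
      contDiff_const.mul (((contDiff_const.add (Real.contDiff_exp.comp hlins))).log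
        (fun v => (hEpos v).ne'))
    -- first derivative
    have hd1 : ∀ v : ℝ, HasDerivAt η (b * (Real.exp (lin v) / (1 + Real.exp (lin v)))) v := by
      intro v
      have he : HasDerivAt (fun w => Real.exp (lin w)) (Real.exp (lin v) * (b / δ)) v :=
        (Real.hasDerivAt_exp (lin v)).comp v (hlind v)
      have h1e : HasDerivAt (fun w => 1 + Real.exp (lin w)) (Real.exp (lin v) * (b / δ)) v :=
        he.const_add 1
      have hlog := (h1e.log (hEpos v).ne').const_mul δ
      refine hlog.congr_deriv ?_
      field_simp
    have hderη : deriv η = fun v => b * (Real.exp (lin v) / (1 + Real.exp (lin v))) :=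
      funext fun v => (hd1 v).deriv
    -- second derivative is nonneg
    have hconv : ∀ v : ℝ, 0 ≤ deriv (deriv η) v := by
      intro v
      have hσ : HasDerivAt (fun y : ℝ => Real.exp y / (1 + Real.exp y))
          (Real.exp (lin v) / (1 + Real.exp (lin v)) ^ 2) (lin v) := by
        have h := (Real.hasDerivAt_exp (lin v)).div
          ((Real.hasDerivAt_exp (lin v)).const_add 1) (hEpos v).ne'
        refine h.congr_deriv ?_
        have h2 : (1 + Real.exp (lin v)) ≠ 0 := (hEpos v).ne'
        field_simp
        ring
      have hcomp : HasDerivAt (fun w => b * (Real.exp (lin w) / (1 + Real.exp (lin w))))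
          (b * (Real.exp (lin v) / (1 + Real.exp (lin v)) ^ 2 * (b / δ))) v :=
        ((hσ.comp v (hlind v))).const_mul b
      rw [hderη, hcomp.deriv]
      have h3 : b * (Real.exp (lin v) / (1 + Real.exp (lin v)) ^ 2 * (b / δ))
          = b ^ 2 / δ * (Real.exp (lin v) / (1 + Real.exp (lin v)) ^ 2) := by ring
      rw [h3]
      positivity
    -- approximation bounds
    have hlb : ∀ v : ℝ, max (a + b * v) 0 ≤ η v := by
      intro v
      have h0 : (0:ℝ) ≤ η v := by
        have : (0:ℝ) ≤ Real.log (1 + Real.exp (lin v)) :=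
          Real.log_nonneg (by linarith [Real.exp_pos (lin v)])
        positivity
      have hz : a + b * v ≤ η v := by
        have h1 : lin v ≤ Real.log (1 + Real.exp (lin v)) :=
          (Real.le_log_iff_exp_le (hEpos v)).2 (by linarith [Real.exp_pos (lin v)])
        have h2 : δ * lin v ≤ δ * Real.log (1 + Real.exp (lin v)) :=
          mul_le_mul_of_nonneg_left h1 hδ.le
        have h3 : δ * lin v = a + b * v := by
          simp only [hlin]
          field_simp
        simp only [hη]
        linarith
      exact max_le hz h0
    have hub : ∀ v : ℝ, η v ≤ max (a + b * v) 0 + δ * Real.log 2 := by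
      intro v
      rcases le_or_gt (a + b * v) 0 with hc | hc
      · have hy : lin v ≤ 0 := div_nonpos_iff.2 (Or.inr ⟨hc, hδ.le⟩)
        have he1 : Real.exp (lin v) ≤ 1 := Real.exp_le_one_iff.2 hy
        have h1 : Real.log (1 + Real.exp (lin v)) ≤ Real.log 2 := by
          refine (Real.log_le_log_iff (hEpos v) two_pos).2 (by linarith)
        have := mul_le_mul_of_nonneg_left h1 hδ.le
        rw [max_eq_right hc]
        simpa [hη] using by linarith
      · have hy : 0 ≤ lin v := div_nonneg hc.le hδ.le
        have he1 : 1 ≤ Real.exp (lin v) := Real.one_le_exp hy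
        have h1 : Real.log (1 + Real.exp (lin v)) ≤ Real.log (2 * Real.exp (lin v)) :=
          (Real.log_le_log_iff (hEpos v) (by positivity)).2 (by linarith)
        have h2 : Real.log (2 * Real.exp (lin v)) = Real.log 2 + lin v := by
          rw [Real.log_mul two_ne_zero (Real.exp_ne_zero _), Real.log_exp]
        have h3 : δ * Real.log (1 + Real.exp (lin v)) ≤ δ * (Real.log 2 + lin v) := by
          rw [← h2]; exact mul_le_mul_of_nonneg_left h1 hδ.le
        have h4 : δ * lin v = a + b * v := by simp only [hlin]; field_simp
        have h5 : max (a + b * v) 0 = a + b * v := max_eq_left hc.le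
        simp only [hη]
        nlinarith
    -- integrability of the approximations
    have hintη : ∀ τ : ℝ, IntegrableOn (fun x => η (u τ x) * m x) (Set.Ioo (0:ℝ) 1) := by
      intro τ
      have : Continuous (fun x => η (u τ x) * m x) :=
        (hηs.continuous.comp (hucont τ)).mul hmcont
      exact this.integrableOn_Icc.mono_set Set.Ioo_subset_Icc_self
    -- three steps
    have step1 : (∫ x in Set.Ioo (0:ℝ) 1, max (a + b * u t x) 0 * m x)
        ≤ ∫ x in Set.Ioo (0:ℝ) 1, η (u t x) * m x := by
      refine setIntegral_mono_on (hint1 t) (hintη t) measurableSet_Ioo (fun x _ => ?_)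
      exact mul_le_mul_of_nonneg_right (hlb (u t x)) (hmpos x).le
    have step2 : (∫ x in Set.Ioo (0:ℝ) 1, η (u t x) * m x)
        ≤ ∫ x in Set.Ioo (0:ℝ) 1, η (u s x) * m x :=
      key_entropy r hr m hm hmpos hmper u hu hupos huper hPDE η hηs hconv hst
    have step3 : (∫ x in Set.Ioo (0:ℝ) 1, η (u s x) * m x)
        ≤ (∫ x in Set.Ioo (0:ℝ) 1, max (a + b * u s x) 0 * m x) + δ * L := by
      have h1 : (∫ x in Set.Ioo (0:ℝ) 1, η (u s x) * m x)
          ≤ ∫ x in Set.Ioo (0:ℝ) 1, (max (a + b * u s x) 0 * m x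
              + (δ * Real.log 2) * m x) := by
        refine setIntegral_mono_on (hintη s) ((hint1 s).add (hmint.const_mul _))
          measurableSet_Ioo (fun x _ => ?_)
        have := mul_le_mul_of_nonneg_right (hub (u s x)) (hmpos x).le
        nlinarith [this]
      rw [integral_add (hint1 s) (hmint.const_mul _), integral_const_mul] at h1
      have : δ * Real.log 2 * M0 = δ * L := by rw [hLdef]; ring
      linarith
    linarith
  by_contra hcon
  push_neg at hcon
  set d : ℝ := (∫ x in Set.Ioo (0:ℝ) 1, max (a + b * u t x) 0 * m x)
      - (∫ x in Set.Ioo (0:ℝ) 1, max (a + b * u s x) 0 * m x) with hd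
  have hdpos : 0 < d := by simp only [hd]; linarith
  have hδpos : 0 < d / (2 * (L + 1)) := by positivity
  have := happrox _ hδpos
  have hlt : d / (2 * (L + 1)) * L < d := by
    rw [div_mul_eq_mul_div, div_lt_iff₀ (by positivity)]
    nlinarith
  simp only [hd] at hlt
  linarith

/-- If the positive-part integral is nonpositive, then pointwise nonpositivity everywhere. -/
private lemma ptwise (m : ℝ → ℝ) (hm : Continuous m) (hmpos : ∀ x, 0 < m x)
    (u : ℝ → ℝ → ℝ) (hu : ContDiff ℝ (⊤ : ℕ∞) (fun p : ℝ × ℝ => u p.1 p.2))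
    (huper : ∀ t x, u t (x + 1) = u t x)
    (t a b : ℝ)
    (h0 : (∫ x in Set.Ioo (0:ℝ) 1, max (a + b * u t x) 0 * m x) ≤ 0) :
    ∀ x, a + b * u t x ≤ 0 := by
  have hucont : Continuous (fun x => u t x) :=
    hu.continuous.comp (continuous_const.prodMk continuous_id)
  set F : ℝ → ℝ := fun x => max (a + b * u t x) 0 * m x with hF
  have hFc : Continuous F :=
    ((continuous_const.add (continuous_const.mul hucont)).max continuous_const).mul hm
  have hFnn : ∀ x, 0 ≤ F x := fun x => mul_nonneg (le_max_right _ _) (hmpos x).le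
  have hFint : IntegrableOn F (Set.Ioo (0:ℝ) 1) :=
    hFc.integrableOn_Icc.mono_set Set.Ioo_subset_Icc_self
  have hIoo : ∀ x ∈ Set.Ioo (0:ℝ) 1, F x = 0 := by
    by_contra hcon
    push_neg at hcon
    obtain ⟨x₀, hx₀, hne⟩ := hcon
    have hx₀pos : 0 < F x₀ := lt_of_le_of_ne (hFnn x₀) (Ne.symm hne)
    have hopen : IsOpen {x | 0 < F x} := isOpen_lt continuous_const hFc
    have hsub : {x | 0 < F x} ∩ Set.Ioo (0:ℝ) 1 ⊆ Function.support F ∩ Set.Ioo (0:ℝ) 1 :=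
      fun y hy => ⟨ne_of_gt hy.1, hy.2⟩
    have hpos2 : 0 < volume (Function.support F ∩ Set.Ioo (0:ℝ) 1) :=
      lt_of_lt_of_le ((hopen.inter isOpen_Ioo).measure_pos volume ⟨x₀, hx₀pos, hx₀⟩)
        (measure_mono hsub)
    have := (setIntegral_pos_iff_support_of_nonneg_ae
      (ae_of_all _ (fun x => hFnn x) : 0 ≤ᵐ[volume.restrict (Set.Ioo (0:ℝ) 1)] F)
      hFint).2 hpos2
    linarith
  have hIoo' : ∀ x ∈ Set.Ioo (0:ℝ) 1, a + b * u t x ≤ 0 := by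
    intro x hx
    have h1 := hIoo x hx
    have h2 : max (a + b * u t x) 0 = 0 := by
      rcases mul_eq_zero.1 h1 with h | h
      · exact h
      · exact absurd h (hmpos x).ne'
    calc a + b * u t x ≤ max (a + b * u t x) 0 := le_max_left _ _
      _ = 0 := h2
  have hclosed : IsClosed {x : ℝ | a + b * u t x ≤ 0} :=
    isClosed_le (continuous_const.add (continuous_const.mul hucont)) continuous_const
  have hIcc : Set.Icc (0:ℝ) 1 ⊆ {x : ℝ | a + b * u t x ≤ 0} := by
    rw [← closure_Ioo (zero_ne_one)]
    exact hclosed.closure_subset_iff.2 hIoo'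
  intro x
  have hper : Function.Periodic (u t) 1 := fun y => huper t y
  have h1 : u t (x - (⌊x⌋ : ℝ) * 1) = u t x := hper.sub_int_mul_eq ⌊x⌋
  have h2 : x - (⌊x⌋ : ℝ) * 1 = Int.fract x := by rw [mul_one]; rfl
  rw [h2] at h1
  have h3 : Int.fract x ∈ Set.Icc (0:ℝ) 1 :=
    ⟨Int.fract_nonneg x, (Int.fract_lt_one x).le⟩
  have h4 := hIcc h3
  simpa [h1] using h4

theorem stmt5 (r : ℝ) (hr : 1 ≤ r)
    (m : ℝ → ℝ) (hm : ContDiff ℝ (⊤ : ℕ∞) m) (hmpos : ∀ x, 0 < m x)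
    (hmper : ∀ x, m (x + 1) = m x)
    (u : ℝ → ℝ → ℝ) (hu : ContDiff ℝ (⊤ : ℕ∞) (fun p : ℝ × ℝ => u p.1 p.2))
    (hupos : ∀ t x, 0 < u t x)
    (huper : ∀ t x, u t (x + 1) = u t x)
    (hPDE : ∀ t x,
      deriv (fun s => u s x) t =
        -((r + 1) * (1 / (2 ^ r * (r + 1))) / m x) *
          deriv (fun x' => m x' * deriv (fun x'' => (u t x'') ^ (-r)) x') x) :
    (∀ c : ℝ, 0 < c →
      AntitoneOn (fun t => ∫ x in Set.Ioo (0:ℝ) 1, max (c - u t x) 0 * m x)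
        (Set.Ici 0)) ∧
    (∀ c₀ C₀ : ℝ, 0 < c₀ → c₀ ≤ C₀ →
      (∀ x, c₀ ≤ u 0 x ∧ u 0 x ≤ C₀) →
      ∀ t, 0 ≤ t → ∀ x, c₀ ≤ u t x ∧ u t x ≤ C₀) := by
  have heq : ∀ c : ℝ, ∀ τ : ℝ,
      (∫ x in Set.Ioo (0:ℝ) 1, max (c - u τ x) 0 * m x)
        = ∫ x in Set.Ioo (0:ℝ) 1, max (c + (-1) * u τ x) 0 * m x := by
    intro c τ
    congr 1
    funext x
    congr 2
    ring
  constructor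
  · intro c _
    have h := key_max r hr m hm hmpos hmper u hu hupos huper hPDE c (-1)
    have h2 : Antitone (fun t => ∫ x in Set.Ioo (0:ℝ) 1, max (c - u t x) 0 * m x) := by
      intro s t hst
      simpa only [heq] using h hst
    exact h2.antitoneOn _
  · intro c₀ C₀ hc₀ hcC h0 t ht x
    have hmc : Continuous m := hm.continuous
    constructor
    · -- lower bound
      have h := key_max r hr m hm hmpos hmper u hu hupos huper hPDE c₀ (-1) ht
      have hI0 : (∫ x in Set.Ioo (0:ℝ) 1, max (c₀ + (-1) * u 0 x) 0 * m x) = 0 := by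
        have hz : ∀ y : ℝ, max (c₀ + (-1) * u 0 y) 0 * m y = 0 := by
          intro y
          have := (h0 y).1
          have : max (c₀ + (-1) * u 0 y) 0 = 0 := max_eq_right (by linarith)
          rw [this, zero_mul]
        simp only [hz]
        simp
      have hle : (∫ x in Set.Ioo (0:ℝ) 1, max (c₀ + (-1) * u t x) 0 * m x) ≤ 0 := by
        exact le_trans h hI0.le
      have := ptwise m hmc hmpos u hu huper t c₀ (-1) hle x
      linarith
    · -- upper bound
      have h := key_max r hr m hm hmpos hmper u hu hupos huper hPDE (-C₀) 1 ht
      have hI0 : (∫ x in Set.Ioo (0:ℝ) 1, max (-C₀ + 1 * u 0 x) 0 * m x) = 0 := by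
        have hz : ∀ y : ℝ, max (-C₀ + 1 * u 0 y) 0 * m y = 0 := by
          intro y
          have := (h0 y).2
          have : max (-C₀ + 1 * u 0 y) 0 = 0 := max_eq_right (by linarith)
          rw [this, zero_mul]
        simp only [hz]
        simp
      have hle : (∫ x in Set.Ioo (0:ℝ) 1, max (-C₀ + 1 * u t x) 0 * m x) ≤ 0 := by
        exact le_trans h hI0.le
      have := ptwise m hmc hmpos u hu huper t (-C₀) 1 hle x
      linarith
end

section
/- There exist a smooth probability density ρ on [0,1] with 0 < ρ ≤ 1 and a smooth function Y with Y(0)=Y(1)=0 such that the second variation of the functional F_ρ[X] = ∫_0^1 ρ(X)|∂_θX|³ dθ at the identity map X(θ) = θ in the direction Y is strictly negative. In particular F_ρ is not convex at the identity for every density ρ. -/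
open MeasureTheory

noncomputable def rhoF : ℝ → ℝ := fun x => (1 : ℝ)/1000 + ((999 : ℝ)/1000) * (4 * x * (1 - x)) ^ 4

noncomputable def YF : ℝ → ℝ := fun x => x * (1 - x) * ((x - 1/2) ^ 2 + 13/200)

noncomputable def YdF : ℝ → ℝ := fun x =>
  (1 * (1 - x) + x * (0 - 1)) * ((x - 1/2) ^ 2 + 13/200)
    + x * (1 - x) * ((2 : ℕ) * (x - 1/2) ^ 1 * 1)

noncomputable def QF : ℝ → ℝ := fun s => ((14243 : ℝ)/35000) + ((-85320419 : ℝ)/200200000000) * s ^ 2 + ((470870991 : ℝ)/12629804687500) * s ^ 4 + ((-1029723714309 : ℝ)/46477681250000000000) * s ^ 6 + ((1046756391850657 : ℝ)/64282208375000000000000000) * s ^ 8 + ((-8635758965574667981 : ℝ)/66853496710000000000000000000000) * s ^ 10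

noncomputable def Q1F : ℝ → ℝ := fun x => ((-85320419 : ℝ)/100100000000) * x ^ 1 + ((470870991 : ℝ)/3157451171875) * x ^ 3 + ((-3089171142927 : ℝ)/23238840625000000000) * x ^ 5 + ((1046756391850657 : ℝ)/8035276046875000000000000) * x ^ 7 + ((-8635758965574667981 : ℝ)/6685349671000000000000000000000) * x ^ 9

lemma hYdF (x : ℝ) : HasDerivAt YF (YdF x) x := by
  have h := ((hasDerivAt_id x).mul ((hasDerivAt_const x (1:ℝ)).sub (hasDerivAt_id x))).mul
      ((((hasDerivAt_id x).sub_const ((1:ℝ)/2)).pow 2).add_const ((13:ℝ)/200))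
  exact h.congr_deriv (by simp only [YdF, id_eq, Pi.mul_apply, Pi.sub_apply, Pi.pow_apply])

lemma sumint (L : ℕ → ℝ) (n : ℕ) :
    (∫ x in (0:ℝ)..1, ∑ i ∈ Finset.range n, L i * x ^ i)
      = ∑ i ∈ Finset.range n, L i / (i + 1) := by
  rw [intervalIntegral.integral_finset_sum (f := fun i x => L i * x ^ i)
    (fun i _ => ((continuous_const.mul (continuous_pow i)).intervalIntegrable 0 1))]
  refine Finset.sum_congr rfl fun i _ => ?_
  rw [intervalIntegral.integral_const_mul, integral_pow]
  norm_num [div_eq_mul_inv]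

lemma Yd_bound (x : ℝ) (hx0 : 0 ≤ x) (hx1 : x ≤ 1) : |YdF x| ≤ 1 := by
  rw [abs_le]
  constructor <;>
  · simp only [YdF]
    push_cast
    nlinarith [sq_nonneg (x - 1/2), sq_nonneg x, sq_nonneg (1 - x),
      mul_nonneg hx0 (sub_nonneg.2 hx1), sq_nonneg (x * (1 - x)),
      mul_nonneg (mul_nonneg hx0 hx0) hx0, sq_nonneg (x*(1-x)*(x-1/2))]

set_option maxHeartbeats 4000000 in
lemma key (s : ℝ) (hs : |s| < 1/2) :
    (∫ θ in Set.Ioo (0:ℝ) 1, rhoF (θ + s * YF θ) * |1 + s * deriv YF θ| ^ 3) = QF s := by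
  set L : ℕ → ℝ := fun i =>
    ([((1 : ℝ)/1000) + ((189 : ℝ)/200000) * s + ((11907 : ℝ)/40000000) * s ^ 2 + ((250047 : ℝ)/8000000000) * s ^ 3,
      ((-789 : ℝ)/100000) * s + ((-49707 : ℝ)/10000000) * s ^ 2 + ((-3131541 : ℝ)/4000000000) * s ^ 3,
      ((9 : ℝ)/500) * s + ((320907 : ℝ)/10000000) * s ^ 2 + ((16645041 : ℝ)/2000000000) * s ^ 3,
      ((-3 : ℝ)/250) * s + ((-639 : ℝ)/6250) * s ^ 2 + ((-49206347 : ℝ)/1000000000) * s ^ 3,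
      ((31968 : ℝ)/125) + ((1762236 : ℝ)/3125) * s + ((166584777 : ℝ)/312500) * s ^ 2 + ((6998774859 : ℝ)/25000000) * s ^ 3 + ((110160456273 : ℝ)/1250000000) * s ^ 4 + ((20820326235597 : ℝ)/1250000000000) * s ^ 5 + ((437226850947537 : ℝ)/250000000000000) * s ^ 6 + ((3935041658527833 : ℝ)/50000000000000000) * s ^ 7,
      ((-127872 : ℝ)/125) + ((-18565416 : ℝ)/3125) * s + ((-718625916 : ℝ)/78125) * s ^ 2 + ((-424775756019 : ℝ)/62500000) * s ^ 3 + ((-109660862367 : ℝ)/39062500) * s ^ 4 + ((-421458168492459 : ℝ)/625000000000) * s ^ 5 + ((-5660154403763013 : ℝ)/62500000000000) * s ^ 6 + ((-145096853535875493 : ℝ)/25000000000000000) * s ^ 7 + ((-247907624487253479 : ℝ)/2500000000000000000) * s ^ 8,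
      ((191808 : ℝ)/125) + ((80615304 : ℝ)/3125) * s + ((5410215123 : ℝ)/78125) * s ^ 2 + ((1156465008657 : ℝ)/15625000) * s ^ 3 + ((63559252643481 : ℝ)/1562500000) * s ^ 4 + ((3901941064285803 : ℝ)/312500000000) * s ^ 5 + ((265968431293211829 : ℝ)/125000000000000) * s ^ 6 + ((4557298748731120539 : ℝ)/25000000000000000) * s ^ 7 + ((29461656897397885671 : ℝ)/5000000000000000000) * s ^ 8 + ((46854541028090907531 : ℝ)/1000000000000000000000) * s ^ 9,
      ((-127872 : ℝ)/125) + ((-188035776 : ℝ)/3125) * s + ((-23523910542 : ℝ)/78125) * s ^ 2 + ((-375763648773 : ℝ)/781250) * s ^ 3 + ((-279469584033633 : ℝ)/781250000) * s ^ 4 + ((-5523676910674209 : ℝ)/39062500000) * s ^ 5 + ((-953048168775276777 : ℝ)/31250000000000) * s ^ 6 + ((-529161716109202281 : ℝ)/156250000000000) * s ^ 7 + ((-406878872762289750039 : ℝ)/2500000000000000000) * s ^ 8 + ((-332444124437406915339 : ℝ)/125000000000000000000) * s ^ 9 + ((-983945361589909058151 : ℝ)/100000000000000000000000) * s ^ 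10,
      ((31968 : ℝ)/125) + ((255620124 : ℝ)/3125) * s + ((131236700931 : ℝ)/156250) * s ^ 2 + ((13052910714111 : ℝ)/6250000) * s ^ 3 + ((536365297749051 : ℝ)/250000000) * s ^ 4 + ((1379230815867098607 : ℝ)/1250000000000) * s ^ 5 + ((75391445032093121841 : ℝ)/250000000000000) * s ^ 6 + ((85429761520606678917 : ℝ)/2000000000000000) * s ^ 7 + ((5599133962608136720833 : ℝ)/2000000000000000000) * s ^ 8 + ((143182271321731581091677 : ℝ)/2000000000000000000000) * s ^ 9 + ((224417633344212750104313 : ℝ)/400000000000000000000000) * s ^ 10 + ((61988557780164270663513 : ℝ)/80000000000000000000000000) * s ^ 11,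
      ((-203324472 : ℝ)/3125) * s + ((-24585625764 : ℝ)/15625) * s ^ 2 + ((-20046194538401 : ℝ)/3125000) * s ^ 3 + ((-2916896898415869 : ℝ)/312500000) * s ^ 4 + ((-3954274431821666847 : ℝ)/625000000000) * s ^ 5 + ((-137551382250426149103 : ℝ)/62500000000000) * s ^ 6 + ((-9863252927374095733743 : ℝ)/25000000000000000) * s ^ 7 + ((-16924419711339534384669 : ℝ)/500000000000000000) * s ^ 8 + ((-243959138665207817598369 : ℝ)/200000000000000000000) * s ^ 9 + ((-152978589010969889567841 : ℝ)/10000000000000000000000) * s ^ 10 + ((-1811443410687022576055991 : ℝ)/40000000000000000000000000) * s ^ 11,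
      ((703296 : ℝ)/25) * s + ((156831647364 : ℝ)/78125) * s ^ 2 + ((112219430934303 : ℝ)/7812500) * s ^ 3 + ((19089168493352877 : ℝ)/625000000) * s ^ 4 + ((17330830255904608053 : ℝ)/625000000000) * s ^ 5 + ((96594068056776730677 : ℝ)/7812500000000) * s ^ 6 + ((8743437322877839543227 : ℝ)/3125000000000000) * s ^ 7 + ((1537391430952469033492691 : ℝ)/5000000000000000000) * s ^ 8 + ((2961811939573397529372411 : ℝ)/200000000000000000000) * s ^ 9 + ((26603463774179352068431101 : ℝ)/100000000000000000000000) * s ^ 10 + ((12719586634715495970471393 : ℝ)/10000000000000000000000000) * s ^ 11,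
      ((-127872 : ℝ)/25) * s + ((-5387183424 : ℝ)/3125) * s ^ 2 + ((-92849992891173 : ℝ)/3906250) * s ^ 3 + ((-120014939479295151 : ℝ)/1562500000) * s ^ 4 + ((-14887948985712856593 : ℝ)/156250000000) * s ^ 5 + ((-3437095342767384490479 : ℝ)/62500000000000) * s ^ 6 + ((-98301577527156943527867 : ℝ)/6250000000000000) * s ^ 7 + ((-5471095141362022405945551 : ℝ)/2500000000000000000) * s ^ 8 + ((-34171891794509951208564873 : ℝ)/250000000000000000000) * s ^ 9 + ((-331976358430771093299778959 : ℝ)/100000000000000000000000) * s ^ 10 + ((-228934070722152292591274733 : ℝ)/10000000000000000000000000) * s ^ 11,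
      ((2982710304 : ℝ)/3125) * s ^ 2 + ((2272699000026 : ℝ)/78125) * s ^ 3 + ((469456655200300917 : ℝ)/3125000000) * s ^ 4 + ((163104619692825630963 : ℝ)/625000000000) * s ^ 5 + ((3085098542633325119193 : ℝ)/15625000000000) * s ^ 6 + ((895929064795501640468703 : ℝ)/12500000000000000) * s ^ 7 + ((31394177128340861997979089 : ℝ)/2500000000000000000) * s ^ 8 + ((124879321176180386994165771 : ℝ)/125000000000000000000) * s ^ 9 + ((6340622935134684239746380909 : ℝ)/200000000000000000000000) * s ^ 10 + ((11880773381525977443488378139 : ℝ)/40000000000000000000000000) * s ^ 11,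
      ((-38489472 : ℝ)/125) * s ^ 2 + ((-2032749212004 : ℝ)/78125) * s ^ 3 + ((-896411482945263 : ℝ)/3906250) * s ^ 4 + ((-179860462318808219151 : ℝ)/312500000000) * s ^ 5 + ((-36246868090461289626381 : ℝ)/62500000000000) * s ^ 6 + ((-1681775797213502920535571 : ℝ)/6250000000000000) * s ^ 7 + ((-7411197444891668529452397 : ℝ)/125000000000000000) * s ^ 8 + ((-1486145378153230928426051199 : ℝ)/250000000000000000000) * s ^ 9 + ((-24125955213077608086545422941 : ℝ)/100000000000000000000000) * s ^ 10 + ((-59242704427653644746233528759 : ℝ)/20000000000000000000000000) * s ^ 11,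
      ((5498496 : ℝ)/125) * s ^ 2 + ((10335669984 : ℝ)/625) * s ^ 3 + ((1066648848825609 : ℝ)/3906250) * s ^ 4 + ((160546870641603177 : ℝ)/156250000) * s ^ 5 + ((87884744850154521273483 : ℝ)/62500000000000) * s ^ 6 + ((131563067479846278743889 : ℝ)/156250000000000) * s ^ 7 + ((116889845400949196355634611 : ℝ)/500000000000000000) * s ^ 8 + ((2937377112463876653209873493 : ℝ)/100000000000000000000) * s ^ 9 + ((469969002916250983766123517 : ℝ)/312500000000000000000) * s ^ 10 + ((472860411079059809283509045469 : ℝ)/20000000000000000000000000) * s ^ 11,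
      ((-22107214656 : ℝ)/3125) * s ^ 3 + ((-19573970100336 : ℝ)/78125) * s ^ 4 + ((-580494602610851859 : ℝ)/390625000) * s ^ 5 + ((-55267554481456421763 : ℝ)/19531250000) * s ^ 6 + ((-864943108197067785119913 : ℝ)/390625000000000) * s ^ 7 + ((-972926299974031600111076007 : ℝ)/1250000000000000000) * s ^ 8 + ((-764397591724176125617511091 : ℝ)/6250000000000000000) * s ^ 9 + ((-391612571939624844271453706583 : ℝ)/50000000000000000000000) * s ^ 10 + ((-97032817795517264693341147293 : ℝ)/625000000000000000000000) * s ^ 11,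
      ((45650304 : ℝ)/25) * s ^ 3 + ((13580305158942 : ℝ)/78125) * s ^ 4 + ((13555779181369101 : ℝ)/7812500) * s ^ 5 + ((740224586081309844213 : ℝ)/156250000000) * s ^ 6 + ((307546636858607076209757 : ℝ)/62500000000000) * s ^ 7 + ((22058302787307495909111598407 : ℝ)/10000000000000000000) * s ^ 8 + ((867638078940585771547085017467 : ℝ)/2000000000000000000000) * s ^ 9 + ((13832695017784646948938550550021 : ℝ)/400000000000000000000000) * s ^ 10 + ((68438892654522363900009266554329 : ℝ)/80000000000000000000000000) * s ^ 11,
      ((-5370624 : ℝ)/25) * s ^ 3 + ((-275529986208 : ℝ)/3125) * s ^ 4 + ((-6335967107130453 : ℝ)/3906250) * s ^ 5 + ((-10304896716324056691 : ℝ)/1562500000) * s ^ 6 + ((-289711513896992674099821 : ℝ)/31250000000000) * s ^ 7 + ((-33449460722514079685427627 : ℝ)/6250000000000000) * s ^ 8 + ((-1321693390230171423131735450451 : ℝ)/1000000000000000000000) * s ^ 9 + ((-13089032330921631433885743297621 : ℝ)/100000000000000000000000) * s ^ 10 + ((-160580007035632585688829680780019 : ℝ)/40000000000000000000000000) * s ^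 11,
      ((96364626912 : ℝ)/3125) * s ^ 4 + ((93484553296572 : ℝ)/78125) * s ^ 5 + ((11887527485658130299 : ℝ)/1562500000) * s ^ 6 + ((144761330341267084071 : ℝ)/9765625000) * s ^ 7 + ((69745189201539053158140903 : ℝ)/6250000000000000) * s ^ 8 + ((17398581009168774829828940451 : ℝ)/5000000000000000000) * s ^ 9 + ((42828614818138685956032416397069 : ℝ)/100000000000000000000000) * s ^ 10 + ((324491039459044721877033688273047 : ℝ)/20000000000000000000000000) * s ^ 11,
      ((-166105728 : ℝ)/25) * s ^ 4 + ((-53196981392376 : ℝ)/78125) * s ^ 5 + ((-2821538293559784 : ℝ)/390625) * s ^ 6 + ((-392503886654238263061 : ℝ)/19531250000) * s ^ 7 + ((-125238548712671035834833 : ℝ)/6250000000000) * s ^ 8 + ((-19877898557574035596402908129 : ℝ)/2500000000000000000) * s ^ 9 + ((-15241286670127413308369570997 : ℝ)/12500000000000000000) * s ^ 10 + ((-569638339600214736136377664509213 : ℝ)/10000000000000000000000000) * s ^ 11,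
      ((83052864 : ℝ)/125) * s ^ 4 + ((900733029336 : ℝ)/3125) * s ^ 5 + ((10903590082795617 : ℝ)/1953125) * s ^ 6 + ((7195846385337824403 : ℝ)/312500000) * s ^ 7 + ((1937662375156937323771833 : ℝ)/62500000000000) * s ^ 8 + ((197668017405909877702551669 : ℝ)/12500000000000000) * s ^ 9 + ((379340410993530957649498841397 : ℝ)/125000000000000000000) * s ^ 10 + ((8745649523453796490258714761597 : ℝ)/50000000000000000000000) * s ^ 11,
      ((-266953147632 : ℝ)/3125) * s ^ 5 + ((-269935026394374 : ℝ)/78125) * s ^ 6 + ((-3464974750020643143 : ℝ)/156250000) * s ^ 7 + ((-1290139611278189838651 : ℝ)/31250000000) * s ^ 8 + ((-171343108585699628790982689 : ℝ)/6250000000000000) * s ^ 9 + ((-258823816268023709410831857 : ℝ)/39062500000000000) * s ^ 10 + ((-11803674310102872543372041011257 : ℝ)/25000000000000000000000) * s ^ 11,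
      ((1976389632 : ℝ)/125) * s ^ 5 + ((130542080812434 : ℝ)/78125) * s ^ 6 + ((6952086811190952 : ℝ)/390625) * s ^ 7 + ((1474639101877078286541 : ℝ)/31250000000) * s ^ 8 + ((323748615198901544414253 : ℝ)/7812500000000) * s ^ 9 + ((248421614694372573631412031 : ℝ)/19531250000000000) * s ^ 10 + ((70295126038647539038665148431 : ℝ)/62500000000000000000) * s ^ 11,
      ((-171859968 : ℝ)/125) * s ^ 5 + ((-1900294411392 : ℝ)/3125) * s ^ 6 + ((-4592642891220648 : ℝ)/390625) * s ^ 7 + ((-7200679070279280483 : ℝ)/156250000) * s ^ 8 + ((-53282167567227768274659 : ℝ)/976562500000) * s ^ 9 + ((-16790281649560432866588813 : ℝ)/781250000000000) * s ^ 10 + ((-74093961089628941543635534497 : ℝ)/31250000000000000000) * s ^ 11,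
      ((489266627616 : ℝ)/3125) * s ^ 6 + ((19630341266742 : ℝ)/3125) * s ^ 7 + ((23871355044977566161 : ℝ)/625000000) * s ^ 8 + ((1560662690696582636169 : ℝ)/25000000000) * s ^ 9 + ((99902712740858176750237521 : ℝ)/3125000000000000) * s ^ 10 + ((110781519689604474262404153 : ℝ)/25000000000000000) * s ^ 11,
      ((-3176724096 : ℝ)/125) * s ^ 6 + ((-206727278703084 : ℝ)/78125) * s ^ 7 + ((-103942218410755569 : ℝ)/3906250) * s ^ 8 + ((-19323677718834344712369 : ℝ)/312500000000) * s ^ 9 + ((-1307073786085501988516739 : ℝ)/31250000000000) * s ^ 10 + ((-2296572891062540099777454303 : ℝ)/312500000000000000) * s ^ 11,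
      ((244363392 : ℝ)/125) * s ^ 6 + ((2642701469184 : ℝ)/3125) * s ^ 7 + ((60075953440556913 : ℝ)/3906250) * s ^ 8 + ((82402898141799743931 : ℝ)/1562500000) * s ^ 9 + ((1501190184813087918000303 : ℝ)/31250000000000) * s ^ 10 + ((67601082433143734269894773 : ℝ)/6250000000000000) * s ^ 11,
      ((-601998614784 : ℝ)/3125) * s ^ 7 + ((-565667207842716 : ℝ)/78125) * s ^ 8 + ((-30029127122301037353 : ℝ)/781250000) * s ^ 9 + ((-942990444457204482477 : ℝ)/19531250000) * s ^ 10 + ((-44113503722467221850477599 : ℝ)/3125000000000000) * s ^ 11,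
      ((3482082432 : ℝ)/125) * s ^ 7 + ((211338162094194 : ℝ)/78125) * s ^ 8 + ((185144817450181221 : ℝ)/7812500) * s ^ 9 + ((1651391874016215388461 : ℝ)/39062500000) * s ^ 10 + ((254844655003182964567527 : ℝ)/15625000000000) * s ^ 11,
      ((-240143616 : ℝ)/125) * s ^ 7 + ((-482116792608 : ℝ)/625) * s ^ 8 + ((-47625165951960249 : ℝ)/3906250) * s ^ 9 + ((-2504324971652317227 : ℝ)/78125000) * s ^ 10 + ((-129997091491135852438863 : ℝ)/7812500000000) * s ^ 11,
      ((492693277536 : ℝ)/3125) * s ^ 8 + ((401284918538856 : ℝ)/78125) * s ^ 9 + ((8156199049045333209 : ℝ)/390625000) * s ^ 10 + ((1166752135086555931371 : ℝ)/78125000000) * s ^ 11,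
      ((-102809088 : ℝ)/5) * s ^ 8 + ((-134821829661552 : ℝ)/78125) * s ^ 9 + ((-22579040275498584 : ℝ)/1953125) * s ^ 10 + ((-458362430058778969941 : ℝ)/39062500000) * s ^ 11,
      ((6425568 : ℝ)/5) * s ^ 8 + ((1389239182188 : ℝ)/3125) * s ^ 9 + ((20955050857242873 : ℝ)/3906250) * s ^ 10 + ((6264875976805197873 : ℝ)/781250000) * s ^ 11,
      ((-257604066072 : ℝ)/3125) * s ^ 9 + ((-159912129995802 : ℝ)/78125) * s ^ 10 + ((-1846429300222468731 : ℝ)/390625000) * s ^ 11,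
      ((244810944 : ℝ)/25) * s ^ 9 + ((48844934066106 : ℝ)/78125) * s ^ 10 + ((3714396491950443 : ℝ)/1562500) * s ^ 11,
      ((-69945984 : ℝ)/125) * s ^ 9 + ((-459211752576 : ℝ)/3125) * s ^ 10 + ((-3927679058781549 : ℝ)/3906250) * s ^ 11,
      ((77949940032 : ℝ)/3125) * s ^ 10 + ((27408544575444 : ℝ)/78125) * s ^ 11,
      ((-68027904 : ℝ)/25) * s ^ 10 + ((-7678793895624 : ℝ)/78125) * s ^ 11,
      ((3580416 : ℝ)/25) * s ^ 10 + ((66402842688 : ℝ)/3125) * s ^ 11,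
      ((-10395609984 : ℝ)/3125) * s ^ 11,
      ((41942016 : ℝ)/125) * s ^ 11,
      ((-2045952 : ℝ)/125) * s ^ 11] : List ℝ).getD i 0 with hL
  have habs : ∀ θ : ℝ, 0 ≤ θ → θ ≤ 1 → |1 + s * YdF θ| = 1 + s * YdF θ := by
    intro θ h0 h1
    have hb := Yd_bound θ h0 h1
    have h2 : |s * YdF θ| ≤ 1/2 := by
      rw [abs_mul]
      calc |s| * |YdF θ| ≤ (1/2) * 1 := by
            apply mul_le_mul hs.le hb (abs_nonneg _) (by norm_num)
        _ = 1/2 := by norm_num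
    have h3 := neg_abs_le (s * YdF θ)
    rw [abs_of_pos]
    linarith
  have h1 : ∀ θ ∈ Set.Ioo (0:ℝ) 1,
      rhoF (θ + s * YF θ) * |1 + s * deriv YF θ| ^ 3
        = ∑ i ∈ Finset.range 42, L i * θ ^ i := by
    intro θ hθ
    rw [(hYdF θ).deriv, habs θ hθ.1.le hθ.2.le]
    simp only [hL, Finset.sum_range_succ, Finset.sum_range_zero,
      List.getD_cons_zero, List.getD_cons_succ, rhoF, YF, YdF]
    push_cast
    ring
  calc (∫ θ in Set.Ioo (0:ℝ) 1, rhoF (θ + s * YF θ) * |1 + s * deriv YF θ| ^ 3)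
      = ∫ θ in Set.Ioo (0:ℝ) 1, ∑ i ∈ Finset.range 42, L i * θ ^ i :=
        setIntegral_congr_fun measurableSet_Ioo h1
    _ = ∫ θ in Set.Ioc (0:ℝ) 1, ∑ i ∈ Finset.range 42, L i * θ ^ i :=
        (integral_Ioc_eq_integral_Ioo).symm
    _ = ∫ θ in (0:ℝ)..1, ∑ i ∈ Finset.range 42, L i * θ ^ i :=
        (intervalIntegral.integral_of_le zero_le_one).symm
    _ = ∑ i ∈ Finset.range 42, L i / (i + 1) := sumint L 42
    _ = QF s := by
        simp only [hL, Finset.sum_range_succ, Finset.sum_range_zero,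
          List.getD_cons_zero, List.getD_cons_succ, QF]
        push_cast
        ring

/-- There exist a smooth density `ρ` on `[0,1]` with `0 < ρ ≤ 1` and a smooth
direction `Y` vanishing at the endpoints along which the second variation of
`F_ρ[X] = ∫ ρ(X)|∂_θ X|³` at the identity is strictly negative; in particular
`F_ρ` fails to be convex at the identity. -/
theorem stmt9 :
    ∃ (ρ Y : ℝ → ℝ),
      ContDiff ℝ (⊤ : ℕ∞) ρ ∧
      (∀ θ ∈ Set.Icc (0:ℝ) 1, 0 < ρ θ ∧ ρ θ ≤ 1) ∧
      ContDiff ℝ (⊤ : ℕ∞) Y ∧ Y 0 = 0 ∧ Y 1 = 0 ∧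
      iteratedDeriv 2
          (fun s => ∫ θ in Set.Ioo (0:ℝ) 1,
            ρ (θ + s * Y θ) * |1 + s * deriv Y θ| ^ 3) 0 < 0 := by
  refine ⟨rhoF, YF, ?_, ?_, ?_, ?_, ?_, ?_⟩
  · unfold rhoF; fun_prop
  · intro θ hθ
    obtain ⟨h0, h1⟩ := hθ
    constructor
    · simp only [rhoF]
      nlinarith [sq_nonneg ((4 * θ * (1 - θ)) ^ 2)]
    · simp only [rhoF]
      have ht0 : 0 ≤ 4 * θ * (1 - θ) := by nlinarith
      have ht1 : 4 * θ * (1 - θ) ≤ 1 := by nlinarith [sq_nonneg (2 * θ - 1)]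
      have h2 : (4 * θ * (1 - θ)) ^ 2 ≤ 1 := by nlinarith
      have h4 : (4 * θ * (1 - θ)) ^ 4 ≤ 1 := by
        nlinarith [sq_nonneg (4 * θ * (1 - θ)), mul_nonneg (sq_nonneg (4 * θ * (1 - θ))) (sub_nonneg.2 h2)]
      linarith
  · unfold YF; fun_prop
  · simp [YF]
  · simp [YF]
  · have hev : (fun s => ∫ θ in Set.Ioo (0:ℝ) 1,
        rhoF (θ + s * YF θ) * |1 + s * deriv YF θ| ^ 3) =ᶠ[nhds 0] QF := by
      filter_upwards [Metric.ball_mem_nhds (0:ℝ) (by norm_num : (0:ℝ) < 1/2)] with s hs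
      exact key s (by simpa [Real.dist_eq] using hs)
    rw [hev.iteratedDeriv_eq 2]
    have hQ : ∀ x : ℝ, HasDerivAt QF (Q1F x) x := by
      intro x
      have h := ((((((hasDerivAt_const x (((14243 : ℝ)/35000))).add ((hasDerivAt_pow 2 x).const_mul (((-85320419 : ℝ)/200200000000)))).add ((hasDerivAt_pow 4 x).const_mul (((470870991 : ℝ)/12629804687500)))).add ((hasDerivAt_pow 6 x).const_mul (((-1029723714309 : ℝ)/46477681250000000000)))).add ((hasDerivAt_pow 8 x).const_mul (((1046756391850657 : ℝ)/64282208375000000000000000)))).add ((hasDerivAt_pow 10 x).const_mul (((-8635758965574667981 : ℝ)/66853496710000000000000000000000))))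
      refine h.congr_deriv ?_
      simp only [Q1F]
      push_cast
      ring
    have hdQ : deriv QF = Q1F := funext fun x => (hQ x).deriv
    have hQ1 : HasDerivAt Q1F (((-85320419 : ℝ)/100100000000)) 0 := by
      have h := ((((((hasDerivAt_pow 1 (0:ℝ)).const_mul (((-85320419 : ℝ)/100100000000))).add ((hasDerivAt_pow 3 (0:ℝ)).const_mul (((470870991 : ℝ)/3157451171875)))).add ((hasDerivAt_pow 5 (0:ℝ)).const_mul (((-3089171142927 : ℝ)/23238840625000000000)))).add ((hasDerivAt_pow 7 (0:ℝ)).const_mul (((1046756391850657 : ℝ)/8035276046875000000000000)))).add ((hasDerivAt_pow 9 (0:ℝ)).const_mul (((-8635758965574667981 : ℝ)/6685349671000000000000000000000))))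
      refine h.congr_deriv ?_
      push_cast
      ring
    have h2 : iteratedDeriv 2 QF 0 = deriv (deriv QF) 0 := by
      rw [iteratedDeriv_succ, iteratedDeriv_one]
    rw [h2, hdQ, hQ1.deriv]
    norm_num
end

section
/- Let u, m > 0 with u smooth and periodic solving ∂_t u = −((r+1)C_r/m) ∂_x(m ∂_x(u^{−r})). If both 0 < λ ≤ ρ ≤ 1/λ and 0 < a₀ ≤ ∂_θ X(0,·) ≤ A₀ hold, where X solves the Lagrangian gradient-flow PDE ∂_t X = C_r((r+1)∂_θ(ρ(X)|∂_θX|^{r−1}∂_θX) − ρ'(X)|∂_θX|^{r+1}) with X(t,0)=0, X(t,1)=1, then there exist constants 0 < b₀ ≤ B₀ depending only on λ, a₀, A₀ such that b₀ ≤ ∂_θ X(t,·) ≤ B₀ for all t ≥ 0. -/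
open MeasureTheory Filter Set


open Filter Set

/-- Partial derivative in the first variable, as a `HasDerivAt`. -/
lemma pd1 {E : Type*} [NormedAddCommGroup E] [NormedSpace ℝ E] {G : ℝ × ℝ → E} {p : ℝ × ℝ}
    (h : DifferentiableAt ℝ G p) :
    HasDerivAt (fun s => G (s, p.2)) (fderiv ℝ G p (1, 0)) p.1 := by
  have hγ : HasDerivAt (fun s : ℝ => (s, p.2)) ((1 : ℝ), (0 : ℝ)) p.1 :=
    (hasDerivAt_id p.1).prodMk (hasDerivAt_const p.1 p.2)
  have := h.hasFDerivAt.comp_hasDerivAt p.1 (by simpa using hγ)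
  exact this

/-- Partial derivative in the second variable, as a `HasDerivAt`. -/
lemma pd2 {E : Type*} [NormedAddCommGroup E] [NormedSpace ℝ E] {G : ℝ × ℝ → E} {p : ℝ × ℝ}
    (h : DifferentiableAt ℝ G p) :
    HasDerivAt (fun θ => G (p.1, θ)) (fderiv ℝ G p (0, 1)) p.2 := by
  have hγ : HasDerivAt (fun θ : ℝ => (p.1, θ)) ((0 : ℝ), (1 : ℝ)) p.2 :=
    (hasDerivAt_const p.2 p.1).prodMk (hasDerivAt_id p.2)
  have := h.hasFDerivAt.comp_hasDerivAt p.2 (by simpa using hγ)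
  exact this
open Filter Set

lemma dirderiv_contDiff {F : ℝ × ℝ → ℝ} (hF : ContDiff ℝ (⊤ : ℕ∞) F) (w : ℝ × ℝ) :
    ContDiff ℝ (⊤ : ℕ∞) (fun p => fderiv ℝ F p w) :=
  (hF.fderiv_right (by simp)).clm_apply contDiff_const

lemma schwarz {F : ℝ × ℝ → ℝ} (hF : ContDiff ℝ (⊤ : ℕ∞) F) (p w₁ w₂ : ℝ × ℝ) :
    fderiv ℝ (fun q => fderiv ℝ F q w₁) p w₂ =
      fderiv ℝ (fun q => fderiv ℝ F q w₂) p w₁ := by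
  have hd : ∀ y, HasFDerivAt F (fderiv ℝ F y) y :=
    fun y => (hF.differentiable (by simp) y).hasFDerivAt
  have hd2 : HasFDerivAt (fderiv ℝ F) (fderiv ℝ (fderiv ℝ F) p) p :=
    (((hF.fderiv_right (m := 1) (by exact WithTop.coe_le_coe.mpr le_top)).differentiable one_ne_zero) p).hasFDerivAt
  have hsymm := second_derivative_symmetric hd hd2 w₁ w₂
  have e1 : HasFDerivAt (fun q => fderiv ℝ F q w₁)
      ((ContinuousLinearMap.apply ℝ ℝ w₁).comp (fderiv ℝ (fderiv ℝ F) p)) p :=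
    (ContinuousLinearMap.apply ℝ ℝ w₁).hasFDerivAt.comp p hd2
  have e2 : HasFDerivAt (fun q => fderiv ℝ F q w₂)
      ((ContinuousLinearMap.apply ℝ ℝ w₂).comp (fderiv ℝ (fderiv ℝ F) p)) p :=
    (ContinuousLinearMap.apply ℝ ℝ w₂).hasFDerivAt.comp p hd2
  rw [e1.fderiv, e2.fderiv]
  simpa using hsymm.symm
open Filter Set

/-- One-sided second derivative test at a max over `Icc 0 1`, incl. boundary points,
assuming the first derivative vanishes there. -/
lemma secondDeriv_nonpos_of_isMaxOn {g h h' : ℝ → ℝ} {θ₀ : ℝ}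
    (hθ₀ : θ₀ ∈ Icc (0:ℝ) 1)
    (hg : ∀ θ ∈ Icc (0:ℝ) 1, HasDerivAt g (h θ) θ)
    (hh : ∀ θ, HasDerivAt h (h' θ) θ)
    (hh'c : Continuous h')
    (hmax : IsMaxOn g (Icc (0:ℝ) 1) θ₀) (h0 : h θ₀ = 0) : h' θ₀ ≤ 0 := by
  by_contra hq
  push_neg at hq
  have hs : IsOpen {x | 0 < h' x} := isOpen_lt continuous_const hh'c
  obtain ⟨ε, hε, hball⟩ := Metric.isOpen_iff.mp hs θ₀ hq
  have hcontg : ∀ x ∈ Icc (0:ℝ) 1, ContinuousAt g x := fun x hx => (hg x hx).continuousAt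
  have hconth : Continuous h := by
    have : Differentiable ℝ h := fun x => (hh x).differentiableAt
    exact this.continuous
  rcases lt_or_eq_of_le hθ₀.2 with hlt | heq
  · -- θ₀ < 1 : work on the right side
    set δ : ℝ := min (ε / 2) (1 - θ₀) with hδdef
    have hδpos : 0 < δ := lt_min (by linarith) (by linarith)
    have hsub : Icc θ₀ (θ₀ + δ) ⊆ Icc (0:ℝ) 1 := by
      intro x hx
      constructor
      · linarith [hθ₀.1, hx.1]
      · have : δ ≤ 1 - θ₀ := min_le_right _ _
        linarith [hx.2]
    have hpos : ∀ x ∈ Icc θ₀ (θ₀ + δ), 0 < h' x := by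
      intro x hx
      apply hball
      rw [Metric.mem_ball, Real.dist_eq, abs_lt]
      have : δ ≤ ε / 2 := min_le_left _ _
      constructor <;> [linarith [hx.1]; linarith [hx.2]]
    have hmono : StrictMonoOn h (Icc θ₀ (θ₀ + δ)) := by
      apply strictMonoOn_of_deriv_pos (convex_Icc _ _) hconth.continuousOn
      intro x hx
      rw [interior_Icc] at hx
      rw [(hh x).deriv]
      exact hpos x ⟨le_of_lt hx.1, le_of_lt hx.2⟩
    have hhpos : ∀ x ∈ Ioc θ₀ (θ₀ + δ), 0 < h x := by
      intro x hx
      have := hmono ⟨le_refl _, by linarith [hδpos]⟩ ⟨le_of_lt hx.1, hx.2⟩ hx.1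
      rw [h0] at this
      exact this
    have hgmono : StrictMonoOn g (Icc θ₀ (θ₀ + δ)) := by
      apply strictMonoOn_of_deriv_pos (convex_Icc _ _)
      · exact fun x hx => ((hg x (hsub hx)).continuousAt).continuousWithinAt
      · intro x hx
        rw [interior_Icc] at hx
        rw [(hg x (hsub ⟨le_of_lt hx.1, le_of_lt hx.2⟩)).deriv]
        exact hhpos x ⟨hx.1, le_of_lt hx.2⟩
    have : g θ₀ < g (θ₀ + δ) :=
      hgmono ⟨le_refl _, by linarith⟩ ⟨by linarith, le_refl _⟩ (by linarith)
    have := hmax (hsub ⟨by linarith, le_refl _⟩)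
    simp only [Set.mem_setOf_eq] at this
    linarith
  · -- θ₀ = 1 : work on the left side
    subst heq
    set δ : ℝ := min (ε / 2) 1 with hδdef
    have hδpos : 0 < δ := lt_min (by linarith) one_pos
    have hδle : δ ≤ 1 := min_le_right _ _
    have hsub : Icc (1 - δ) 1 ⊆ Icc (0:ℝ) 1 := by
      intro x hx
      exact ⟨by linarith [hx.1], hx.2⟩
    have hpos : ∀ x ∈ Icc (1 - δ) 1, 0 < h' x := by
      intro x hx
      apply hball
      rw [Metric.mem_ball, Real.dist_eq, abs_lt]
      have : δ ≤ ε / 2 := min_le_left _ _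
      constructor <;> [linarith [hx.1]; linarith [hx.2]]
    have hmono : StrictMonoOn h (Icc (1 - δ) 1) := by
      apply strictMonoOn_of_deriv_pos (convex_Icc _ _) hconth.continuousOn
      intro x hx
      rw [interior_Icc] at hx
      rw [(hh x).deriv]
      exact hpos x ⟨le_of_lt hx.1, le_of_lt hx.2⟩
    have hhneg : ∀ x ∈ Ico (1 - δ) 1, h x < 0 := by
      intro x hx
      have := hmono ⟨hx.1, le_of_lt hx.2⟩ ⟨by linarith [hδpos], le_refl _⟩ hx.2
      rw [h0] at this
      exact this
    have hganti : StrictAntiOn g (Icc (1 - δ) 1) := by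
      apply strictAntiOn_of_deriv_neg (convex_Icc _ _)
      · exact fun x hx => ((hg x (hsub hx)).continuousAt).continuousWithinAt
      · intro x hx
        rw [interior_Icc] at hx
        rw [(hg x (hsub ⟨le_of_lt hx.1, le_of_lt hx.2⟩)).deriv]
        exact hhneg x ⟨le_of_lt hx.1, hx.2⟩
    have : g 1 < g (1 - δ) :=
      hganti ⟨le_refl _, by linarith⟩ ⟨by linarith, le_refl _⟩ (by linarith)
    have := hmax (hsub ⟨le_refl _, by linarith⟩)
    simp only [Set.mem_setOf_eq] at this
    linarith

/-- An elementary parabolic maximum principle on `[0,T] × [0,1]` with Neumann-type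
structure: `q` is the spatial derivative of `Gf`, `q'` its spatial derivative,
`gt'` the time derivative; `q` vanishes at the lateral boundary; and at any spatial
critical point with nonpositive second derivative the time derivative is nonpositive. -/
lemma maxprin {T M : ℝ} {Gf q q' gt' : ℝ → ℝ → ℝ} (hT : 0 ≤ T)
    (hcont : ContinuousOn (fun p : ℝ × ℝ => Gf p.1 p.2) (Icc 0 T ×ˢ Icc 0 1))
    (hspace : ∀ s ∈ Icc (0:ℝ) T, ∀ θ ∈ Icc (0:ℝ) 1, HasDerivAt (Gf s) (q s θ) θ)
    (hq : ∀ s ∈ Icc (0:ℝ) T, ∀ θ, HasDerivAt (q s) (q' s θ) θ)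
    (hq'c : ∀ s, Continuous (q' s))
    (htime : ∀ s ∈ Icc (0:ℝ) T, ∀ θ ∈ Icc (0:ℝ) 1, HasDerivAt (fun τ => Gf τ θ) (gt' s θ) s)
    (hbdry : ∀ s ∈ Icc (0:ℝ) T, q s 0 = 0 ∧ q s 1 = 0)
    (hsign : ∀ s ∈ Icc (0:ℝ) T, ∀ θ ∈ Icc (0:ℝ) 1, q s θ = 0 → q' s θ ≤ 0 → gt' s θ ≤ 0)
    (hinitM : ∀ θ ∈ Icc (0:ℝ) 1, Gf 0 θ ≤ M) :
    ∀ s ∈ Icc (0:ℝ) T, ∀ θ ∈ Icc (0:ℝ) 1, Gf s θ ≤ M := by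
  suffices hε : ∀ ε > 0, ∀ s ∈ Icc (0:ℝ) T, ∀ θ ∈ Icc (0:ℝ) 1, Gf s θ ≤ M + ε * (T + 1) by
    intro s hs θ hθ
    refine le_of_forall_pos_le_add fun ε hε' => ?_
    have hT1 : (0:ℝ) < T + 1 := by linarith
    have := hε (ε / (T + 1)) (by positivity) s hs θ hθ
    rwa [div_mul_cancel₀ _ (ne_of_gt hT1)] at this
  intro ε hε
  have hKc : IsCompact (Icc (0:ℝ) T ×ˢ Icc (0:ℝ) 1) := isCompact_Icc.prod isCompact_Icc
  have hKne : (Icc (0:ℝ) T ×ˢ Icc (0:ℝ) 1).Nonempty :=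
    ⟨(0, 0), Set.mk_mem_prod ⟨le_refl _, hT⟩ ⟨le_refl _, zero_le_one⟩⟩
  have hΦc : ContinuousOn (fun p : ℝ × ℝ => Gf p.1 p.2 - ε * p.1) (Icc 0 T ×ˢ Icc 0 1) :=
    hcont.sub ((continuous_const.mul continuous_fst).continuousOn)
  obtain ⟨p₀, hp₀K, hmax⟩ := hKc.exists_isMaxOn hKne hΦc
  obtain ⟨t₀, θ₀⟩ := p₀
  rw [Set.mem_prod] at hp₀K
  obtain ⟨ht₀, hθ₀⟩ := hp₀K
  dsimp only at ht₀ hθ₀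
  have hmax' : ∀ s ∈ Icc (0:ℝ) T, ∀ θ ∈ Icc (0:ℝ) 1,
      Gf s θ - ε * s ≤ Gf t₀ θ₀ - ε * t₀ := by
    intro s hs θ hθ
    exact hmax (Set.mk_mem_prod hs hθ)
  rcases eq_or_lt_of_le ht₀.1 with h0 | h0
  · -- the max is at time 0
    intro s hs θ hθ
    have h1 := hmax' s hs θ hθ
    rw [← h0] at h1
    have h2 := hinitM θ₀ hθ₀
    have h3 : ε * s ≤ ε * (T + 1) := by
      apply mul_le_mul_of_nonneg_left _ (le_of_lt hε)
      linarith [hs.2]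
    simp only [mul_zero, sub_zero] at h1
    linarith
  · -- an interior-time max leads to a contradiction
    exfalso
    have hsp : IsMaxOn (Gf t₀) (Icc (0:ℝ) 1) θ₀ := by
      intro x hx
      have := hmax' t₀ ht₀ x hx
      simp only [Set.mem_setOf_eq]
      linarith
    have hq0 : q t₀ θ₀ = 0 := by
      rcases eq_or_lt_of_le hθ₀.1 with hb | hb
      · rw [← hb]; exact (hbdry t₀ ht₀).1
      rcases eq_or_lt_of_le hθ₀.2 with hb2 | hb2
      · rw [hb2]; exact (hbdry t₀ ht₀).2
      · have hloc : IsLocalMax (Gf t₀) θ₀ := hsp.isLocalMax (Icc_mem_nhds hb hb2)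
        have h1 := hloc.deriv_eq_zero
        rwa [(hspace t₀ ht₀ θ₀ hθ₀).deriv] at h1
    have hq'0 : q' t₀ θ₀ ≤ 0 :=
      secondDeriv_nonpos_of_isMaxOn hθ₀ (hspace t₀ ht₀) (hq t₀ ht₀) (hq'c t₀) hsp hq0
    have hgt : gt' t₀ θ₀ ≤ 0 := hsign t₀ ht₀ θ₀ hθ₀ hq0 hq'0
    -- time derivative at the max is ≥ ε
    have hder := htime t₀ ht₀ θ₀ hθ₀
    have h1 := hasDerivAt_iff_tendsto_slope.mp hder
    have h2 : Tendsto (slope (fun τ => Gf τ θ₀) t₀) (nhdsWithin t₀ (Iio t₀))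
        (nhds (gt' t₀ θ₀)) :=
      h1.mono_left (nhdsWithin_mono _ fun x hx => ne_of_lt hx)
    have hIoo : Ioo (0:ℝ) t₀ ∈ nhdsWithin t₀ (Iio t₀) :=
      Ioo_mem_nhdsLT_of_mem ⟨h0, le_refl _⟩
    have hev : ∀ᶠ τ in nhdsWithin t₀ (Iio t₀), ε ≤ slope (fun τ => Gf τ θ₀) t₀ τ := by
      filter_upwards [hIoo] with τ hτ
      have hτT : τ ∈ Icc (0:ℝ) T := ⟨le_of_lt hτ.1, le_trans (le_of_lt hτ.2) ht₀.2⟩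
      have hh := hmax' τ hτT θ₀ hθ₀
      have hne : τ - t₀ < 0 := by linarith [hτ.2]
      rw [slope_def_field, le_div_iff_of_neg hne]
      linarith
    have := ge_of_tendsto h2 hev
    linarith

/-- Mirror minimum principle. -/
lemma minprin {T m : ℝ} {Gf q q' gt' : ℝ → ℝ → ℝ} (hT : 0 ≤ T)
    (hcont : ContinuousOn (fun p : ℝ × ℝ => Gf p.1 p.2) (Icc 0 T ×ˢ Icc 0 1))
    (hspace : ∀ s ∈ Icc (0:ℝ) T, ∀ θ ∈ Icc (0:ℝ) 1, HasDerivAt (Gf s) (q s θ) θ)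
    (hq : ∀ s ∈ Icc (0:ℝ) T, ∀ θ, HasDerivAt (q s) (q' s θ) θ)
    (hq'c : ∀ s, Continuous (q' s))
    (htime : ∀ s ∈ Icc (0:ℝ) T, ∀ θ ∈ Icc (0:ℝ) 1, HasDerivAt (fun τ => Gf τ θ) (gt' s θ) s)
    (hbdry : ∀ s ∈ Icc (0:ℝ) T, q s 0 = 0 ∧ q s 1 = 0)
    (hsign : ∀ s ∈ Icc (0:ℝ) T, ∀ θ ∈ Icc (0:ℝ) 1, q s θ = 0 → 0 ≤ q' s θ → 0 ≤ gt' s θ)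
    (hinitm : ∀ θ ∈ Icc (0:ℝ) 1, m ≤ Gf 0 θ) :
    ∀ s ∈ Icc (0:ℝ) T, ∀ θ ∈ Icc (0:ℝ) 1, m ≤ Gf s θ := by
  have h := maxprin (T := T) (M := -m) (Gf := fun s θ => -Gf s θ)
    (q := fun s θ => -q s θ) (q' := fun s θ => -q' s θ) (gt' := fun s θ => -gt' s θ)
    hT (by exact hcont.neg)
    (fun s hs θ hθ => (hspace s hs θ hθ).neg)
    (fun s hs θ => (hq s hs θ).neg)
    (fun s => (hq'c s).neg)
    (fun s hs θ hθ => (htime s hs θ hθ).neg)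
    (fun s hs => ⟨by simp [(hbdry s hs).1], by simp [(hbdry s hs).2]⟩)
    (fun s hs θ hθ h1 h2 => by
      simp only [neg_eq_zero] at h1
      simp only [neg_nonpos] at h2
      simpa using hsign s hs θ hθ h1 h2)
    (fun θ hθ => by simpa using hinitm θ hθ)
  intro s hs θ hθ
  have h2 := h s hs θ hθ
  linarith

section Key

variable {r L a₀ A₀ : ℝ} {ρ : ℝ → ℝ} {X : ℝ → ℝ → ℝ}

/-- The key quantitative propagation lemma. -/
theorem key_s18 (hr : 1 ≤ r) (hL : 0 < L) (hL1 : L ≤ 1) (ha₀ : 0 < a₀) (haA : a₀ ≤ A₀)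
    (hρ : ContDiff ℝ 1 ρ)
    (hρb : ∀ y ∈ Set.Icc (0:ℝ) 1, L ≤ ρ y ∧ ρ y ≤ 1 / L)
    (hXs : ContDiff ℝ (⊤ : ℕ∞) (fun p : ℝ × ℝ => X p.1 p.2))
    (hbc : ∀ t, X t 0 = 0 ∧ X t 1 = 1)
    (hpde : ∀ t θ, deriv (fun s => X s θ) t =
      (1 / (2 ^ r * (r + 1))) *
        ((r + 1) *
          deriv (fun θ' =>
            ρ (X t θ') * |deriv (X t) θ'| ^ (r - 1) * deriv (X t) θ') θ
        - deriv ρ (X t θ) * |deriv (X t) θ| ^ (r + 1)))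
    (hinit : ∀ θ ∈ Set.Icc (0:ℝ) 1, a₀ ≤ deriv (X 0) θ ∧ deriv (X 0) θ ≤ A₀) :
    ∀ t, 0 ≤ t → ∀ θ ∈ Set.Icc (0:ℝ) 1,
      (L ^ 2 * a₀ ^ (r + 1)) ^ (r + 1)⁻¹ ≤ deriv (X t) θ ∧
        deriv (X t) θ ≤ (A₀ ^ (r + 1) / L ^ 2) ^ (r + 1)⁻¹ := by
  -- basic positivity
  have hr0 : (0:ℝ) < r := lt_of_lt_of_le one_pos hr
  have hr1 : (0:ℝ) < r + 1 := by linarith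
  have h2r : (0:ℝ) < 2 ^ r := Real.rpow_pos_of_pos two_pos r
  set c : ℝ := 1 / (2 ^ r * (r + 1)) with hcdef
  have hc : 0 < c := by
    rw [hcdef]; positivity
  set F : ℝ × ℝ → ℝ := fun p => X p.1 p.2 with hFdef
  set Dv : ℝ × ℝ → ℝ := fun p => fderiv ℝ F p (0, 1) with hDvdef
  set DW : ℝ × ℝ → ℝ := fun p => fderiv ℝ F p (1, 0) with hDWdef
  -- partial derivatives
  have hXd : ∀ s θ', HasDerivAt (X s) (Dv (s, θ')) θ' := by
    intro s θ'
    have h := pd2 (p := (s, θ')) ((hXs.differentiable (by simp)) (s, θ'))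
    simp only [hDvdef]
    simpa using h
  have hv_eq : ∀ s θ', deriv (X s) θ' = Dv (s, θ') := fun s θ' => (hXd s θ').deriv
  have hWd : ∀ s θ', HasDerivAt (fun τ => X τ θ') (DW (s, θ')) s := by
    intro s θ'
    have h := pd1 (p := (s, θ')) ((hXs.differentiable (by simp)) (s, θ'))
    simp only [hDWdef]
    simpa using h
  have hW_eq : ∀ s θ', deriv (fun τ => X τ θ') s = DW (s, θ') := fun s θ' => (hWd s θ').deriv
  -- smoothness of partials
  have hDv : ContDiff ℝ (⊤ : ℕ∞) Dv := dirderiv_contDiff hXs _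
  have hDW : ContDiff ℝ (⊤ : ℕ∞) DW := dirderiv_contDiff hXs _
  have hDvc : Continuous Dv := hDv.continuous
  have hDWc : Continuous DW := hDW.continuous
  -- Schwarz symmetry
  have hsch : ∀ p : ℝ × ℝ, fderiv ℝ Dv p (1, 0) = fderiv ℝ DW p (0, 1) := by
    intro p
    simp only [hDvdef, hDWdef]
    exact schwarz hXs p (0, 1) (1, 0)
  -- Neumann from Dirichlet
  have hDW0 : ∀ s : ℝ, DW (s, 0) = 0 ∧ DW (s, 1) = 0 := by
    intro s
    constructor
    · have h1 : (fun τ => X τ (0:ℝ)) = fun _ => (0:ℝ) := funext fun τ => (hbc τ).1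
      have h2 := hWd s 0
      rw [h1] at h2
      exact h2.unique (hasDerivAt_const s 0)
    · have h1 : (fun τ => X τ (1:ℝ)) = fun _ => (1:ℝ) := funext fun τ => (hbc τ).2
      have h2 := hWd s 1
      rw [h1] at h2
      exact h2.unique (hasDerivAt_const s 1)
  -- the PDE in terms of Dv, DW
  have hpde' : ∀ s θ', DW (s, θ') = c * ((r + 1) *
      deriv (fun θ'' => ρ (X s θ'') * |Dv (s, θ'')| ^ (r - 1) * Dv (s, θ'')) θ'
      - deriv ρ (X s θ') * |Dv (s, θ')| ^ (r + 1)) := by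
    intro s θ'
    have h := hpde s θ'
    rw [hW_eq] at h
    simp only [hv_eq] at h
    exact h
  -- derivative of ρ along X in θ and t directions exists (ρ is C¹)
  have hρd : ∀ y : ℝ, HasDerivAt ρ (deriv ρ y) y := by
    intro y
    exact (hρ.differentiable one_ne_zero y).hasDerivAt
  have hρc : Continuous ρ := hρ.continuous
  -- KEY IDENTITY: spatial derivative of G t θ = ρ(X)·v^{r+1}
  have hGder : ∀ s θ', 0 < Dv (s, θ') →
      HasDerivAt (fun θ'' => ρ (X s θ'') * Dv (s, θ'') ^ (r + 1))
        (Dv (s, θ') * DW (s, θ') / (c * r)) θ' := by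
    intro s θ' hv
    have hcv : Continuous fun θ'' => Dv (s, θ'') :=
      hDvc.comp (continuous_const.prodMk continuous_id)
    have hU : ∀ᶠ θ'' in nhds θ', 0 < Dv (s, θ'') :=
      hcv.continuousAt.eventually (eventually_gt_nhds hv)
    have hρX : HasDerivAt (fun θ'' => ρ (X s θ'')) (deriv ρ (X s θ') * Dv (s, θ')) θ' := by
      exact (hρd (X s θ')).comp θ' (hXd s θ')
    have hvd : HasDerivAt (fun θ'' => Dv (s, θ'')) (fderiv ℝ Dv (s, θ') (0, 1)) θ' := by
      simpa using pd2 (p := (s, θ')) ((hDv.differentiable (by simp)) (s, θ'))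
    have hpow : HasDerivAt (fun θ'' => Dv (s, θ'') ^ (r + 1))
        (fderiv ℝ Dv (s, θ') (0, 1) * (r + 1) * Dv (s, θ') ^ r) θ' := by
      have h := hvd.rpow_const (p := r + 1) (Or.inl (ne_of_gt hv))
      rwa [show r + 1 - 1 = r by ring] at h
    have hG := hρX.mul hpow
    have hpow2 : HasDerivAt (fun θ'' => Dv (s, θ'') ^ (r - 1))
        (fderiv ℝ Dv (s, θ') (0, 1) * (r - 1) * Dv (s, θ') ^ (r - 1 - 1)) θ' :=
      hvd.rpow_const (Or.inl (ne_of_gt hv))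
    have hA' := (hρX.mul hpow2).mul hvd
    have hEq : (fun θ'' => ρ (X s θ'') * Dv (s, θ'') ^ (r - 1) * Dv (s, θ''))
        =ᶠ[nhds θ'] (fun θ'' => ρ (X s θ'') * |Dv (s, θ'')| ^ (r - 1) * Dv (s, θ'')) := by
      filter_upwards [hU] with x hx
      rw [abs_of_pos hx]
    have hd1 : deriv (fun θ'' => ρ (X s θ'') * |Dv (s, θ'')| ^ (r - 1) * Dv (s, θ'')) θ' =
        ((deriv ρ (X s θ') * Dv (s, θ') * Dv (s, θ') ^ (r - 1) +
          ρ (X s θ') * (fderiv ℝ Dv (s, θ') (0, 1) * (r - 1) * Dv (s, θ') ^ (r - 1 - 1))) *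
            Dv (s, θ') +
          ρ (X s θ') * Dv (s, θ') ^ (r - 1) * fderiv ℝ Dv (s, θ') (0, 1)) := by
      rw [← hEq.deriv_eq]
      exact hA'.deriv
    have hp := hpde' s θ'
    rw [hd1, abs_of_pos hv] at hp
    have e1 : Dv (s, θ') ^ (r + 1) = Dv (s, θ') ^ r * Dv (s, θ') :=
      Real.rpow_add_one (ne_of_gt hv) r
    have e2 : Dv (s, θ') ^ r = Dv (s, θ') ^ (r - 1) * Dv (s, θ') := by
      rw [← Real.rpow_add_one (ne_of_gt hv) (r - 1)]
      congr 1
      ring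
    have e3 : Dv (s, θ') ^ (r - 1) = Dv (s, θ') ^ (r - 1 - 1) * Dv (s, θ') := by
      rw [← Real.rpow_add_one (ne_of_gt hv) (r - 1 - 1)]
      congr 1
      ring
    have hkey : Dv (s, θ') * DW (s, θ') / (c * r) =
        deriv ρ (X s θ') * Dv (s, θ') * Dv (s, θ') ^ (r + 1) +
          ρ (X s θ') * (fderiv ℝ Dv (s, θ') (0, 1) * (r + 1) * Dv (s, θ') ^ r) := by
      rw [hp, e1, e2, e3]
      have hcne : c ≠ 0 := ne_of_gt hc
      have hrne : r ≠ 0 := ne_of_gt hr0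
      field_simp
      ring
    rw [hkey]
    exact hG
  -- time derivative of G
  have hGt : ∀ s θ', 0 < Dv (s, θ') →
      HasDerivAt (fun τ => ρ (X τ θ') * Dv (τ, θ') ^ (r + 1))
        (deriv ρ (X s θ') * DW (s, θ') * Dv (s, θ') ^ (r + 1) +
          ρ (X s θ') * (fderiv ℝ DW (s, θ') (0, 1) * (r + 1) * Dv (s, θ') ^ r)) s := by
    intro s θ' hv
    have hρX : HasDerivAt (fun τ => ρ (X τ θ')) (deriv ρ (X s θ') * DW (s, θ')) s := by
      exact (hρd (X s θ')).comp s (hWd s θ')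
    have h2 : HasDerivAt (fun τ => Dv (τ, θ')) (fderiv ℝ Dv (s, θ') (1, 0)) s := by
      simpa using pd1 (p := (s, θ')) ((hDv.differentiable (by simp)) (s, θ'))
    have h3 := h2.rpow_const (p := r + 1) (Or.inl (ne_of_gt hv))
    rw [show r + 1 - 1 = r by ring] at h3
    have h4 := hρX.mul h3
    rw [hsch (s, θ')] at h4
    exact h4
  -- the smooth surrogate for ∂θ G and its θ-derivative
  set GD : ℝ × ℝ → ℝ := fun p => Dv p * DW p / (c * r) with hGDdef
  have hGDs : ContDiff ℝ (⊤ : ℕ∞) GD := (hDv.mul hDW).div_const _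
  have hGDd : ∀ s θ', HasDerivAt (fun θ'' => GD (s, θ'')) (fderiv ℝ GD (s, θ') (0, 1)) θ' := by
    intro s θ'
    have h := pd2 (p := (s, θ')) ((hGDs.differentiable (by simp)) (s, θ'))
    simpa using h
  have hGD'c : Continuous fun p => fderiv ℝ GD p (0, 1) :=
    (dirderiv_contDiff hGDs _).continuous
  have hGD2 : ∀ s θ', DW (s, θ') = 0 →
      fderiv ℝ GD (s, θ') (0, 1) = Dv (s, θ') * fderiv ℝ DW (s, θ') (0, 1) / (c * r) := by
    intro s θ' h0
    have hDv2 : HasDerivAt (fun θ'' => Dv (s, θ'')) (fderiv ℝ Dv (s, θ') (0, 1)) θ' := by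
      simpa using pd2 (p := (s, θ')) ((hDv.differentiable (by simp)) (s, θ'))
    have hDW2 : HasDerivAt (fun θ'' => DW (s, θ'')) (fderiv ℝ DW (s, θ') (0, 1)) θ' := by
      simpa using pd2 (p := (s, θ')) ((hDW.differentiable (by simp)) (s, θ'))
    have hprod := (hDv2.mul hDW2).div_const (c * r)
    have huniq := (hGDd s θ').unique hprod
    rw [huniq, h0]
    ring
  -- continuity of G as a two-variable function on the positivity region
  have hGcont : ∀ p : ℝ × ℝ, 0 < Dv p → ContinuousAt (fun q => ρ (F q) * Dv q ^ (r + 1)) p := by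
    intro p hp
    apply ContinuousAt.mul
    · exact hρc.continuousAt.comp hXs.continuous.continuousAt
    · have h1 : ContinuousAt (fun x : ℝ => x ^ (r + 1)) (Dv p) :=
        Real.continuousAt_rpow_const _ _ (Or.inl (ne_of_gt hp))
      exact h1.comp hDvc.continuousAt
  -- X maps [0,1] to [0,1] when ∂θ X > 0 on [0,1]
  have hXin : ∀ s : ℝ, (∀ θ' ∈ Icc (0:ℝ) 1, 0 < Dv (s, θ')) →
      ∀ θ' ∈ Icc (0:ℝ) 1, X s θ' ∈ Icc (0:ℝ) 1 := by
    intro s hs θ' hθ'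
    have hXc : Continuous (X s) := by
      have : Continuous fun θ'' => F (s, θ'') :=
        hXs.continuous.comp (continuous_const.prodMk continuous_id)
      exact this
    have hmono : MonotoneOn (X s) (Icc (0:ℝ) 1) := by
      apply monotoneOn_of_deriv_nonneg (convex_Icc _ _) hXc.continuousOn
      · intro x hx
        exact ((hXd s x).differentiableAt).differentiableWithinAt
      · intro x hx
        rw [interior_Icc] at hx
        rw [(hXd s x).deriv]
        exact le_of_lt (hs x ⟨le_of_lt hx.1, le_of_lt hx.2⟩)
    constructor
    · have := hmono (left_mem_Icc.mpr zero_le_one) hθ' hθ'.1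
      rwa [(hbc s).1] at this
    · have := hmono hθ' (right_mem_Icc.mpr zero_le_one) hθ'.2
      rwa [(hbc s).2] at this
  -- initial bounds for G
  have hX0in : ∀ θ' ∈ Icc (0:ℝ) 1, X 0 θ' ∈ Icc (0:ℝ) 1 := by
    refine hXin 0 (fun θ' hθ' => ?_)
    rw [← hv_eq]
    exact lt_of_lt_of_le ha₀ (hinit θ' hθ').1
  have hG0 : ∀ θ' ∈ Icc (0:ℝ) 1, L * a₀ ^ (r + 1) ≤ ρ (X 0 θ') * Dv (0, θ') ^ (r + 1) ∧
      ρ (X 0 θ') * Dv (0, θ') ^ (r + 1) ≤ A₀ ^ (r + 1) / L := by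
    intro θ' hθ'
    have h1 := hinit θ' hθ'
    rw [hv_eq] at h1
    have hX := hX0in θ' hθ'
    have hρl := (hρb _ hX).1
    have hρu := (hρb _ hX).2
    have hvpos : 0 < Dv (0, θ') := lt_of_lt_of_le ha₀ h1.1
    have hrpl : a₀ ^ (r + 1) ≤ Dv (0, θ') ^ (r + 1) :=
      Real.rpow_le_rpow (le_of_lt ha₀) h1.1 (le_of_lt hr1)
    have hrpu : Dv (0, θ') ^ (r + 1) ≤ A₀ ^ (r + 1) :=
      Real.rpow_le_rpow (le_of_lt hvpos) h1.2 (le_of_lt hr1)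
    have hap : (0:ℝ) < a₀ ^ (r + 1) := Real.rpow_pos_of_pos ha₀ _
    have hvp : (0:ℝ) < Dv (0, θ') ^ (r + 1) := Real.rpow_pos_of_pos hvpos _
    constructor
    · calc L * a₀ ^ (r + 1) ≤ ρ (X 0 θ') * Dv (0, θ') ^ (r + 1) := by
            apply mul_le_mul hρl hrpl (le_of_lt hap) (le_trans hL.le hρl)
        _ = _ := rfl
    · calc ρ (X 0 θ') * Dv (0, θ') ^ (r + 1) ≤ (1 / L) * A₀ ^ (r + 1) := by
            apply mul_le_mul hρu hrpu (le_of_lt hvp) (by positivity)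
        _ = A₀ ^ (r + 1) / L := by ring
  -- THE MAXIMUM PRINCIPLE
  have hmaxp : ∀ T, 0 ≤ T → (∀ s ∈ Icc (0:ℝ) T, ∀ θ' ∈ Icc (0:ℝ) 1, 0 < Dv (s, θ')) →
      ∀ s ∈ Icc (0:ℝ) T, ∀ θ' ∈ Icc (0:ℝ) 1,
        L * a₀ ^ (r + 1) ≤ ρ (X s θ') * Dv (s, θ') ^ (r + 1) ∧
          ρ (X s θ') * Dv (s, θ') ^ (r + 1) ≤ A₀ ^ (r + 1) / L := by
    intro T hT hpos
    have hcr : (0:ℝ) < c * r := mul_pos hc hr0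
    have hcont : ContinuousOn (fun p : ℝ × ℝ => ρ (X p.1 p.2) * Dv (p.1, p.2) ^ (r + 1))
        (Icc (0:ℝ) T ×ˢ Icc (0:ℝ) 1) := by
      intro p hp
      rw [Set.mem_prod] at hp
      exact (hGcont p (hpos p.1 hp.1 p.2 hp.2)).continuousWithinAt
    have hspace : ∀ s ∈ Icc (0:ℝ) T, ∀ θ' ∈ Icc (0:ℝ) 1,
        HasDerivAt (fun θ'' => ρ (X s θ'') * Dv (s, θ'') ^ (r + 1)) (GD (s, θ')) θ' :=
      fun s hs θ' hθ' => hGder s θ' (hpos s hs θ' hθ')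
    have hq : ∀ s ∈ Icc (0:ℝ) T, ∀ θ',
        HasDerivAt (fun θ'' => GD (s, θ'')) (fderiv ℝ GD (s, θ') (0, 1)) θ' :=
      fun s _ θ' => hGDd s θ'
    have hq'c : ∀ s, Continuous fun θ' => fderiv ℝ GD (s, θ') (0, 1) :=
      fun s => hGD'c.comp (continuous_const.prodMk continuous_id)
    have htime : ∀ s ∈ Icc (0:ℝ) T, ∀ θ' ∈ Icc (0:ℝ) 1,
        HasDerivAt (fun τ => ρ (X τ θ') * Dv (τ, θ') ^ (r + 1))
          (deriv ρ (X s θ') * DW (s, θ') * Dv (s, θ') ^ (r + 1) +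
            ρ (X s θ') * (fderiv ℝ DW (s, θ') (0, 1) * (r + 1) * Dv (s, θ') ^ r)) s :=
      fun s hs θ' hθ' => hGt s θ' (hpos s hs θ' hθ')
    have hbdry : ∀ s ∈ Icc (0:ℝ) T, GD (s, 0) = 0 ∧ GD (s, 1) = 0 := by
      intro s _
      constructor
      · show Dv (s, 0) * DW (s, 0) / (c * r) = 0
        rw [(hDW0 s).1]; ring
      · show Dv (s, 1) * DW (s, 1) / (c * r) = 0
        rw [(hDW0 s).2]; ring
    -- common sign analysis
    have hsgncore : ∀ s ∈ Icc (0:ℝ) T, ∀ θ' ∈ Icc (0:ℝ) 1, GD (s, θ') = 0 →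
        (DW (s, θ') = 0 ∧
          deriv ρ (X s θ') * DW (s, θ') * Dv (s, θ') ^ (r + 1) +
            ρ (X s θ') * (fderiv ℝ DW (s, θ') (0, 1) * (r + 1) * Dv (s, θ') ^ r) =
          ρ (X s θ') * (r + 1) * Dv (s, θ') ^ r * (fderiv ℝ GD (s, θ') (0, 1) * (c * r) / Dv (s, θ'))) := by
      intro s hs θ' hθ' h0
      have hvp := hpos s hs θ' hθ'
      have hDWz : DW (s, θ') = 0 := by
        have h1 : Dv (s, θ') * DW (s, θ') / (c * r) = 0 := h0
        have h2 : Dv (s, θ') * DW (s, θ') = 0 := by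
          exact (div_eq_zero_iff.mp h1).resolve_right (ne_of_gt hcr)
        rcases mul_eq_zero.mp h2 with h | h
        · exact absurd h (ne_of_gt hvp)
        · exact h
      refine ⟨hDWz, ?_⟩
      have h2 := hGD2 s θ' hDWz
      rw [hDWz, h2]
      field_simp
      ring
    have hρpos : ∀ s ∈ Icc (0:ℝ) T, ∀ θ' ∈ Icc (0:ℝ) 1, 0 < ρ (X s θ') := by
      intro s hs θ' hθ'
      have hXint := hXin s (hpos s hs) θ' hθ'
      exact lt_of_lt_of_le hL (hρb _ hXint).1
    have hupper := maxprin (T := T) (M := A₀ ^ (r + 1) / L) hT hcont hspace hq hq'c htime hbdry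
      (by
        intro s hs θ' hθ' h0 hq'0
        obtain ⟨hDWz, heq⟩ := hsgncore s hs θ' hθ' h0
        rw [heq]
        have h5 : fderiv ℝ GD (s, θ') (0, 1) * (c * r) / Dv (s, θ') ≤ 0 := by
          apply div_nonpos_of_nonpos_of_nonneg
          · exact mul_nonpos_of_nonpos_of_nonneg hq'0 (le_of_lt hcr)
          · exact le_of_lt (hpos s hs θ' hθ')
        have h6 : (0:ℝ) < ρ (X s θ') * (r + 1) * Dv (s, θ') ^ r := by
          have := hρpos s hs θ' hθ'
          have := Real.rpow_pos_of_pos (hpos s hs θ' hθ') r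
          positivity
        exact mul_nonpos_of_nonneg_of_nonpos (le_of_lt h6) h5)
      (fun θ' hθ' => (hG0 θ' hθ').2)
    have hlower := minprin (T := T) (m := L * a₀ ^ (r + 1)) hT hcont hspace hq hq'c htime hbdry
      (by
        intro s hs θ' hθ' h0 hq'0
        obtain ⟨hDWz, heq⟩ := hsgncore s hs θ' hθ' h0
        rw [heq]
        have h5 : 0 ≤ fderiv ℝ GD (s, θ') (0, 1) * (c * r) / Dv (s, θ') := by
          apply div_nonneg
          · exact mul_nonneg hq'0 (le_of_lt hcr)
          · exact le_of_lt (hpos s hs θ' hθ')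
        have h6 : (0:ℝ) < ρ (X s θ') * (r + 1) * Dv (s, θ') ^ r := by
          have := hρpos s hs θ' hθ'
          have := Real.rpow_pos_of_pos (hpos s hs θ' hθ') r
          positivity
        exact mul_nonneg (le_of_lt h6) h5)
      (fun θ' hθ' => (hG0 θ' hθ').1)
    intro s hs θ' hθ'
    exact ⟨hlower s hs θ' hθ', hupper s hs θ' hθ'⟩
  -- conversion from G-bounds to v-bounds
  have hconv : ∀ s θ', 0 < Dv (s, θ') → X s θ' ∈ Icc (0:ℝ) 1 →
      L * a₀ ^ (r + 1) ≤ ρ (X s θ') * Dv (s, θ') ^ (r + 1) →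
      ρ (X s θ') * Dv (s, θ') ^ (r + 1) ≤ A₀ ^ (r + 1) / L →
      (L ^ 2 * a₀ ^ (r + 1)) ^ (r + 1)⁻¹ ≤ Dv (s, θ') ∧
        Dv (s, θ') ≤ (A₀ ^ (r + 1) / L ^ 2) ^ (r + 1)⁻¹ := by
    intro s θ' hv hXint hlow hup
    have hρl := (hρb _ hXint).1
    have hρu := (hρb _ hXint).2
    have hvp : (0:ℝ) < Dv (s, θ') ^ (r + 1) := Real.rpow_pos_of_pos hv _
    have hid : (Dv (s, θ') ^ (r + 1)) ^ (r + 1)⁻¹ = Dv (s, θ') := by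
      rw [← Real.rpow_mul (le_of_lt hv), mul_inv_cancel₀ (ne_of_gt hr1), Real.rpow_one]
    have hρpos : 0 < ρ (X s θ') := lt_of_lt_of_le hL hρl
    have hlow2 : L ^ 2 * a₀ ^ (r + 1) ≤ Dv (s, θ') ^ (r + 1) := by
      have h2 : ρ (X s θ') * Dv (s, θ') ^ (r + 1) ≤ (1 / L) * Dv (s, θ') ^ (r + 1) :=
        mul_le_mul_of_nonneg_right hρu (le_of_lt hvp)
      have h3 : L * a₀ ^ (r + 1) ≤ (1 / L) * Dv (s, θ') ^ (r + 1) := le_trans hlow h2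
      have h4 := mul_le_mul_of_nonneg_left h3 (le_of_lt hL)
      calc L ^ 2 * a₀ ^ (r + 1) = L * (L * a₀ ^ (r + 1)) := by ring
        _ ≤ L * ((1 / L) * Dv (s, θ') ^ (r + 1)) := h4
        _ = Dv (s, θ') ^ (r + 1) := by field_simp
    have hup2 : Dv (s, θ') ^ (r + 1) ≤ A₀ ^ (r + 1) / L ^ 2 := by
      have h2 : L * Dv (s, θ') ^ (r + 1) ≤ ρ (X s θ') * Dv (s, θ') ^ (r + 1) :=
        mul_le_mul_of_nonneg_right hρl (le_of_lt hvp)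
      have h3 : L * Dv (s, θ') ^ (r + 1) ≤ A₀ ^ (r + 1) / L := le_trans h2 hup
      rw [le_div_iff₀ (by positivity)]
      calc Dv (s, θ') ^ (r + 1) * L ^ 2 = L * (L * Dv (s, θ') ^ (r + 1)) := by ring
        _ ≤ L * (A₀ ^ (r + 1) / L) := mul_le_mul_of_nonneg_left h3 (le_of_lt hL)
        _ = A₀ ^ (r + 1) := by field_simp
    constructor
    · calc (L ^ 2 * a₀ ^ (r + 1)) ^ (r + 1)⁻¹
          ≤ (Dv (s, θ') ^ (r + 1)) ^ (r + 1)⁻¹ :=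
            Real.rpow_le_rpow (by positivity) hlow2 (by positivity)
        _ = Dv (s, θ') := hid
    · calc Dv (s, θ') = (Dv (s, θ') ^ (r + 1)) ^ (r + 1)⁻¹ := hid.symm
        _ ≤ (A₀ ^ (r + 1) / L ^ 2) ^ (r + 1)⁻¹ :=
            Real.rpow_le_rpow (le_of_lt hvp) hup2 (by positivity)
  -- positivity propagates forever
  have hpos_all : ∀ s, 0 ≤ s → ∀ θ' ∈ Icc (0:ℝ) 1, 0 < Dv (s, θ') := by
    by_contra hbad
    push_neg at hbad
    obtain ⟨s₁, hs₁, θ₁, hθ₁, hv₁⟩ := hbad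
    set Bad : Set ℝ := {s | 0 ≤ s ∧ ∃ θ' ∈ Icc (0:ℝ) 1, Dv (s, θ') ≤ 0} with hBdef
    have hBne : Bad.Nonempty := ⟨s₁, hs₁, θ₁, hθ₁, hv₁⟩
    have hBclosed : IsClosed Bad := by
      have h1 : IsClosed {s : ℝ | 0 ≤ s} := isClosed_Ici
      haveI : CompactSpace (Icc (0:ℝ) 1) := isCompact_iff_compactSpace.mp isCompact_Icc
      have h2 : IsClosed {s : ℝ | ∃ θ' ∈ Icc (0:ℝ) 1, Dv (s, θ') ≤ 0} := by
        have heq : {s : ℝ | ∃ θ' ∈ Icc (0:ℝ) 1, Dv (s, θ') ≤ 0} =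
            Prod.fst '' {q : ℝ × (Icc (0:ℝ) 1) | Dv (q.1, (q.2 : ℝ)) ≤ 0} := by
          ext s
          constructor
          · rintro ⟨θ', hθ', hle⟩
            exact ⟨(s, ⟨θ', hθ'⟩), hle, rfl⟩
          · rintro ⟨⟨s', θ'⟩, hle, rfl⟩
            exact ⟨(θ' : ℝ), θ'.2, hle⟩
        rw [heq]
        apply isClosedMap_fst_of_compactSpace
        have hc2 : Continuous fun q : ℝ × (Icc (0:ℝ) 1) => Dv (q.1, (q.2 : ℝ)) :=
          hDvc.comp (continuous_fst.prodMk (continuous_subtype_val.comp continuous_snd))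
        exact isClosed_le hc2 continuous_const
      have heq2 : Bad = {s : ℝ | 0 ≤ s} ∩ {s : ℝ | ∃ θ' ∈ Icc (0:ℝ) 1, Dv (s, θ') ≤ 0} := by
        rw [hBdef]
        ext s
        simp [Set.mem_setOf_eq, Set.mem_inter_iff]
      rw [heq2]
      exact h1.inter h2
    have hBbdd : BddBelow Bad := ⟨0, fun x hx => hx.1⟩
    have ht₀mem : sInf Bad ∈ Bad := hBclosed.csInf_mem hBne hBbdd
    obtain ⟨ht₀0, θ₂, hθ₂, hv₂⟩ := ht₀mem
    have ht₀pos : 0 < sInf Bad := by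
      rcases eq_or_lt_of_le ht₀0 with h | h
      · exfalso
        have hi := (hinit θ₂ hθ₂).1
        rw [hv_eq] at hi
        rw [← h] at hv₂
        linarith
      · exact h
    have hposlt : ∀ s, 0 ≤ s → s < sInf Bad → ∀ θ' ∈ Icc (0:ℝ) 1, 0 < Dv (s, θ') := by
      intro s hs hlt θ' hθ'
      by_contra hng
      push_neg at hng
      have hmem : s ∈ Bad := ⟨hs, θ', hθ', hng⟩
      have := csInf_le hBbdd hmem
      linarith
    have hlb : ∀ s, 0 ≤ s → s < sInf Bad → ∀ θ' ∈ Icc (0:ℝ) 1,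
        (L ^ 2 * a₀ ^ (r + 1)) ^ (r + 1)⁻¹ ≤ Dv (s, θ') := by
      intro s hs hlt θ' hθ'
      have hposT : ∀ σ ∈ Icc (0:ℝ) s, ∀ θ'' ∈ Icc (0:ℝ) 1, 0 < Dv (σ, θ'') :=
        fun σ hσ θ'' hθ'' => hposlt σ hσ.1 (lt_of_le_of_lt hσ.2 hlt) θ'' hθ''
      have hGb := hmaxp s hs hposT s ⟨hs, le_refl s⟩ θ' hθ'
      exact (hconv s θ' (hposlt s hs hlt θ' hθ')
        (hXin s (fun θ'' h => hposlt s hs hlt θ'' h) θ' hθ') hGb.1 hGb.2).1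
    have hcv : Continuous fun s => Dv (s, θ₂) :=
      hDvc.comp (continuous_id.prodMk continuous_const)
    have htend : Filter.Tendsto (fun s => Dv (s, θ₂)) (nhdsWithin (sInf Bad) (Iio (sInf Bad)))
        (nhds (Dv (sInf Bad, θ₂))) :=
      (hcv.tendsto (sInf Bad)).mono_left nhdsWithin_le_nhds
    have hev : ∀ᶠ s in nhdsWithin (sInf Bad) (Iio (sInf Bad)),
        (L ^ 2 * a₀ ^ (r + 1)) ^ (r + 1)⁻¹ ≤ Dv (s, θ₂) := by
      filter_upwards [Ioo_mem_nhdsLT_of_mem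
        (⟨ht₀pos, le_refl (sInf Bad)⟩ : sInf Bad ∈ Ioc 0 (sInf Bad))] with s hs
      exact hlb s (le_of_lt hs.1) hs.2 θ₂ hθ₂
    have hge := ge_of_tendsto htend hev
    have hbpos : 0 < (L ^ 2 * a₀ ^ (r + 1)) ^ (r + 1)⁻¹ := by
      apply Real.rpow_pos_of_pos
      have : (0:ℝ) < a₀ ^ (r + 1) := Real.rpow_pos_of_pos ha₀ _
      positivity
    linarith
  -- conclude
  intro t ht θ hθ
  have hpos : ∀ s ∈ Icc (0:ℝ) t, ∀ θ' ∈ Icc (0:ℝ) 1, 0 < Dv (s, θ') :=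
    fun s hs θ' hθ' => hpos_all s hs.1 θ' hθ'
  have hGb := hmaxp t ht hpos t ⟨ht, le_refl t⟩ θ hθ
  have hXint := hXin t (hpos t ⟨ht, le_refl t⟩) θ hθ
  rw [hv_eq]
  exact hconv t θ (hpos t ⟨ht, le_refl t⟩ θ hθ) hXint hGb.1 hGb.2

end Key

/-- Propagation of the monotonicity bounds for the 1D quantization gradient
flow: the bounds `b₀ ≤ ∂_θX(t) ≤ B₀` depend only on `λ, a₀, A₀`. -/
theorem stmt18 (r : ℝ) (hr : 1 ≤ r) (lam a₀ A₀ : ℝ)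
    (hlam : 0 < lam) (ha₀ : 0 < a₀) (haA : a₀ ≤ A₀) :
    ∃ b₀ B₀ : ℝ, 0 < b₀ ∧ b₀ ≤ B₀ ∧
      ∀ (ρ : ℝ → ℝ) (X : ℝ → ℝ → ℝ),
        ContDiff ℝ 1 ρ →
        (∀ y ∈ Set.Icc (0:ℝ) 1, lam ≤ ρ y ∧ ρ y ≤ 1 / lam) →
        (∫ y in Set.Ioo (0:ℝ) 1, ρ y) = 1 →
        ContDiff ℝ (⊤ : ℕ∞) (fun p : ℝ × ℝ => X p.1 p.2) →
        (∀ t, X t 0 = 0 ∧ X t 1 = 1) →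
        -- the Lagrangian gradient flow PDE
        (∀ t θ, deriv (fun s => X s θ) t =
          (1 / (2 ^ r * (r + 1))) *
            ((r + 1) *
              deriv (fun θ' =>
                ρ (X t θ') * |deriv (X t) θ'| ^ (r - 1) * deriv (X t) θ') θ
            - deriv ρ (X t θ) * |deriv (X t) θ| ^ (r + 1))) →
        (∀ θ ∈ Set.Icc (0:ℝ) 1, a₀ ≤ deriv (X 0) θ ∧ deriv (X 0) θ ≤ A₀) →
        ∀ t, 0 ≤ t → ∀ θ ∈ Set.Icc (0:ℝ) 1,
          b₀ ≤ deriv (X t) θ ∧ deriv (X t) θ ≤ B₀ := by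
  set L : ℝ := min lam 1 with hLdef
  have hL : 0 < L := lt_min hlam one_pos
  have hL1 : L ≤ 1 := min_le_right _ _
  have hr1 : (0:ℝ) < r + 1 := by linarith
  have hA₀ : 0 < A₀ := lt_of_lt_of_le ha₀ haA
  refine ⟨(L ^ 2 * a₀ ^ (r + 1)) ^ (r + 1)⁻¹, (A₀ ^ (r + 1) / L ^ 2) ^ (r + 1)⁻¹, ?_, ?_, ?_⟩
  · apply Real.rpow_pos_of_pos
    have : (0:ℝ) < a₀ ^ (r + 1) := Real.rpow_pos_of_pos ha₀ _
    positivity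
  · apply Real.rpow_le_rpow
    · have : (0:ℝ) < a₀ ^ (r + 1) := Real.rpow_pos_of_pos ha₀ _
      positivity
    · have h1 : a₀ ^ (r + 1) ≤ A₀ ^ (r + 1) :=
        Real.rpow_le_rpow (le_of_lt ha₀) haA (le_of_lt hr1)
      have h2 : (0:ℝ) < A₀ ^ (r + 1) := Real.rpow_pos_of_pos hA₀ _
      have hL2 : L ^ 2 ≤ 1 := by nlinarith
      have hL2p : (0:ℝ) < L ^ 2 := by positivity
      have h3 : L ^ 2 * a₀ ^ (r + 1) ≤ A₀ ^ (r + 1) := by nlinarith [Real.rpow_pos_of_pos ha₀ (r+1)]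
      have h4 : A₀ ^ (r + 1) ≤ A₀ ^ (r + 1) / L ^ 2 := by
        rw [le_div_iff₀ hL2p]
        nlinarith
      linarith
    · positivity
  · intro ρ X h1 h2 _h3 h4 h5 h6 h7
    have h2' : ∀ y ∈ Set.Icc (0:ℝ) 1, L ≤ ρ y ∧ ρ y ≤ 1 / L := by
      intro y hy
      refine ⟨le_trans (min_le_left _ _) (h2 y hy).1, le_trans (h2 y hy).2 ?_⟩
      exact one_div_le_one_div_of_le hL (min_le_left _ _)
    exact key_s18 hr hL hL1 ha₀ haA h1 h2' h4 h5 h6 h7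
end

section
/- Let ρ ≡ 1 on [0,1]. Then the Eulerian equation for f defined by f(t,·) dx = X(t,·)_# dθ, where X solves ∂_t X = C_r(r+1) ∂_θ(|∂_θX|^{r−1}∂_θX), is the very fast diffusion equation ∂_t f = −C_r(r+1) ∂²_x(f^{−r}). -/
open scoped ContDiff
open MeasureTheory

lemma hasDerivAt_snd' {F : ℝ × ℝ → ℝ} {t θ : ℝ} (hF : DifferentiableAt ℝ F (t, θ)) :
    HasDerivAt (fun θ' => F (t, θ')) (fderiv ℝ F (t, θ) (0, 1)) θ := by
  have h := hF.hasFDerivAt.comp_hasDerivAt θ ((hasDerivAt_const θ t).prodMk (hasDerivAt_id θ))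
  simpa [Function.comp_def] using h

lemma hasDerivAt_fst' {F : ℝ × ℝ → ℝ} {t θ : ℝ} (hF : DifferentiableAt ℝ F (t, θ)) :
    HasDerivAt (fun s => F (s, θ)) (fderiv ℝ F (t, θ) (1, 0)) t := by
  have h := hF.hasFDerivAt.comp_hasDerivAt t ((hasDerivAt_id t).prodMk (hasDerivAt_const t θ))
  simpa [Function.comp_def] using h

lemma clairaut_scalar {F : ℝ × ℝ → ℝ} (hF : ContDiff ℝ (⊤ : ℕ∞) F) (t θ : ℝ) :
    deriv (fun s => deriv (fun θ' => F (s, θ')) θ) t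
      = deriv (fun θ' => deriv (fun s => F (s, θ')) t) θ := by
  have hFd : Differentiable ℝ F := hF.differentiable (by simp)
  have hF' : ContDiff ℝ ∞ (fderiv ℝ F) := hF.fderiv_right (by simp)
  have hU : ContDiff ℝ ∞ (fun p : ℝ × ℝ => fderiv ℝ F p (0, 1)) :=
    hF'.clm_apply contDiff_const
  have hV : ContDiff ℝ ∞ (fun p : ℝ × ℝ => fderiv ℝ F p (1, 0)) :=
    hF'.clm_apply contDiff_const
  have hsymm : IsSymmSndFDerivAt ℝ F (t, θ) := hF.contDiffAt.isSymmSndFDerivAt (by rw [minSmoothness_of_isRCLikeNormedField]; exact WithTop.coe_le_coe.mpr le_top)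
  have e1 : (fun s => deriv (fun θ' => F (s, θ')) θ) = fun s => fderiv ℝ F (s, θ) (0, 1) := by
    funext s; exact (hasDerivAt_snd' (hFd _)).deriv
  have e2 : (fun θ' => deriv (fun s => F (s, θ')) t) = fun θ' => fderiv ℝ F (t, θ') (1, 0) := by
    funext θ'; exact (hasDerivAt_fst' (hFd _)).deriv
  rw [e1, e2]
  have d1 : deriv (fun s => fderiv ℝ F (s, θ) (0, 1)) t
      = fderiv ℝ (fun p : ℝ × ℝ => fderiv ℝ F p (0, 1)) (t, θ) (1, 0) :=
    (hasDerivAt_fst' ((hU.differentiable (by norm_num)) _)).deriv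
  have d2 : deriv (fun θ' => fderiv ℝ F (t, θ') (1, 0)) θ
      = fderiv ℝ (fun p : ℝ × ℝ => fderiv ℝ F p (1, 0)) (t, θ) (0, 1) :=
    (hasDerivAt_snd' ((hV.differentiable (by norm_num)) _)).deriv
  rw [d1, d2]
  have hc : DifferentiableAt ℝ (fderiv ℝ F) (t, θ) := (hF'.differentiable (by norm_num)) _
  have hu1 : DifferentiableAt ℝ (fun _ : ℝ × ℝ => ((0:ℝ), (1:ℝ))) (t, θ) := differentiableAt_const _
  have hu2 : DifferentiableAt ℝ (fun _ : ℝ × ℝ => ((1:ℝ), (0:ℝ))) (t, θ) := differentiableAt_const _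
  rw [fderiv_clm_apply hc hu1, fderiv_clm_apply hc hu2]
  simp [hsymm.eq (1, 0) (0, 1)]

/-- For `ρ ≡ 1`, the Eulerian form of the 1D quantization gradient flow is the
very fast diffusion equation `∂_t f = −C_r(r+1) ∂²_x(f^{−r})`. -/
theorem stmt19 (r : ℝ) (hr : 1 ≤ r)
    (X : ℝ → ℝ → ℝ) (hX : ContDiff ℝ (⊤ : ℕ∞) (fun p : ℝ × ℝ => X p.1 p.2))
    (hX0 : ∀ t, X t 0 = 0) (hX1 : ∀ t, X t 1 = 1)
    (hXincr : ∀ t, ∀ θ ∈ Set.Icc (0:ℝ) 1, 0 < deriv (X t) θ)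
    -- the Lagrangian `p`-Laplacian-type equation with `ρ ≡ 1`
    (hPDE : ∀ t, ∀ θ ∈ Set.Icc (0:ℝ) 1,
      deriv (fun s => X s θ) t =
        (1 / (2 ^ r * (r + 1))) * (r + 1) *
          deriv (fun θ' => |deriv (X t) θ'| ^ (r - 1) * deriv (X t) θ') θ)
    (f : ℝ → ℝ → ℝ) (hf : ContDiff ℝ (⊤ : ℕ∞) (fun p : ℝ × ℝ => f p.1 p.2))
    (hfpos : ∀ t, ∀ x ∈ Set.Icc (0:ℝ) 1, 0 < f t x)
    -- `f(t,·)` is the pushforward density: `f(t, X(t,θ)) = 1/∂_θX(t,θ)`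
    (hpush : ∀ t, ∀ θ ∈ Set.Icc (0:ℝ) 1, f t (X t θ) = 1 / deriv (X t) θ) :
    ∀ t, ∀ x ∈ Set.Ioo (0:ℝ) 1,
      deriv (fun s => f s x) t =
        -(1 / (2 ^ r * (r + 1))) * (r + 1) *
          deriv (deriv (fun x' => (f t x') ^ (-r))) x := by
  intro t x hx
  have hXinf : ContDiff ℝ ∞ (fun p : ℝ × ℝ => X p.1 p.2) := hX.of_le (by simp)
  have hfinf : ContDiff ℝ ∞ (fun p : ℝ × ℝ => f p.1 p.2) := hf.of_le (by simp)
  have hXt : ContDiff ℝ ∞ (X t) :=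
    hXinf.comp ((contDiff_const.prodMk contDiff_id :
      ContDiff ℝ ∞ (fun θ : ℝ => (t, θ))))
  have hft : ContDiff ℝ ∞ (f t) :=
    hfinf.comp ((contDiff_const.prodMk contDiff_id :
      ContDiff ℝ ∞ (fun x' : ℝ => (t, x'))))
  -- find θ₀ with X t θ₀ = x
  have hx' : x ∈ Set.Icc (X t 0) (X t 1) := by
    rw [hX0 t, hX1 t]; exact ⟨hx.1.le, hx.2.le⟩
  obtain ⟨θ₀, hθ₀I, hXθ₀⟩ :=
    intermediate_value_Icc (by norm_num : (0:ℝ) ≤ 1) hXt.continuous.continuousOn hx'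
  have hθ₀ : θ₀ ∈ Set.Ioo (0:ℝ) 1 := by
    rcases hθ₀I with ⟨h0, h1⟩
    refine ⟨h0.lt_of_ne ?_, h1.lt_of_ne ?_⟩
    · rintro rfl; rw [hX0 t] at hXθ₀; exact absurd hXθ₀ (ne_of_lt hx.1)
    · rintro rfl; rw [hX1 t] at hXθ₀; exact absurd hXθ₀.symm (ne_of_lt hx.2)
  set u : ℝ → ℝ := deriv (X t) with hu_def
  have hu0 : 0 < u θ₀ := hXincr t θ₀ (Set.Ioo_subset_Icc_self hθ₀)
  have huC : ContDiff ℝ ∞ u := (contDiff_infty_iff_deriv.mp hXt).2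
  -- the good open set S
  set S : Set ℝ := Set.Ioo 0 1 ∩ u ⁻¹' Set.Ioi 0 with hS_def
  have hSopen : IsOpen S := isOpen_Ioo.inter (isOpen_Ioi.preimage huC.continuous)
  have hθ₀S : θ₀ ∈ S := ⟨hθ₀, hu0⟩
  have hSnhds : S ∈ nhds θ₀ := hSopen.mem_nhds hθ₀S
  set G : ℝ → ℝ := fun x' => f t x' ^ (-r) with hG_def
  have hpushS : ∀ θ ∈ S, f t (X t θ) = (u θ)⁻¹ := by
    intro θ hθ
    rw [hpush t θ (Set.Ioo_subset_Icc_self hθ.1), one_div]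
  -- the flux identity
  have hGX : ∀ θ ∈ S, |u θ| ^ (r - 1) * u θ = G (X t θ) := by
    intro θ hθ
    have h1 : (0:ℝ) < u θ := hθ.2
    have e1 : G (X t θ) = u θ ^ r := by
      rw [hG_def]
      simp only
      rw [hpushS θ hθ, Real.inv_rpow h1.le, Real.rpow_neg h1.le, inv_inv]
    rw [e1, abs_of_pos h1]
    rw [show r = (r - 1) + 1 by ring, Real.rpow_add_one h1.ne']
    ring_nf
  -- smoothness of G near points where f t > 0
  have hfx0 : 0 < f t x := hfpos t x ⟨hx.1.le, hx.2.le⟩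
  have hGat : ∀ x' : ℝ, 0 < f t x' → ContDiffAt ℝ ∞ G x' := fun x' h =>
    (hft.contDiffAt).rpow_const_of_ne h.ne'
  have hGdiffat : ∀ x' : ℝ, 0 < f t x' → DifferentiableAt ℝ G x' := fun x' h =>
    (hGat x' h).differentiableAt (by norm_num)
  have hDG : DifferentiableAt ℝ (deriv G) x := by
    obtain ⟨v, hv, hGv⟩ : ∃ v ∈ nhds x, ContDiffOn ℝ 2 G v :=
      (hGat x hfx0).contDiffOn (m := 2) (WithTop.coe_le_coe.mpr le_top) (by simp)
    rcases mem_nhds_iff.1 hv with ⟨O, hOv, hOopen, hxO⟩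
    have h2 : ContDiffOn ℝ 1 (deriv G) O :=
      (hGv.mono hOv).deriv_of_isOpen hOopen (by norm_num)
    exact ((h2.differentiableOn (by norm_num)) x hxO).differentiableAt (hOopen.mem_nhds hxO)
  have hXD : HasDerivAt (X t) (u θ₀) θ₀ := (hXt.differentiable (by norm_num) θ₀).hasDerivAt
  have hB : HasDerivAt u (deriv u θ₀) θ₀ := (huC.differentiable (by norm_num) θ₀).hasDerivAt
  -- Eq1 : spatial derivative of the pushforward identity
  have hL : HasDerivAt (fun θ => f t (X t θ)) (deriv (f t) x * u θ₀) θ₀ := by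
    have h1 : HasDerivAt (f t) (deriv (f t) x) (X t θ₀) := by
      rw [hXθ₀]; exact (hft.differentiable (by norm_num) x).hasDerivAt
    exact h1.comp θ₀ hXD
  have hR : HasDerivAt (fun θ => (u θ)⁻¹) (-(deriv u θ₀) / u θ₀ ^ 2) θ₀ := hB.inv hu0.ne'
  have Eq1 : deriv (f t) x * u θ₀ = -(deriv u θ₀) / u θ₀ ^ 2 := by
    have hee : (fun θ => f t (X t θ)) =ᶠ[nhds θ₀] fun θ => (u θ)⁻¹ :=
      Filter.eventuallyEq_of_mem hSnhds hpushS
    rw [← hL.deriv, hee.deriv_eq, hR.deriv]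
  -- Eulerian form of the flux on S
  have hIV : ∀ θ ∈ S, deriv (fun s => X s θ) t
      = 1 / (2 ^ r * (r + 1)) * (r + 1) * (deriv G (X t θ) * u θ) := by
    intro θ hθ
    have hp := hPDE t θ (Set.Ioo_subset_Icc_self hθ.1)
    rw [← hu_def] at hp
    have hee : (fun θ' => |u θ'| ^ (r - 1) * u θ') =ᶠ[nhds θ] fun θ' => G (X t θ') :=
      Filter.eventuallyEq_of_mem (hSopen.mem_nhds hθ) hGX
    have hfXpos : 0 < f t (X t θ) := by
      rw [hpushS θ hθ]; exact inv_pos.mpr hθ.2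
    have hcomp : HasDerivAt (fun θ' => G (X t θ')) (deriv G (X t θ) * u θ) θ := by
      have hg : HasDerivAt G (deriv G (X t θ)) (X t θ) := (hGdiffat _ hfXpos).hasDerivAt
      have hxd : HasDerivAt (X t) (u θ) θ := (hXt.differentiable (by norm_num) θ).hasDerivAt
      exact hg.comp θ hxd
    rw [hp, hee.deriv_eq, hcomp.deriv]
  have Eq2 : deriv (fun s => X s θ₀) t
      = 1 / (2 ^ r * (r + 1)) * (r + 1) * (deriv G x * u θ₀) := by
    have h := hIV θ₀ hθ₀S; rwa [hXθ₀] at h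
  -- mixed partial via Clairaut + flux differentiation
  have hutval : deriv (fun s => deriv (X s) θ₀) t
      = 1 / (2 ^ r * (r + 1)) * (r + 1)
          * (deriv (deriv G) x * u θ₀ * u θ₀ + deriv G x * deriv u θ₀) := by
    have hcl : deriv (fun s => deriv (X s) θ₀) t
        = deriv (fun θ => deriv (fun s => X s θ) t) θ₀ :=
      clairaut_scalar hX t θ₀
    have hee : (fun θ => deriv (fun s => X s θ) t) =ᶠ[nhds θ₀]
        fun θ => 1 / (2 ^ r * (r + 1)) * (r + 1) * (deriv G (X t θ) * u θ) :=
      Filter.eventuallyEq_of_mem hSnhds hIV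
    have hA : HasDerivAt (fun θ => deriv G (X t θ)) (deriv (deriv G) x * u θ₀) θ₀ := by
      have h1 : HasDerivAt (deriv G) (deriv (deriv G) x) (X t θ₀) := by
        rw [hXθ₀]; exact hDG.hasDerivAt
      exact h1.comp θ₀ hXD
    have h2 : HasDerivAt (fun θ => deriv G (X t θ) * u θ)
        (deriv (deriv G) x * u θ₀ * u θ₀ + deriv G (X t θ₀) * deriv u θ₀) θ₀ := hA.mul hB
    rw [hXθ₀] at h2
    have hprod := h2.const_mul (1 / (2 ^ r * (r + 1)) * (r + 1))
    rw [hcl, hee.deriv_eq, hprod.deriv]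
  -- Eq3 : time derivative of the pushforward identity at fixed θ₀
  have hvt : HasDerivAt (fun s => X s θ₀) (deriv (fun s => X s θ₀) t) t := by
    have hd : DifferentiableAt ℝ (fun s => X s θ₀) t :=
      ((hXinf.differentiable (by norm_num)) (t, θ₀)).comp (f := fun s : ℝ => (s, θ₀)) t
        (differentiableAt_id.prodMk (differentiableAt_const θ₀))
    exact hd.hasDerivAt
  have hcurve : HasDerivAt (fun s => ((s : ℝ), X s θ₀)) (1, deriv (fun s => X s θ₀) t) t :=
    (hasDerivAt_id t).prodMk hvt
  have hFf : HasFDerivAt (fun p : ℝ × ℝ => f p.1 p.2)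
      (fderiv ℝ (fun p : ℝ × ℝ => f p.1 p.2) (t, x)) (t, X t θ₀) := by
    rw [hXθ₀]; exact ((hfinf.differentiable (by norm_num)) _).hasFDerivAt
  have hφ : HasDerivAt (fun s => f s (X s θ₀))
      (fderiv ℝ (fun p : ℝ × ℝ => f p.1 p.2) (t, x) (1, deriv (fun s => X s θ₀) t)) t := by
    have h := hFf.comp_hasDerivAt t hcurve
    simpa [Function.comp_def] using h
  have hdecomp : fderiv ℝ (fun p : ℝ × ℝ => f p.1 p.2) (t, x) (1, deriv (fun s => X s θ₀) t)
      = deriv (fun s => f s x) t + deriv (f t) x * deriv (fun s => X s θ₀) t := by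
    have hA1 : fderiv ℝ (fun p : ℝ × ℝ => f p.1 p.2) (t, x) (1, 0) = deriv (fun s => f s x) t :=
      (hasDerivAt_fst' ((hfinf.differentiable (by norm_num)) _)).deriv.symm
    have hA2 : fderiv ℝ (fun p : ℝ × ℝ => f p.1 p.2) (t, x) (0, 1) = deriv (f t) x :=
      (hasDerivAt_snd' ((hfinf.differentiable (by norm_num)) _)).deriv.symm
    have hvec : ((1 : ℝ), deriv (fun s => X s θ₀) t)
        = ((1 : ℝ), (0 : ℝ)) + deriv (fun s => X s θ₀) t • ((0 : ℝ), (1 : ℝ)) := by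
      simp [Prod.ext_iff]
    rw [hvec, map_add, ContinuousLinearMap.map_smul, hA1, hA2, smul_eq_mul]
    ring
  have e3 : (fun s => deriv (X s) θ₀)
      = fun s => fderiv ℝ (fun p : ℝ × ℝ => X p.1 p.2) (s, θ₀) (0, 1) := by
    funext s
    have h := hasDerivAt_snd' (F := fun p : ℝ × ℝ => X p.1 p.2) (t := s) (θ := θ₀)
      ((hXinf.differentiable (by norm_num)) _)
    simpa using h.deriv
  have hUdiff : DifferentiableAt ℝ (fun s => deriv (X s) θ₀) t := by
    rw [e3]
    have hsm : ContDiff ℝ ∞ (fun p : ℝ × ℝ =>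
        fderiv ℝ (fun q : ℝ × ℝ => X q.1 q.2) p (0, 1)) :=
      (hX.fderiv_right (by simp)).clm_apply contDiff_const
    exact ((hsm.differentiable (by norm_num)) (t, θ₀)).comp (f := fun s : ℝ => (s, θ₀)) t
      (differentiableAt_id.prodMk (differentiableAt_const θ₀))
  have hψd : HasDerivAt (fun s => deriv (X s) θ₀) (deriv (fun s => deriv (X s) θ₀) t) t :=
    hUdiff.hasDerivAt
  have hψ : HasDerivAt (fun s => (deriv (X s) θ₀)⁻¹)
      (-(deriv (fun s => deriv (X s) θ₀) t) / u θ₀ ^ 2) t := hψd.inv hu0.ne'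
  have hφψ : (fun s => f s (X s θ₀)) = fun s => (deriv (X s) θ₀)⁻¹ := by
    funext s; rw [hpush s θ₀ (Set.Ioo_subset_Icc_self hθ₀), one_div]
  have Eq3 : deriv (fun s => f s x) t + deriv (f t) x * deriv (fun s => X s θ₀) t
      = -(deriv (fun s => deriv (X s) θ₀) t) / u θ₀ ^ 2 := by
    have huniq := (hφψ ▸ hφ).unique hψ
    rw [← hdecomp, huniq]
  -- final algebra
  have hU0 : u θ₀ ≠ 0 := hu0.ne'
  have h2r : (2 : ℝ) ^ r ≠ 0 := (Real.rpow_pos_of_pos two_pos r).ne'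
  have hr1 : r + 1 ≠ 0 := by positivity
  have hcc : (1 : ℝ) / (2 ^ r * (r + 1)) * (r + 1) = (2 ^ r)⁻¹ := by
    field_simp
  rw [hcc] at Eq2 hutval
  have E1 : deriv (f t) x * u θ₀ ^ 3 = -(deriv u θ₀) := by
    field_simp at Eq1
    linear_combination Eq1
  have E3 : (deriv (fun s => f s x) t + deriv (f t) x * deriv (fun s => X s θ₀) t) * u θ₀ ^ 2
      = -(deriv (fun s => deriv (X s) θ₀) t) := by
    rw [Eq3]
    field_simp
  have T : (deriv (fun s => f s x) t + (2 ^ r)⁻¹ * deriv (deriv G) x) * u θ₀ ^ 2 = 0 := by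
    linear_combination E3 - hutval - (deriv (f t) x * u θ₀ ^ 2) * Eq2
      - ((2 ^ r)⁻¹ * deriv G x) * E1
  have hsum : deriv (fun s => f s x) t + (2 ^ r)⁻¹ * deriv (deriv G) x = 0 :=
    (mul_eq_zero.mp T).resolve_right (pow_ne_zero 2 hU0)
  have hgoal : -(1 / (2 ^ r * (r + 1))) * (r + 1) * deriv (deriv G) x
      = -((2 ^ r)⁻¹ * deriv (deriv G) x) := by
    field_simp
  rw [hgoal]
  linarith
end
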